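/- arXiv:0910.4212 — 5 statements merged into one kernel-verified Lean document; each statement's English description precedes it below -/
import Mathlib

section
/- The number of set partitions of {1,...,n} in which no block is a singleton equals the number of set partitions of {1,...,n} in which no block contains two cyclically adjacent elements (i.e., no block contains both i and i+1 for some 1 ≤ i < n, and no block contains both n and 1). -/
/-- `P` is a set partition of `Fin n` (blocks nonempty, every element in a unique block). -/
def IsPartition (n : ℕ) (P : Finset (Finset (Fin n))) : Prop :=
  (∀ B ∈ P, B.Nonempty) ∧ (∀ x : Fin n, ∃! B, B ∈ P ∧ x ∈ B)

/-- Number of singleton blocks of `P`. -/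
def numSingletons (n : ℕ) (P : Finset (Finset (Fin n))) : ℕ :=
  (P.filter (fun B => B.card = 1)).card

/-- The cyclic successor of `i` in `Fin n`. -/
def cycNext {n : ℕ} (i : Fin n) : Fin n := ⟨(i.val + 1) % n, Nat.mod_lt _ i.pos⟩

/-- Number of cyclic adjacencies of `P`: elements `i` such that `i` and `i+1` (mod `n`)
lie in a common block. -/
def numAdjacencies (n : ℕ) (P : Finset (Finset (Fin n))) : ℕ :=
  (Finset.univ.filter (fun i : Fin n => ∃ B ∈ P, i ∈ B ∧ cycNext i ∈ B)).card

/-- The Bell number: the number of set partitions of an `n`-element set. -/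
noncomputable def bell (n : ℕ) : ℕ :=
  Nat.card {P : Finset (Finset (Fin n)) // IsPartition n P}

open Finset

attribute [local instance] Classical.propDecidable

namespace SFAF

variable {n : ℕ}

lemma block_eq {P : Finset (Finset (Fin n))} (hP : IsPartition n P)
    {B B' : Finset (Fin n)} (hB : B ∈ P) (hB' : B' ∈ P) {x : Fin n}
    (hx : x ∈ B) (hx' : x ∈ B') : B = B' :=
  (hP.2 x).unique ⟨hB, hx⟩ ⟨hB', hx'⟩

lemma exists_t (S : Finset (Fin n)) (hS : S ≠ univ) (i : Fin n) :
    ∃ t : ℕ, (⟨(i.val + t) % n, Nat.mod_lt _ i.pos⟩ : Fin n) ∉ S := by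
  obtain ⟨x, hx⟩ : ∃ x : Fin n, x ∉ S := by
    by_contra h; push_neg at h; exact hS (eq_univ_iff_forall.2 h)
  refine ⟨x.val + n - i.val, ?_⟩
  have hval : (i.val + (x.val + n - i.val)) % n = x.val := by
    have h1 : i.val < n := i.isLt
    have h2 : x.val < n := x.isLt
    have h3 : i.val + (x.val + n - i.val) = x.val + n := by omega
    rw [h3, Nat.add_mod_right, Nat.mod_eq_of_lt h2]
  have : (⟨(i.val + (x.val + n - i.val)) % n, Nat.mod_lt _ i.pos⟩ : Fin n) = x :=
    Fin.ext hval
  rw [this]; exact hx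

noncomputable def hmap (S : Finset (Fin n)) (hS : S ≠ univ) (i : Fin n) : Fin n :=
  ⟨(i.val + Nat.find (exists_t S hS i)) % n, Nat.mod_lt _ i.pos⟩

lemma hmap_notMem (S : Finset (Fin n)) (hS : S ≠ univ) (i : Fin n) :
    hmap S hS i ∉ S := Nat.find_spec (exists_t S hS i)

lemma hmap_of_notMem (S : Finset (Fin n)) (hS : S ≠ univ) {i : Fin n} (h : i ∉ S) :
    hmap S hS i = i := by
  have h0 : Nat.find (exists_t S hS i) = 0 := by
    rw [Nat.find_eq_zero]
    have : (⟨(i.val + 0) % n, Nat.mod_lt _ i.pos⟩ : Fin n) = i :=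
      Fin.ext (by simp [Nat.mod_eq_of_lt i.isLt])
    rw [this]; exact h
  exact Fin.ext (by simp [hmap, h0, Nat.mod_eq_of_lt i.isLt])

lemma find_succ (S : Finset (Fin n)) (hS : S ≠ univ) {i : Fin n} (hi : i ∈ S) :
    Nat.find (exists_t S hS i) = Nat.find (exists_t S hS (cycNext i)) + 1 := by
  have key : ∀ t : ℕ, (⟨(i.val + (t + 1)) % n, Nat.mod_lt _ i.pos⟩ : Fin n)
      = ⟨((cycNext i).val + t) % n, Nat.mod_lt _ (cycNext i).pos⟩ := by
    intro t
    apply Fin.ext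
    show (i.val + (t + 1)) % n = ((i.val + 1) % n + t) % n
    rw [Nat.mod_add_mod]
    ring_nf
  have hpos : 0 < Nat.find (exists_t S hS i) := by
    rw [Nat.find_pos]
    intro hcon
    have : (⟨(i.val + 0) % n, Nat.mod_lt _ i.pos⟩ : Fin n) = i :=
      Fin.ext (by simp [Nat.mod_eq_of_lt i.isLt])
    rw [this] at hcon; exact hcon hi
  apply le_antisymm
  · apply Nat.find_le
    rw [key]
    exact Nat.find_spec (exists_t S hS (cycNext i))
  · have h1 : Nat.find (exists_t S hS (cycNext i)) ≤ Nat.find (exists_t S hS i) - 1 := by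
      apply Nat.find_le
      rw [← key]
      have : Nat.find (exists_t S hS i) - 1 + 1 = Nat.find (exists_t S hS i) := by omega
      rw [this]
      exact Nat.find_spec (exists_t S hS i)
    omega

lemma hmap_cycNext (S : Finset (Fin n)) (hS : S ≠ univ) {i : Fin n} (hi : i ∈ S) :
    hmap S hS (cycNext i) = hmap S hS i := by
  apply Fin.ext
  show ((i.val + 1) % n + Nat.find (exists_t S hS (cycNext i))) % n
      = (i.val + Nat.find (exists_t S hS i)) % n
  rw [Nat.mod_add_mod, find_succ S hS hi]
  congr 1
  ring

lemma reach {S : Finset (Fin n)} (hS : S ≠ univ) {Q : Finset (Finset (Fin n))}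
    (hQ : IsPartition n Q) (hadj : ∀ i ∈ S, ∃ B ∈ Q, i ∈ B ∧ cycNext i ∈ B) :
    ∀ i, ∃ B ∈ Q, i ∈ B ∧ hmap S hS i ∈ B := by
  suffices H : ∀ d, ∀ i, Nat.find (exists_t S hS i) ≤ d → ∃ B ∈ Q, i ∈ B ∧ hmap S hS i ∈ B by
    exact fun i => H _ i le_rfl
  intro d
  induction d with
  | zero =>
    intro i hi
    have h0 : Nat.find (exists_t S hS i) = 0 := Nat.le_zero.1 hi
    have hmi : hmap S hS i = i := Fin.ext (by simp [hmap, h0, Nat.mod_eq_of_lt i.isLt])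
    obtain ⟨B, ⟨hBQ, hxB⟩, -⟩ := hQ.2 i
    exact ⟨B, hBQ, hxB, by rw [hmi]; exact hxB⟩
  | succ d IH =>
    intro i hle
    by_cases hi : i ∈ S
    · have hd := find_succ S hS hi
      obtain ⟨B, hBQ, hiB, hnB⟩ := hadj i hi
      obtain ⟨B', hB'Q, hnB', hhB'⟩ := IH (cycNext i) (by omega)
      have hBB' : B = B' := block_eq hQ hBQ hB'Q hnB hnB'
      subst hBB'
      rw [hmap_cycNext S hS hi] at hhB'
      exact ⟨B, hBQ, hiB, hhB'⟩
    · have hmi : hmap S hS i = i := hmap_of_notMem S hS hi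
      obtain ⟨B, ⟨hBQ, hxB⟩, -⟩ := hQ.2 i
      exact ⟨B, hBQ, hxB, by rw [hmi]; exact hxB⟩


noncomputable def Phi (S : Finset (Fin n)) (hS : S ≠ univ) (P : Finset (Finset (Fin n))) :
    Finset (Finset (Fin n)) :=
  (P.filter (fun B => ∀ x ∈ B, x ∉ S)).image (fun B => univ.filter (fun i => hmap S hS i ∈ B))

noncomputable def Psi (S : Finset (Fin n)) (P : Finset (Finset (Fin n))) :
    Finset (Finset (Fin n)) :=
  (P.image (fun B => B.filter (fun x => x ∉ S))) ∪ (S.image (fun i => ({i} : Finset (Fin n))))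

lemma block_dichot {S : Finset (Fin n)} {P : Finset (Finset (Fin n))} (hP : IsPartition n P)
    (hsing : ∀ i ∈ S, ({i} : Finset (Fin n)) ∈ P) {B : Finset (Fin n)} (hB : B ∈ P) :
    (∃ i ∈ S, B = {i}) ∨ ∀ x ∈ B, x ∉ S := by
  by_cases h : ∃ x ∈ B, x ∈ S
  · obtain ⟨x, hxB, hxS⟩ := h
    exact Or.inl ⟨x, hxS, block_eq hP hB (hsing x hxS) hxB (mem_singleton_self x)⟩
  · push_neg at h; exact Or.inr h

lemma core_of_mem_hmap (S : Finset (Fin n)) (hS : S ≠ univ) {P : Finset (Finset (Fin n))}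
    (hP : IsPartition n P) (hsing : ∀ i ∈ S, ({i} : Finset (Fin n)) ∈ P)
    {B : Finset (Fin n)} (hBP : B ∈ P) {i : Fin n} (hmB : hmap S hS i ∈ B) :
    ∀ x ∈ B, x ∉ S := by
  rcases block_dichot hP hsing hBP with ⟨j, hjS, rfl⟩ | h
  · exfalso
    exact hmap_notMem S hS i (by rw [mem_singleton.1 hmB]; exact hjS)
  · exact h

lemma Phi_isPartition (S : Finset (Fin n)) (hS : S ≠ univ) {P : Finset (Finset (Fin n))}
    (hP : IsPartition n P) (hsing : ∀ i ∈ S, ({i} : Finset (Fin n)) ∈ P) :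
    IsPartition n (Phi S hS P) := by
  constructor
  · intro B' hB'
    rw [Phi, mem_image] at hB'
    obtain ⟨B, hBf, rfl⟩ := hB'
    obtain ⟨hBP, hBcore⟩ := mem_filter.1 hBf
    obtain ⟨x, hx⟩ := hP.1 B hBP
    exact ⟨x, mem_filter.2 ⟨mem_univ x, by rw [hmap_of_notMem S hS (hBcore x hx)]; exact hx⟩⟩
  · intro i
    obtain ⟨B, ⟨hBP, hmB⟩, huniq⟩ := hP.2 (hmap S hS i)
    have hBcore : ∀ x ∈ B, x ∉ S := core_of_mem_hmap S hS hP hsing hBP hmB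
    refine ⟨univ.filter (fun k => hmap S hS k ∈ B),
      ⟨mem_image_of_mem _ (mem_filter.2 ⟨hBP, hBcore⟩), mem_filter.2 ⟨mem_univ i, hmB⟩⟩, ?_⟩
    rintro C ⟨hCmem, hiC⟩
    rw [Phi, mem_image] at hCmem
    obtain ⟨B₂, hB₂f, rfl⟩ := hCmem
    have hmB₂ : hmap S hS i ∈ B₂ := (mem_filter.1 hiC).2
    rw [huniq B₂ ⟨(mem_filter.1 hB₂f).1, hmB₂⟩]

lemma Phi_adj (S : Finset (Fin n)) (hS : S ≠ univ) {P : Finset (Finset (Fin n))}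
    (hP : IsPartition n P) (hsing : ∀ i ∈ S, ({i} : Finset (Fin n)) ∈ P) :
    ∀ i ∈ S, ∃ B ∈ Phi S hS P, i ∈ B ∧ cycNext i ∈ B := by
  intro i hi
  obtain ⟨B, ⟨hBP, hmB⟩, -⟩ := hP.2 (hmap S hS i)
  have hBcore : ∀ x ∈ B, x ∉ S := core_of_mem_hmap S hS hP hsing hBP hmB
  refine ⟨univ.filter (fun k => hmap S hS k ∈ B),
    mem_image_of_mem _ (mem_filter.2 ⟨hBP, hBcore⟩),
    mem_filter.2 ⟨mem_univ _, hmB⟩, mem_filter.2 ⟨mem_univ _, ?_⟩⟩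
  rw [hmap_cycNext S hS hi]; exact hmB

lemma mem_hmap_block (S : Finset (Fin n)) (hS : S ≠ univ) {Q : Finset (Finset (Fin n))}
    (hQ : IsPartition n Q) (hadj : ∀ i ∈ S, ∃ B ∈ Q, i ∈ B ∧ cycNext i ∈ B)
    {B : Finset (Fin n)} (hBQ : B ∈ Q) {x : Fin n} (hx : x ∈ B) : hmap S hS x ∈ B := by
  obtain ⟨B', hB'Q, hxB', hhB'⟩ := reach hS hQ hadj x
  rw [block_eq hQ hBQ hB'Q hx hxB']; exact hhB'

lemma Psi_isPartition (S : Finset (Fin n)) (hS : S ≠ univ) {Q : Finset (Finset (Fin n))}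
    (hQ : IsPartition n Q) (hadj : ∀ i ∈ S, ∃ B ∈ Q, i ∈ B ∧ cycNext i ∈ B) :
    IsPartition n (Psi S Q) := by
  constructor
  · intro B' hB'
    rw [Psi, mem_union] at hB'
    rcases hB' with h | h
    · rw [mem_image] at h; obtain ⟨B, hBQ, rfl⟩ := h
      obtain ⟨x, hx⟩ := hQ.1 B hBQ
      exact ⟨hmap S hS x,
        mem_filter.2 ⟨mem_hmap_block S hS hQ hadj hBQ hx, hmap_notMem S hS x⟩⟩
    · rw [mem_image] at h; obtain ⟨i, hi, rfl⟩ := h; exact ⟨i, mem_singleton_self i⟩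
  · intro x
    by_cases hx : x ∈ S
    · refine ⟨{x}, ⟨mem_union_right _ (mem_image_of_mem _ hx), mem_singleton_self x⟩, ?_⟩
      rintro C ⟨hC, hxC⟩
      rw [Psi, mem_union] at hC
      rcases hC with h | h
      · rw [mem_image] at h; obtain ⟨B, hBQ, rfl⟩ := h
        exact absurd hx (mem_filter.1 hxC).2
      · rw [mem_image] at h; obtain ⟨j, hj, rfl⟩ := h
        rw [← mem_singleton.1 hxC]
    · obtain ⟨B, ⟨hBQ, hxB⟩, huniq⟩ := hQ.2 x
      refine ⟨B.filter (fun y => y ∉ S),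
        ⟨mem_union_left _ (mem_image_of_mem _ hBQ), mem_filter.2 ⟨hxB, hx⟩⟩, ?_⟩
      rintro C ⟨hC, hxC⟩
      rw [Psi, mem_union] at hC
      rcases hC with h | h
      · rw [mem_image] at h; obtain ⟨B', hB'Q, rfl⟩ := h
        rw [huniq B' ⟨hB'Q, (mem_filter.1 hxC).1⟩]
      · rw [mem_image] at h; obtain ⟨j, hjS, rfl⟩ := h
        exfalso; apply hx; rw [mem_singleton.1 hxC]; exact hjS

lemma Psi_sing (S : Finset (Fin n)) (Q : Finset (Finset (Fin n))) :
    ∀ i ∈ S, ({i} : Finset (Fin n)) ∈ Psi S Q :=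
  fun i hi => mem_union_right _ (mem_image_of_mem _ hi)

lemma Psi_Phi (S : Finset (Fin n)) (hS : S ≠ univ) {P : Finset (Finset (Fin n))}
    (hP : IsPartition n P) (hsing : ∀ i ∈ S, ({i} : Finset (Fin n)) ∈ P) :
    Psi S (Phi S hS P) = P := by
  rw [Psi, Phi, image_image]
  have h1 : (P.filter (fun B => ∀ x ∈ B, x ∉ S)).image
      ((fun B => B.filter (fun x => x ∉ S)) ∘ (fun B => univ.filter (fun i => hmap S hS i ∈ B)))
      = P.filter (fun B => ∀ x ∈ B, x ∉ S) := by
    have := Finset.image_congr (s := P.filter (fun B => ∀ x ∈ B, x ∉ S))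
      (g := id)
      (f := (fun B => B.filter (fun x => x ∉ S)) ∘ (fun B => univ.filter (fun i => hmap S hS i ∈ B)))
      ?_
    · rw [this, image_id]
    · intro B hB
      have hBf := Finset.mem_coe.1 hB
      obtain ⟨hBP, hBcore⟩ := mem_filter.1 hBf
      show (univ.filter (fun i => hmap S hS i ∈ B)).filter (fun x => x ∉ S) = B
      ext x
      simp only [mem_filter, mem_univ, true_and, id]
      constructor
      · rintro ⟨h1, h2⟩
        rwa [hmap_of_notMem S hS h2] at h1
      · intro hxB
        exact ⟨by rw [hmap_of_notMem S hS (hBcore x hxB)]; exact hxB, hBcore x hxB⟩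
  rw [h1]
  apply Subset.antisymm
  · apply union_subset (filter_subset _ _)
    exact image_subset_iff.2 (fun i hi => hsing i hi)
  · intro B hB
    rcases block_dichot hP hsing hB with ⟨i, hiS, rfl⟩ | h
    · exact mem_union_right _ (mem_image_of_mem _ hiS)
    · exact mem_union_left _ (mem_filter.2 ⟨hB, h⟩)

lemma Phi_Psi (S : Finset (Fin n)) (hS : S ≠ univ) {Q : Finset (Finset (Fin n))}
    (hQ : IsPartition n Q) (hadj : ∀ i ∈ S, ∃ B ∈ Q, i ∈ B ∧ cycNext i ∈ B) :
    Phi S hS (Psi S Q) = Q := by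
  rw [Phi]
  have hfilter : (Psi S Q).filter (fun B => ∀ x ∈ B, x ∉ S)
      = Q.image (fun B => B.filter (fun x => x ∉ S)) := by
    rw [Psi, filter_union]
    have h1 : (Q.image (fun B => B.filter (fun x => x ∉ S))).filter (fun B => ∀ x ∈ B, x ∉ S)
        = Q.image (fun B => B.filter (fun x => x ∉ S)) := by
      apply filter_true_of_mem
      intro B hB
      rw [mem_image] at hB
      obtain ⟨B', hB', rfl⟩ := hB
      exact fun x hx => (mem_filter.1 hx).2
    have h2 : ((S.image (fun i => ({i} : Finset (Fin n))))).filter (fun B => ∀ x ∈ B, x ∉ S)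
        = ∅ := by
      apply filter_false_of_mem
      intro B hB
      rw [mem_image] at hB
      obtain ⟨i, hi, rfl⟩ := hB
      exact fun h => h i (mem_singleton_self i) hi
    rw [h1, h2, union_empty]
  rw [hfilter, image_image]
  have := Finset.image_congr (s := Q) (g := id)
    (f := (fun B => univ.filter (fun i => hmap S hS i ∈ B)) ∘ (fun B => B.filter (fun x => x ∉ S)))
    ?_
  · rw [this, image_id]
  · intro B hB
    have hBQ := Finset.mem_coe.1 hB
    show univ.filter (fun i => hmap S hS i ∈ B.filter (fun x => x ∉ S)) = B
    ext i
    simp only [mem_filter, mem_univ, true_and, id]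
    constructor
    · rintro ⟨hmB, -⟩
      obtain ⟨B', hB'Q, hiB', hhB'⟩ := reach hS hQ hadj i
      rwa [block_eq hQ hBQ hB'Q hmB hhB']
    · intro hiB
      exact ⟨mem_hmap_block S hS hQ hadj hBQ hiB, hmap_notMem S hS i⟩


lemma keyS (hn : 0 < n) (S : Finset (Fin n)) :
    (univ.filter (fun P : Finset (Finset (Fin n)) =>
        IsPartition n P ∧ ∀ i ∈ S, ({i} : Finset (Fin n)) ∈ P)).card
      = (univ.filter (fun Q : Finset (Finset (Fin n)) =>
        IsPartition n Q ∧ ∀ i ∈ S, ∃ B ∈ Q, i ∈ B ∧ cycNext i ∈ B)).card := by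
  by_cases hS : S = univ
  · subst hS
    have hleft : (univ.filter (fun P : Finset (Finset (Fin n)) =>
        IsPartition n P ∧ ∀ i ∈ univ, ({i} : Finset (Fin n)) ∈ P))
        = {(univ : Finset (Fin n)).image (fun i => ({i} : Finset (Fin n)))} := by
      apply eq_singleton_iff_unique_mem.2
      constructor
      · rw [mem_filter]
        refine ⟨mem_univ _, ⟨?_, ?_⟩, fun i _ => mem_image_of_mem _ (mem_univ i)⟩
        · intro B hB
          rw [mem_image] at hB
          obtain ⟨i, -, rfl⟩ := hB
          exact ⟨i, mem_singleton_self i⟩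
        · intro x
          refine ⟨{x}, ⟨mem_image_of_mem _ (mem_univ x), mem_singleton_self x⟩, ?_⟩
          rintro C ⟨hC, hxC⟩
          rw [mem_image] at hC
          obtain ⟨i, -, rfl⟩ := hC
          rw [← mem_singleton.1 hxC]
      · intro P hP
        rw [mem_filter] at hP
        obtain ⟨-, hpart, hsing⟩ := hP
        ext B
        constructor
        · intro hB
          obtain ⟨x, hx⟩ := hpart.1 B hB
          rw [block_eq hpart hB (hsing x (mem_univ x)) hx (mem_singleton_self x)]
          exact mem_image_of_mem _ (mem_univ x)
        · intro hB
          rw [mem_image] at hB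
          obtain ⟨i, -, rfl⟩ := hB
          exact hsing i (mem_univ i)
    have hright : (univ.filter (fun Q : Finset (Finset (Fin n)) =>
        IsPartition n Q ∧ ∀ i ∈ univ, ∃ B ∈ Q, i ∈ B ∧ cycNext i ∈ B))
        = {({(univ : Finset (Fin n))} : Finset (Finset (Fin n)))} := by
      apply eq_singleton_iff_unique_mem.2
      constructor
      · rw [mem_filter]
        refine ⟨mem_univ _, ⟨?_, ?_⟩, fun i _ => ⟨univ, mem_singleton_self _, mem_univ _, mem_univ _⟩⟩
        · intro B hB
          rw [mem_singleton.1 hB]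
          exact ⟨⟨0, hn⟩, mem_univ _⟩
        · intro x
          exact ⟨univ, ⟨mem_singleton_self _, mem_univ x⟩, fun C hC => mem_singleton.1 hC.1⟩
      · intro Q hQ
        rw [mem_filter] at hQ
        obtain ⟨-, hpart, hadj⟩ := hQ
        have connect : ∀ (k : ℕ) (y : Fin n), ∃ B ∈ Q, y ∈ B ∧
            (⟨(y.val + k) % n, Nat.mod_lt _ y.pos⟩ : Fin n) ∈ B := by
          intro k
          induction k with
          | zero =>
            intro y
            obtain ⟨B, ⟨hBQ, hyB⟩, -⟩ := hpart.2 y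
            have : (⟨(y.val + 0) % n, Nat.mod_lt _ y.pos⟩ : Fin n) = y :=
              Fin.ext (by simp [Nat.mod_eq_of_lt y.isLt])
            exact ⟨B, hBQ, hyB, by rw [this]; exact hyB⟩
          | succ k IH =>
            intro y
            obtain ⟨B, hBQ, hyB, hzB⟩ := IH y
            set z : Fin n := ⟨(y.val + k) % n, Nat.mod_lt _ y.pos⟩ with hz
            obtain ⟨B', hB'Q, hzB', hnB'⟩ := hadj z (mem_univ z)
            have hBB' : B = B' := block_eq hpart hBQ hB'Q hzB hzB'
            subst hBB'
            have : cycNext z = (⟨(y.val + (k + 1)) % n, Nat.mod_lt _ y.pos⟩ : Fin n) := by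
              apply Fin.ext
              show ((y.val + k) % n + 1) % n = (y.val + (k + 1)) % n
              rw [Nat.mod_add_mod]
              try rw [Nat.add_assoc]
            exact ⟨B, hBQ, hyB, by rw [← this]; exact hnB'⟩
        have hall : ∀ B ∈ Q, B = univ := by
          intro B hB
          obtain ⟨x, hx⟩ := hpart.1 B hB
          apply eq_univ_of_forall
          intro y
          obtain ⟨B', hB'Q, hxB', hyB'⟩ := connect (y.val + n - x.val) x
          have hval : (x.val + (y.val + n - x.val)) % n = y.val := by
            have h1 : x.val < n := x.isLt
            have h2 : y.val < n := y.isLt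
            have h3 : x.val + (y.val + n - x.val) = y.val + n := by omega
            rw [h3, Nat.add_mod_right, Nat.mod_eq_of_lt h2]
          have : (⟨(x.val + (y.val + n - x.val)) % n, Nat.mod_lt _ x.pos⟩ : Fin n) = y :=
            Fin.ext hval
          rw [this] at hyB'
          rwa [block_eq hpart hB hB'Q hx hxB']
        ext B
        rw [mem_singleton]
        constructor
        · intro hB
          rw [hall B hB]
        · rintro rfl
          obtain ⟨B0, ⟨hB0Q, -⟩, -⟩ := hpart.2 ⟨0, hn⟩
          rwa [← hall B0 hB0Q]
    rw [hleft, hright, card_singleton, card_singleton]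
  · apply Finset.card_bij' (fun P _ => Phi S hS P) (fun Q _ => Psi S Q)
    · intro P hP
      obtain ⟨-, hpart, hsing⟩ := mem_filter.1 hP
      exact mem_filter.2 ⟨mem_univ _, Phi_isPartition S hS hpart hsing, Phi_adj S hS hpart hsing⟩
    · intro Q hQ
      obtain ⟨-, hpart, hadj⟩ := mem_filter.1 hQ
      exact mem_filter.2 ⟨mem_univ _, Psi_isPartition S hS hpart hadj, Psi_sing S Q⟩
    · intro P hP
      obtain ⟨-, hpart, hsing⟩ := mem_filter.1 hP
      exact Psi_Phi S hS hpart hsing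
    · intro Q hQ
      obtain ⟨-, hpart, hadj⟩ := mem_filter.1 hQ
      exact Phi_Psi S hS hpart hadj

lemma IE (Pr : Finset (Finset (Fin n)) → Prop)
    (bad : Finset (Finset (Fin n)) → Finset (Fin n)) :
    ((univ.filter (fun P => Pr P ∧ bad P = ∅)).card : ℤ)
      = ∑ S ∈ (univ : Finset (Fin n)).powerset,
          (-1 : ℤ) ^ S.card * ((univ.filter (fun P => Pr P ∧ S ⊆ bad P)).card : ℤ) := by
  have h2 : ∀ S : Finset (Fin n),
      ((univ.filter (fun P => Pr P ∧ S ⊆ bad P)).card : ℤ)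
        = ∑ P ∈ univ.filter Pr, (if S ⊆ bad P then (1 : ℤ) else 0) := by
    intro S
    rw [← filter_filter, ← Finset.sum_boole]
  have h3 : ((univ.filter (fun P => Pr P ∧ bad P = ∅)).card : ℤ)
        = ∑ P ∈ univ.filter Pr, (if bad P = ∅ then (1 : ℤ) else 0) := by
    rw [← filter_filter, ← Finset.sum_boole]
  have h4 : ∀ S ∈ (univ : Finset (Fin n)).powerset,
      (-1 : ℤ) ^ S.card * ((univ.filter (fun P => Pr P ∧ S ⊆ bad P)).card : ℤ)
        = ∑ P ∈ univ.filter Pr, (-1 : ℤ) ^ S.card * (if S ⊆ bad P then (1 : ℤ) else 0) := by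
    intro S _
    rw [h2 S, Finset.mul_sum]
  rw [h3, Finset.sum_congr rfl h4]
  have hswap :
      (∑ S ∈ (univ : Finset (Fin n)).powerset, ∑ P ∈ univ.filter Pr,
          (-1 : ℤ) ^ S.card * if S ⊆ bad P then (1 : ℤ) else 0)
        = ∑ P ∈ univ.filter Pr, ∑ S ∈ (univ : Finset (Fin n)).powerset,
            (-1 : ℤ) ^ S.card * if S ⊆ bad P then (1 : ℤ) else 0 :=
    Finset.sum_comm
  rw [hswap]
  apply Finset.sum_congr rfl
  intro P hP
  symm
  calc ∑ S ∈ (univ : Finset (Fin n)).powerset,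
        (-1 : ℤ) ^ S.card * (if S ⊆ bad P then (1 : ℤ) else 0)
      = ∑ S ∈ ((univ : Finset (Fin n)).powerset).filter (fun S => S ⊆ bad P),
          (-1 : ℤ) ^ S.card := by
        rw [sum_filter]
        apply Finset.sum_congr rfl
        intro S _
        rw [mul_ite, mul_one, mul_zero]
    _ = ∑ S ∈ (bad P).powerset, (-1 : ℤ) ^ S.card := by
        congr 1
        ext T
        simp [mem_powerset, subset_univ]
    _ = if bad P = ∅ then 1 else 0 := Finset.sum_powerset_neg_one_pow_card


lemma main_pos (hn : 0 < n) :
    Nat.card {P : Finset (Finset (Fin n)) // IsPartition n P ∧ numSingletons n P = 0}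
      = Nat.card {P : Finset (Finset (Fin n)) // IsPartition n P ∧ numAdjacencies n P = 0} := by
  have e1 : ∀ P : Finset (Finset (Fin n)),
      numSingletons n P = 0 ↔ (univ.filter (fun i : Fin n => ({i} : Finset (Fin n)) ∈ P)) = ∅ := by
    intro P
    rw [numSingletons, card_eq_zero]
    simp only [filter_eq_empty_iff, mem_univ, true_implies]
    constructor
    · intro h i hiP
      exact h hiP (card_singleton i)
    · intro h B hB hcard
      obtain ⟨x, rfl⟩ := Finset.card_eq_one.1 hcard
      exact h hB
  have e2 : ∀ P : Finset (Finset (Fin n)),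
      numAdjacencies n P = 0
        ↔ (univ.filter (fun i : Fin n => ∃ B ∈ P, i ∈ B ∧ cycNext i ∈ B)) = ∅ := by
    intro P
    rw [numAdjacencies, card_eq_zero]
    try simp only [filter_eq_empty_iff]
  have hc1 : Nat.card {P : Finset (Finset (Fin n)) // IsPartition n P ∧ numSingletons n P = 0}
      = (univ.filter (fun P : Finset (Finset (Fin n)) =>
          IsPartition n P ∧ numSingletons n P = 0)).card := by
    rw [Nat.card_eq_fintype_card, Fintype.card_subtype]
  have hc2 : Nat.card {P : Finset (Finset (Fin n)) // IsPartition n P ∧ numAdjacencies n P = 0}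
      = (univ.filter (fun P : Finset (Finset (Fin n)) =>
          IsPartition n P ∧ numAdjacencies n P = 0)).card := by
    rw [Nat.card_eq_fintype_card, Fintype.card_subtype]
  rw [hc1, hc2]
  have hf1 : univ.filter (fun P : Finset (Finset (Fin n)) =>
        IsPartition n P ∧ numSingletons n P = 0)
      = univ.filter (fun P : Finset (Finset (Fin n)) => IsPartition n P ∧
          (univ.filter (fun i : Fin n => ({i} : Finset (Fin n)) ∈ P)) = ∅) := by
    apply filter_congr
    intro P _
    exact and_congr_right fun _ => e1 P
  have hf2 : univ.filter (fun P : Finset (Finset (Fin n)) =>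
        IsPartition n P ∧ numAdjacencies n P = 0)
      = univ.filter (fun P : Finset (Finset (Fin n)) => IsPartition n P ∧
          (univ.filter (fun i : Fin n => ∃ B ∈ P, i ∈ B ∧ cycNext i ∈ B)) = ∅) := by
    apply filter_congr
    intro P _
    exact and_congr_right fun _ => e2 P
  rw [hf1, hf2]
  have hsum : (∑ S ∈ (univ : Finset (Fin n)).powerset, (-1 : ℤ) ^ S.card *
        ((univ.filter (fun P : Finset (Finset (Fin n)) => IsPartition n P ∧
          S ⊆ univ.filter (fun i : Fin n => ({i} : Finset (Fin n)) ∈ P))).card : ℤ))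
      = ∑ S ∈ (univ : Finset (Fin n)).powerset, (-1 : ℤ) ^ S.card *
        ((univ.filter (fun P : Finset (Finset (Fin n)) => IsPartition n P ∧
          S ⊆ univ.filter (fun i : Fin n => ∃ B ∈ P, i ∈ B ∧ cycNext i ∈ B))).card : ℤ) := by
    apply Finset.sum_congr rfl
    intro S _
    congr 1
    have hV : univ.filter (fun P : Finset (Finset (Fin n)) => IsPartition n P ∧
          S ⊆ univ.filter (fun i : Fin n => ({i} : Finset (Fin n)) ∈ P))
        = univ.filter (fun P : Finset (Finset (Fin n)) => IsPartition n P ∧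
          ∀ i ∈ S, ({i} : Finset (Fin n)) ∈ P) := by
      apply filter_congr
      intro P _
      apply and_congr_right
      intro _
      constructor
      · intro hsub i hi
        exact (mem_filter.1 (hsub hi)).2
      · intro h i hi
        exact mem_filter.2 ⟨mem_univ i, h i hi⟩
    have hA : univ.filter (fun P : Finset (Finset (Fin n)) => IsPartition n P ∧
          S ⊆ univ.filter (fun i : Fin n => ∃ B ∈ P, i ∈ B ∧ cycNext i ∈ B))
        = univ.filter (fun P : Finset (Finset (Fin n)) => IsPartition n P ∧
          ∀ i ∈ S, ∃ B ∈ P, i ∈ B ∧ cycNext i ∈ B) := by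
      apply filter_congr
      intro P _
      apply and_congr_right
      intro _
      constructor
      · intro hsub i hi
        exact (mem_filter.1 (hsub hi)).2
      · intro h i hi
        exact mem_filter.2 ⟨mem_univ i, h i hi⟩
    rw [hV, hA]
    exact_mod_cast keyS hn S
  have hz := ((IE (fun P => IsPartition n P)
      (fun P => univ.filter (fun i : Fin n => ({i} : Finset (Fin n)) ∈ P))).trans hsum).trans
    (IE (fun P => IsPartition n P)
      (fun P => univ.filter (fun i : Fin n => ∃ B ∈ P, i ∈ B ∧ cycNext i ∈ B))).symm
  exact_mod_cast hz

end SFAF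

theorem singletonFree_eq_adjacencyFree (n : ℕ) :
    Nat.card {P : Finset (Finset (Fin n)) // IsPartition n P ∧ numSingletons n P = 0}
      = Nat.card {P : Finset (Finset (Fin n)) // IsPartition n P ∧ numAdjacencies n P = 0} := by
  rcases Nat.eq_zero_or_pos n with rfl | hn
  · apply Nat.card_congr
    apply Equiv.subtypeEquivRight
    intro P
    have hz : ∀ Q : Finset (Finset (Fin 0)), IsPartition 0 Q → Q = ∅ := by
      intro Q hQ
      rw [Finset.eq_empty_iff_forall_notMem]
      intro B hB
      obtain ⟨x, -⟩ := hQ.1 B hB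
      exact x.elim0
    constructor
    · rintro ⟨h1, -⟩
      refine ⟨h1, ?_⟩
      rw [numAdjacencies]
      simp
    · rintro ⟨h1, -⟩
      refine ⟨h1, ?_⟩
      rw [numSingletons, hz P h1]
      simp
  · exact SFAF.main_pos hn
end

section
/- Let s_n denote the number of set partitions of [n] with no singleton block, and let B_n denote the Bell number (the number of set partitions of [n]). Then s_n + s_{n+1} = B_n for all n ≥ 1. -/
open Finset

section Aux

variable {m : ℕ}

/-- the retraction `Fin (m+2) → Fin (m+1)` -/
def retr (m : ℕ) : Fin (m + 2) → Fin (m + 1) :=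
  fun x => if h : x.val < m + 1 then ⟨x.val, h⟩ else ⟨0, Nat.succ_pos m⟩

lemma retr_castSucc (y : Fin (m + 1)) : retr m y.castSucc = y := by
  simp [retr, y.isLt]

lemma castSucc_retr {x : Fin (m + 2)} (hx : x ≠ Fin.last (m + 1)) :
    (retr m x).castSucc = x := by
  have h : x.val < m + 1 := by
    rcases lt_or_eq_of_le (Nat.lt_succ_iff.mp x.isLt) with h | h
    · exact h
    · exact absurd (Fin.ext h) hx
  simp [retr, h, Fin.ext_iff]

lemma castSucc_ne_last (y : Fin (m + 1)) : y.castSucc ≠ Fin.last (m + 1) :=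
  (Fin.castSucc_lt_last y).ne

end Aux

section Maps

variable {m : ℕ}

/-- Elements lying in singleton blocks of `P`. -/
def singElems (m : ℕ) (P : Finset (Finset (Fin (m + 1)))) : Finset (Fin (m + 1)) :=
  (P.filter fun B => B.card = 1).biUnion id

/-- Forward map: merge singleton elements with the new last element. -/
def Fmap (m : ℕ) (P : Finset (Finset (Fin (m + 1)))) : Finset (Finset (Fin (m + 2))) :=
  ((P.filter fun B => B.card ≠ 1).image (Finset.image Fin.castSucc)) ∪
    {insert (Fin.last (m + 1)) ((singElems m P).image Fin.castSucc)}

/-- Elements of the block containing the last element. -/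
def lastBlockElems (m : ℕ) (Q : Finset (Finset (Fin (m + 2)))) : Finset (Fin (m + 2)) :=
  (Q.filter fun B => Fin.last (m + 1) ∈ B).biUnion id

/-- Inverse map. -/
def Gmap (m : ℕ) (Q : Finset (Finset (Fin (m + 2)))) : Finset (Finset (Fin (m + 1))) :=
  ((Q.filter fun B => Fin.last (m + 1) ∉ B).image (Finset.image (retr m))) ∪
    ((lastBlockElems m Q).erase (Fin.last (m + 1))).image (fun x => {retr m x})

lemma mem_singElems {P : Finset (Finset (Fin (m + 1)))} {x : Fin (m + 1)} :
    x ∈ singElems m P ↔ ({x} : Finset (Fin (m + 1))) ∈ P := by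
  simp only [singElems, mem_biUnion, mem_filter, id]
  constructor
  · rintro ⟨B, ⟨hB, hcard⟩, hx⟩
    obtain ⟨a, ha⟩ := Finset.card_eq_one.mp hcard
    subst ha
    simp only [mem_singleton] at hx
    subst hx; exact hB
  · intro h
    exact ⟨{x}, ⟨h, by simp⟩, by simp⟩

lemma mem_Fmap {P : Finset (Finset (Fin (m + 1)))} {B : Finset (Fin (m + 2))} :
    B ∈ Fmap m P ↔ (∃ C ∈ P, C.card ≠ 1 ∧ B = C.image Fin.castSucc) ∨
      B = insert (Fin.last (m + 1)) ((singElems m P).image Fin.castSucc) := by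
  simp only [Fmap, mem_union, mem_image, mem_filter, mem_singleton]
  constructor
  · rintro (⟨C, ⟨hC, h1⟩, rfl⟩ | h)
    · exact Or.inl ⟨C, hC, h1, rfl⟩
    · exact Or.inr h
  · rintro (⟨C, hC, h1, rfl⟩ | h)
    · exact Or.inl ⟨C, ⟨hC, h1⟩, rfl⟩
    · exact Or.inr h

lemma mem_Gmap {Q : Finset (Finset (Fin (m + 2)))} {B : Finset (Fin (m + 1))} :
    B ∈ Gmap m Q ↔ (∃ C ∈ Q, Fin.last (m + 1) ∉ C ∧ B = C.image (retr m)) ∨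
      (∃ x ∈ lastBlockElems m Q, x ≠ Fin.last (m + 1) ∧ B = {retr m x}) := by
  simp only [Gmap, mem_union, mem_image, mem_filter, mem_erase]
  constructor
  · rintro (⟨C, ⟨hC, h1⟩, rfl⟩ | ⟨x, ⟨hx1, hx2⟩, rfl⟩)
    · exact Or.inl ⟨C, hC, h1, rfl⟩
    · exact Or.inr ⟨x, hx2, hx1, rfl⟩
  · rintro (⟨C, hC, h1, rfl⟩ | ⟨x, hx1, hx2, rfl⟩)
    · exact Or.inl ⟨C, ⟨hC, h1⟩, rfl⟩
    · exact Or.inr ⟨x, ⟨hx2, hx1⟩, rfl⟩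

/-- blocks are pairwise disjoint -/
lemma block_eq {n : ℕ} {P : Finset (Finset (Fin n))} (hP : IsPartition n P)
    {B C : Finset (Fin n)} {x : Fin n} (hB : B ∈ P) (hC : C ∈ P) (hxB : x ∈ B) (hxC : x ∈ C) :
    B = C := by
  obtain ⟨D, _, hD⟩ := hP.2 x
  rw [hD B ⟨hB, hxB⟩, hD C ⟨hC, hxC⟩]

lemma singletons_nonempty_iff {P : Finset (Finset (Fin (m + 1)))} :
    numSingletons (m + 1) P ≠ 0 ↔ (singElems m P).Nonempty := by
  rw [numSingletons, Ne, Finset.card_eq_zero, ← Ne, ← Finset.nonempty_iff_ne_empty]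
  constructor
  · rintro ⟨B, hB⟩
    rw [mem_filter] at hB
    obtain ⟨a, ha⟩ := Finset.card_eq_one.mp hB.2
    exact ⟨a, mem_singElems.mpr (ha ▸ hB.1)⟩
  · rintro ⟨a, ha⟩
    exact ⟨{a}, mem_filter.mpr ⟨mem_singElems.mp ha, by simp⟩⟩

lemma no_singletons_iff {n : ℕ} {Q : Finset (Finset (Fin n))} :
    numSingletons n Q = 0 ↔ ∀ B ∈ Q, B.card ≠ 1 := by
  rw [numSingletons, Finset.card_eq_zero, Finset.filter_eq_empty_iff]

end Maps
section Forward

variable {m : ℕ} {P : Finset (Finset (Fin (m + 1)))}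

lemma Fmap_isPartition (hP : IsPartition (m + 1) P) : IsPartition (m + 2) (Fmap m P) := by
  constructor
  · intro B hB
    rcases mem_Fmap.mp hB with ⟨C, hC, _, rfl⟩ | rfl
    · exact (hP.1 C hC).image _
    · exact insert_nonempty _ _
  · intro x
    by_cases hx : x = Fin.last (m + 1)
    · refine ⟨insert (Fin.last (m + 1)) ((singElems m P).image Fin.castSucc),
        ⟨mem_Fmap.mpr (Or.inr rfl), hx ▸ mem_insert_self _ _⟩, ?_⟩
      rintro B ⟨hB, hxB⟩
      rcases mem_Fmap.mp hB with ⟨C, _, _, rfl⟩ | rfl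
      · rw [hx] at hxB
        obtain ⟨y, _, hy⟩ := mem_image.mp hxB
        exact absurd hy (castSucc_ne_last y)
      · rfl
    · set y := retr m x with hy
      have hxy : y.castSucc = x := castSucc_retr hx
      obtain ⟨C, ⟨hC, hyC⟩, hCu⟩ := hP.2 y
      by_cases h1 : C.card = 1
      · -- y is in a singleton block
        have hCy : C = {y} := by
          obtain ⟨a, rfl⟩ := Finset.card_eq_one.mp h1
          rw [mem_singleton] at hyC; rw [hyC]
        have hysing : y ∈ singElems m P := mem_singElems.mpr (hCy ▸ hC)
        refine ⟨insert (Fin.last (m + 1)) ((singElems m P).image Fin.castSucc),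
          ⟨mem_Fmap.mpr (Or.inr rfl), mem_insert_of_mem (mem_image.mpr ⟨y, hysing, hxy⟩)⟩, ?_⟩
        rintro B ⟨hB, hxB⟩
        rcases mem_Fmap.mp hB with ⟨D, hD, hD1, rfl⟩ | rfl
        · obtain ⟨z, hzD, hz⟩ := mem_image.mp hxB
          have hzy : z = y := by rw [← hxy, Fin.castSucc_inj] at hz; exact hz
          subst hzy
          exact absurd (h1 ▸ (hCu D ⟨hD, hzD⟩ ▸ hD1)) (by simp)
        · rfl
      · refine ⟨C.image Fin.castSucc,
          ⟨mem_Fmap.mpr (Or.inl ⟨C, hC, h1, rfl⟩), mem_image.mpr ⟨y, hyC, hxy⟩⟩, ?_⟩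
        rintro B ⟨hB, hxB⟩
        rcases mem_Fmap.mp hB with ⟨D, hD, hD1, rfl⟩ | rfl
        · obtain ⟨z, hzD, hz⟩ := mem_image.mp hxB
          have hzy : z = y := by rw [← hxy, Fin.castSucc_inj] at hz; exact hz
          subst hzy
          rw [hCu D ⟨hD, hzD⟩]
        · rcases mem_insert.mp hxB with h | h
          · exact absurd h hx
          · obtain ⟨z, hzS, hz⟩ := mem_image.mp h
            have hzy : z = y := by rw [← hxy, Fin.castSucc_inj] at hz; exact hz
            subst hzy
            have : ({y} : Finset (Fin (m + 1))) = C :=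
              hCu {y} ⟨mem_singElems.mp hzS, mem_singleton_self y⟩
            exact absurd (this ▸ card_singleton y) h1

lemma Fmap_no_singletons (hs : numSingletons (m + 1) P ≠ 0) :
    numSingletons (m + 2) (Fmap m P) = 0 := by
  rw [no_singletons_iff]
  intro B hB
  rcases mem_Fmap.mp hB with ⟨C, _, hC1, rfl⟩ | rfl
  · rwa [Finset.card_image_of_injective _ (Fin.castSucc_injective _)]
  · have hlast : Fin.last (m + 1) ∉ (singElems m P).image Fin.castSucc := by
      simp only [mem_image, not_exists]
      rintro y ⟨_, hy⟩
      exact castSucc_ne_last y hy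
    rw [Finset.card_insert_of_notMem hlast,
      Finset.card_image_of_injective _ (Fin.castSucc_injective _)]
    have := Finset.card_pos.mpr (singletons_nonempty_iff.mp hs)
    omega

lemma lastBlockElems_Fmap (hP : IsPartition (m + 1) P) :
    lastBlockElems m (Fmap m P) =
      insert (Fin.last (m + 1)) ((singElems m P).image Fin.castSucc) := by
  ext x
  simp only [lastBlockElems, mem_biUnion, mem_filter, id]
  constructor
  · rintro ⟨B, ⟨hB, hlB⟩, hxB⟩
    rcases mem_Fmap.mp hB with ⟨C, _, _, rfl⟩ | rfl
    · obtain ⟨y, _, hy⟩ := mem_image.mp hlB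
      exact absurd hy (castSucc_ne_last y)
    · exact hxB
  · intro hx
    exact ⟨_, ⟨mem_Fmap.mpr (Or.inr rfl), mem_insert_self _ _⟩, hx⟩

lemma Gmap_Fmap (_hP : IsPartition (m + 1) P) : Gmap m (Fmap m P) = P := by
  ext B
  rw [mem_Gmap, lastBlockElems_Fmap _hP]
  constructor
  · rintro (⟨C, hC, hlC, rfl⟩ | ⟨x, hx, hxl, rfl⟩)
    · rcases mem_Fmap.mp hC with ⟨D, hD, _, rfl⟩ | rfl
      · rwa [Finset.image_image, show retr m ∘ Fin.castSucc = id from funext retr_castSucc,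
          Finset.image_id]
      · exact absurd (mem_insert_self _ _) hlC
    · rcases mem_insert.mp hx with h | h
      · exact absurd h hxl
      · obtain ⟨t, ht, rfl⟩ := mem_image.mp h
        rw [retr_castSucc]
        exact mem_singElems.mp ht
  · intro hB
    by_cases h1 : B.card = 1
    · obtain ⟨a, rfl⟩ := Finset.card_eq_one.mp h1
      refine Or.inr ⟨a.castSucc, mem_insert_of_mem (mem_image.mpr ⟨a, mem_singElems.mpr hB, rfl⟩),
        castSucc_ne_last a, by rw [retr_castSucc]⟩
    · refine Or.inl ⟨B.image Fin.castSucc, mem_Fmap.mpr (Or.inl ⟨B, hB, h1, rfl⟩), ?_, ?_⟩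
      · simp only [mem_image, not_exists]
        rintro y ⟨_, hy⟩
        exact castSucc_ne_last y hy
      · rw [Finset.image_image, show retr m ∘ Fin.castSucc = id from funext retr_castSucc,
          Finset.image_id]

end Forward
section Backward

variable {m : ℕ} {Q : Finset (Finset (Fin (m + 2)))}

lemma mem_lastBlockElems {x : Fin (m + 2)} :
    x ∈ lastBlockElems m Q ↔ ∃ B ∈ Q, Fin.last (m + 1) ∈ B ∧ x ∈ B := by
  simp only [lastBlockElems, mem_biUnion, mem_filter, id]
  tauto

lemma image_retr_eq {C : Finset (Fin (m + 2))} (hlC : Fin.last (m + 1) ∉ C) :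
    (C.image (retr m)).image Fin.castSucc = C := by
  rw [Finset.image_image]
  rw [Finset.image_congr (g := id) ?_, Finset.image_id]
  intro x hx
  exact castSucc_retr (fun h => hlC (h ▸ hx))

lemma card_image_retr {C : Finset (Fin (m + 2))} (hlC : Fin.last (m + 1) ∉ C) :
    (C.image (retr m)).card = C.card := by
  apply Finset.card_image_of_injOn
  intro x hx x' hx' h
  rw [← castSucc_retr (fun hh => hlC (hh ▸ hx)), h, castSucc_retr (fun hh => hlC (hh ▸ hx'))]

lemma Gmap_isPartition (hQ : IsPartition (m + 2) Q) : IsPartition (m + 1) (Gmap m Q) := by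
  constructor
  · intro B hB
    rcases mem_Gmap.mp hB with ⟨C, hC, _, rfl⟩ | ⟨x, _, _, rfl⟩
    · exact (hQ.1 C hC).image _
    · exact singleton_nonempty _
  · intro y
    have hyl : y.castSucc ≠ Fin.last (m + 1) := castSucc_ne_last y
    obtain ⟨C, ⟨hC, hxC⟩, hCu⟩ := hQ.2 y.castSucc
    by_cases hlC : Fin.last (m + 1) ∈ C
    · have hxlb : y.castSucc ∈ lastBlockElems m Q := mem_lastBlockElems.mpr ⟨C, hC, hlC, hxC⟩
      refine ⟨{y}, ⟨mem_Gmap.mpr (Or.inr ⟨y.castSucc, hxlb, hyl, by rw [retr_castSucc]⟩),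
        mem_singleton_self y⟩, ?_⟩
      rintro B ⟨hB, hyB⟩
      rcases mem_Gmap.mp hB with ⟨D, hD, hlD, rfl⟩ | ⟨z, hzlb, hzl, rfl⟩
      · obtain ⟨z, hzD, hz⟩ := mem_image.mp hyB
        have hzx : z = y.castSucc := by
          rw [← castSucc_retr (fun h => hlD (h ▸ hzD)), hz]
        subst hzx
        exact absurd (hCu D ⟨hD, hzD⟩ ▸ hlD) (fun h => h hlC)
      · rw [mem_singleton] at hyB
        rw [hyB]
    · refine ⟨C.image (retr m),
        ⟨mem_Gmap.mpr (Or.inl ⟨C, hC, hlC, rfl⟩),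
          mem_image.mpr ⟨y.castSucc, hxC, retr_castSucc y⟩⟩, ?_⟩
      rintro B ⟨hB, hyB⟩
      rcases mem_Gmap.mp hB with ⟨D, hD, hlD, rfl⟩ | ⟨z, hzlb, hzl, rfl⟩
      · obtain ⟨z, hzD, hz⟩ := mem_image.mp hyB
        have hzx : z = y.castSucc := by
          rw [← castSucc_retr (fun h => hlD (h ▸ hzD)), hz]
        subst hzx
        rw [hCu D ⟨hD, hzD⟩]
      · rw [mem_singleton] at hyB
        have hzx : z = y.castSucc := by rw [← castSucc_retr hzl, hyB]
        subst hzx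
        obtain ⟨B', hB', hlB', hzB'⟩ := mem_lastBlockElems.mp hzlb
        rw [hCu B' ⟨hB', hzB'⟩] at hlB'
        exact absurd hlB' hlC

lemma Gmap_has_singleton (hQ : IsPartition (m + 2) Q) (hs0 : numSingletons (m + 2) Q = 0) :
    numSingletons (m + 1) (Gmap m Q) ≠ 0 := by
  obtain ⟨B₀, ⟨hB₀, hlB₀⟩, _⟩ := hQ.2 (Fin.last (m + 1))
  have hcard : B₀.card ≠ 1 := no_singletons_iff.mp hs0 B₀ hB₀
  have h2 : 2 ≤ B₀.card := by
    have := Finset.card_pos.mpr ⟨_, hlB₀⟩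
    omega
  have herase : (B₀.erase (Fin.last (m + 1))).Nonempty := by
    rw [← Finset.card_pos, Finset.card_erase_of_mem hlB₀]
    omega
  obtain ⟨x₀, hx₀⟩ := herase
  have hx₀l : x₀ ≠ Fin.last (m + 1) := (mem_erase.mp hx₀).1
  have hx₀B : x₀ ∈ B₀ := (mem_erase.mp hx₀).2
  have hmem : ({retr m x₀} : Finset (Fin (m + 1))) ∈ Gmap m Q :=
    mem_Gmap.mpr (Or.inr ⟨x₀, mem_lastBlockElems.mpr ⟨B₀, hB₀, hlB₀, hx₀B⟩, hx₀l, rfl⟩)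
  rw [Ne, numSingletons, Finset.card_eq_zero, ← Ne, ← Finset.nonempty_iff_ne_empty]
  exact ⟨{retr m x₀}, mem_filter.mpr ⟨hmem, card_singleton _⟩⟩

lemma singElems_Gmap (hQ : IsPartition (m + 2) Q) (hs0 : numSingletons (m + 2) Q = 0)
    {B₀ : Finset (Fin (m + 2))} (hB₀ : B₀ ∈ Q) (hlB₀ : Fin.last (m + 1) ∈ B₀) :
    singElems m (Gmap m Q) = (B₀.erase (Fin.last (m + 1))).image (retr m) := by
  ext t
  rw [mem_singElems]
  constructor
  · intro ht
    rcases mem_Gmap.mp ht with ⟨C, hC, hlC, him⟩ | ⟨x, hxlb, hxl, hx⟩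
    · exfalso
      have : (C.image (retr m)).card = C.card := card_image_retr hlC
      rw [← him, card_singleton] at this
      exact no_singletons_iff.mp hs0 C hC this.symm
    · obtain ⟨B', hB', hlB', hxB'⟩ := mem_lastBlockElems.mp hxlb
      have : B' = B₀ := block_eq hQ hB' hB₀ hlB' hlB₀
      subst this
      have : t = retr m x := by
        have := mem_singleton.mp (hx ▸ mem_singleton_self t)
        exact this
      exact mem_image.mpr ⟨x, mem_erase.mpr ⟨hxl, hxB'⟩, this.symm⟩
  · intro ht
    obtain ⟨x, hx, rfl⟩ := mem_image.mp ht
    exact mem_Gmap.mpr (Or.inr ⟨x,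
      mem_lastBlockElems.mpr ⟨B₀, hB₀, hlB₀, (mem_erase.mp hx).2⟩, (mem_erase.mp hx).1, rfl⟩)

lemma Fmap_Gmap (hQ : IsPartition (m + 2) Q) (hs0 : numSingletons (m + 2) Q = 0) :
    Fmap m (Gmap m Q) = Q := by
  obtain ⟨B₀, ⟨hB₀, hlB₀⟩, _⟩ := hQ.2 (Fin.last (m + 1))
  have hsing := singElems_Gmap hQ hs0 hB₀ hlB₀
  have hspecial : insert (Fin.last (m + 1)) ((singElems m (Gmap m Q)).image Fin.castSucc) = B₀ := by
    rw [hsing, image_retr_eq (fun h => (mem_erase.mp h).1 rfl), Finset.insert_erase hlB₀]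
  ext B
  rw [mem_Fmap, hspecial]
  constructor
  · rintro (⟨C, hC, hC1, rfl⟩ | rfl)
    · rcases mem_Gmap.mp hC with ⟨D, hD, hlD, rfl⟩ | ⟨x, _, _, rfl⟩
      · rw [image_retr_eq hlD]; exact hD
      · exact absurd (card_singleton (retr m x)) hC1
    · exact hB₀
  · intro hB
    by_cases hlB : Fin.last (m + 1) ∈ B
    · exact Or.inr (block_eq hQ hB hB₀ hlB hlB₀)
    · refine Or.inl ⟨B.image (retr m), mem_Gmap.mpr (Or.inl ⟨B, hB, hlB, rfl⟩), ?_, ?_⟩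
      · rw [card_image_retr hlB]
        exact no_singletons_iff.mp hs0 B hB
      · rw [image_retr_eq hlB]

end Backward
noncomputable def keyEquiv (m : ℕ) :
    {P : Finset (Finset (Fin (m + 1))) // IsPartition (m + 1) P ∧ numSingletons (m + 1) P ≠ 0} ≃
    {Q : Finset (Finset (Fin (m + 2))) // IsPartition (m + 2) Q ∧ numSingletons (m + 2) Q = 0} where
  toFun := fun ⟨P, hP, hs⟩ => ⟨Fmap m P, Fmap_isPartition hP, Fmap_no_singletons hs⟩
  invFun := fun ⟨Q, hQ, hs⟩ => ⟨Gmap m Q, Gmap_isPartition hQ, Gmap_has_singleton hQ hs⟩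
  left_inv := fun ⟨P, hP, hs⟩ => Subtype.ext (Gmap_Fmap hP)
  right_inv := fun ⟨Q, hQ, hs⟩ => Subtype.ext (Fmap_Gmap hQ hs)

theorem singletonFree_add_bell' (n : ℕ) (hn : 1 ≤ n) :
    Nat.card {P : Finset (Finset (Fin n)) // IsPartition n P ∧ numSingletons n P = 0}
      + Nat.card {P : Finset (Finset (Fin (n + 1))) //
          IsPartition (n + 1) P ∧ numSingletons (n + 1) P = 0}
      = Nat.card {P : Finset (Finset (Fin n)) // IsPartition n P} := by
  classical
  obtain ⟨m, rfl⟩ : ∃ m, n = m + 1 := ⟨n - 1, by omega⟩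
  have e1 : {P : Finset (Finset (Fin (m + 1))) // IsPartition (m + 1) P} ≃
      {P : Finset (Finset (Fin (m + 1))) // IsPartition (m + 1) P ∧ numSingletons (m + 1) P = 0} ⊕
      {P : Finset (Finset (Fin (m + 1))) // IsPartition (m + 1) P ∧ numSingletons (m + 1) P ≠ 0} :=
    ((Equiv.sumCompl
        (fun P : {P : Finset (Finset (Fin (m + 1))) // IsPartition (m + 1) P} =>
          numSingletons (m + 1) P.1 = 0)).symm).trans
      (Equiv.sumCongr
        (Equiv.subtypeSubtypeEquivSubtypeInter (IsPartition (m + 1))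
          (fun P => numSingletons (m + 1) P = 0))
        (Equiv.subtypeSubtypeEquivSubtypeInter (IsPartition (m + 1))
          (fun P => ¬ numSingletons (m + 1) P = 0)))
  rw [Nat.card_congr e1, Nat.card_sum, Nat.card_congr ((keyEquiv m).symm)]

theorem singletonFree_add_bell (n : ℕ) (hn : 1 ≤ n) :
    Nat.card {P : Finset (Finset (Fin n)) // IsPartition n P ∧ numSingletons n P = 0}
      + Nat.card {P : Finset (Finset (Fin (n + 1))) //
          IsPartition (n + 1) P ∧ numSingletons (n + 1) P = 0}
      = bell n := by
  rw [bell]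
  exact singletonFree_add_bell' n hn
end

section
/- Let a_n denote the number of set partitions of [n] with no adjacency, where an adjacency means a pair of elements i and i+1 (indices modulo n) lying in the same block. Then a_n + a_{n+1} = B_n for all n ≥ 1, where B_n is the Bell number. -/
namespace AdjProof


/-- The "lift" of a sequence: inserts a 0 at the front and disambiguates so that
consecutive letters differ. -/
def lift (v : ℕ → ℕ) : ℕ → ℕ
  | 0 => 0
  | (i+1) => if v i < lift v i then v i else v i + 1

/-- The "collapse", inverse to `lift`. -/
def clps (w : ℕ → ℕ) : ℕ → ℕ := fun i => if w (i+1) < w i then w (i+1) else w (i+1) - 1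

lemma lift_zero (v : ℕ → ℕ) : lift v 0 = 0 := rfl

lemma lift_succ_ne (v : ℕ → ℕ) (i : ℕ) : lift v (i+1) ≠ lift v i := by
  show (if v i < lift v i then v i else v i + 1) ≠ lift v i
  split
  · omega
  · omega

lemma clps_lift (v : ℕ → ℕ) (i : ℕ) : clps (lift v) i = v i := by
  show (if lift v (i+1) < lift v i then lift v (i+1) else lift v (i+1) - 1) = v i
  show (if (if v i < lift v i then v i else v i + 1) < lift v i then
      (if v i < lift v i then v i else v i + 1) else (if v i < lift v i then v i else v i + 1) - 1) = v i
  by_cases h : v i < lift v i <;> simp [h] <;> omega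

lemma lift_clps (w : ℕ → ℕ) (h0 : w 0 = 0) {m : ℕ} (hs : ∀ j < m, w (j+1) ≠ w j) :
    ∀ i ≤ m, lift (clps w) i = w i := by
  intro i hi
  induction i with
  | zero => simpa [lift_zero] using h0.symm
  | succ i ih =>
    have hw : lift (clps w) i = w i := ih (by omega)
    have hne : w (i+1) ≠ w i := hs i (by omega)
    show (if clps w i < lift (clps w) i then clps w i else clps w i + 1) = w (i+1)
    rw [hw]
    unfold clps
    by_cases h : w (i+1) < w i
    · simp [h]
    · have h2 : w (i+1) > w i := by omega
      have : ¬ (w (i+1) - 1 < w i) := by omega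
      simp [h, this]
      omega

/-- Downward closure of the prefix of the lift. -/
lemma lift_downward {n : ℕ} {v : ℕ → ℕ} (hv : ∀ i < n, ∀ k < v i, ∃ j < i, v j = k) :
    ∀ i ≤ n, ∀ j ≤ i, ∀ k ≤ lift v j, ∃ j' ≤ i, lift v j' = k := by
  intro i hi
  induction i with
  | zero =>
    intro j hj k hk
    interval_cases j
    simp [lift_zero] at hk
    exact ⟨0, le_refl _, by simp [lift_zero]; omega⟩
  | succ i ih =>
    have ih' := ih (by omega)
    intro j hj k hk
    rcases Nat.lt_or_ge j (i+1) with hj' | hj'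
    · obtain ⟨j', hj'le, hj'eq⟩ := ih' j (by omega) k hk
      exact ⟨j', by omega, hj'eq⟩
    · -- j = i+1
      have hji : j = i + 1 := by omega
      subst hji
      have hlift : lift v (i+1) = if v i < lift v i then v i else v i + 1 := rfl
      by_cases hc : v i < lift v i
      · -- lift v (i+1) = v i < lift v i, so k < lift v i, use ih' at i
        rw [hlift, if_pos hc] at hk
        obtain ⟨j', hj'le, hj'eq⟩ := ih' i (le_refl _) k (by omega)
        exact ⟨j', by omega, hj'eq⟩
      · rw [hlift, if_neg hc] at hk
        push_neg at hc
        rcases Nat.lt_or_ge (lift v i) k with hk1 | hk1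
        · -- lift v i < k ≤ v i + 1
          rcases Nat.eq_or_lt_of_le hk with heq | hlt
          · exact ⟨i+1, le_refl _, by rw [hlift, if_neg (by omega)]; omega⟩
          · -- k ≤ v i, k ≥ 1, k - 1 < v i
            have hkv : k - 1 < v i := by omega
            obtain ⟨j0, hj0, hj0eq⟩ := hv i (by omega) (k-1) hkv
            by_cases hc2 : v j0 < lift v j0
            · -- lift v (j0+1) = v j0 = k - 1, and k ≤ lift v j0
              have : k ≤ lift v j0 := by omega
              obtain ⟨j', hj'le, hj'eq⟩ := ih' j0 (by omega) k this
              exact ⟨j', by omega, hj'eq⟩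
            · push_neg at hc2
              refine ⟨j0 + 1, by omega, ?_⟩
              show (if v j0 < lift v j0 then v j0 else v j0 + 1) = k
              rw [if_neg (by omega)]
              omega
        · obtain ⟨j', hj'le, hj'eq⟩ := ih' i (le_refl _) k hk1
          exact ⟨j', by omega, hj'eq⟩

/-- The lift of an RGS is an RGS (one longer). -/
lemma lift_rgs {n : ℕ} {v : ℕ → ℕ} (hv : ∀ i < n, ∀ k < v i, ∃ j < i, v j = k) :
    ∀ i ≤ n, ∀ k < lift v i, ∃ j < i, lift v j = k := by
  intro i hi k hk
  obtain ⟨j', hj'le, hj'eq⟩ := lift_downward hv i hi i (le_refl _) k (le_of_lt hk)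
  refine ⟨j', ?_, hj'eq⟩
  rcases Nat.eq_or_lt_of_le hj'le with h | h
  · subst h; omega
  · exact h

/-- The collapse of an RGS of length n+1 is an RGS of length n. -/
lemma clps_rgs {n : ℕ} {w : ℕ → ℕ} (hw : ∀ i < n + 1, ∀ k < w i, ∃ j < i, w j = k) (hn : 0 < n) :
    ∀ i < n, ∀ k < clps w i, ∃ j < i, clps w j = k := by
  have hw0 : w 0 = 0 := by
    by_contra h
    obtain ⟨j, hj, -⟩ := hw 0 (by omega) 0 (by omega)
    omega
  intro i hi k hk
  have hclps : clps w i = if w (i+1) < w i then w (i+1) else w (i+1) - 1 := rfl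
  -- there exists f ≤ i with w f > k
  have hex : ∃ f, f ≤ i ∧ k < w f := by
    by_contra h
    push_neg at h
    by_cases hc : w (i+1) < w i
    · rw [hclps, if_pos hc] at hk
      have := h i (le_refl _)
      omega
    · rw [hclps, if_neg hc] at hk
      push_neg at hc
      have h1 : k + 1 < w (i+1) := by omega
      obtain ⟨j, hj, hjeq⟩ := hw (i+1) (by omega) (k+1) h1
      have := h j (by omega)
      omega
  classical
  have hex' : ∃ f, k < w f := ⟨hex.choose, hex.choose_spec.2⟩
  set f := Nat.find hex' with hf
  have hfspec : k < w f := Nat.find_spec hex'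
  have hfmin : ∀ g < f, w g ≤ k := by
    intro g hg
    have := Nat.find_min hex' hg
    omega
  have hfle : f ≤ i := Nat.find_min' hex' hex.choose_spec.2 |>.trans hex.choose_spec.1
  have hfpos : 0 < f := by
    rcases Nat.eq_zero_or_pos f with h | h
    · rw [h] at hfspec; omega
    · exact h
  obtain ⟨g, hg⟩ : ∃ g, f = g + 1 := ⟨f - 1, by omega⟩
  have hwg : w g ≤ k := hfmin g (by omega)
  have hwg1 : k < w (g+1) := by rw [← hg]; exact hfspec
  -- w (g+1) = k + 1
  have hweq : w (g+1) = k + 1 := by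
    by_contra h
    have : k + 1 < w (g+1) := by omega
    obtain ⟨j, hj, hjeq⟩ := hw (g+1) (by omega) (k+1) this
    have := hfmin j (by omega)
    omega
  refine ⟨g, by omega, ?_⟩
  show (if w (g+1) < w g then w (g+1) else w (g+1) - 1) = k
  rw [if_neg (by omega)]
  omega



variable {n : ℕ}

/-- The block of `P` containing `i`. -/
def blk (P : Finset (Finset (Fin n))) (i : Fin n) : Finset (Fin n) :=
  (P.filter (fun b => i ∈ b)).sup id

section blk

variable {P : Finset (Finset (Fin n))} (h : IsPartition n P)

include h

lemma filter_mem_eq (i : Fin n) : P.filter (fun b => i ∈ b) = {blk P i} := by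
  obtain ⟨B, ⟨hBP, hiB⟩, huniq⟩ := h.2 i
  have hf : P.filter (fun b => i ∈ b) = {B} := by
    ext b
    simp only [Finset.mem_filter, Finset.mem_singleton]
    constructor
    · rintro ⟨hb, hib⟩; exact huniq b ⟨hb, hib⟩
    · rintro rfl; exact ⟨hBP, hiB⟩
  rw [hf]
  congr 1
  rw [blk, hf, Finset.sup_singleton, id]

lemma blk_mem (i : Fin n) : blk P i ∈ P := by
  have := filter_mem_eq h i
  have : blk P i ∈ P.filter (fun b => i ∈ b) := by rw [this]; simp
  exact (Finset.mem_filter.mp this).1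

lemma mem_blk (i : Fin n) : i ∈ blk P i := by
  have := filter_mem_eq h i
  have : blk P i ∈ P.filter (fun b => i ∈ b) := by rw [this]; simp
  exact (Finset.mem_filter.mp this).2

lemma blk_eq_of_mem {b : Finset (Fin n)} {i : Fin n} (hb : b ∈ P) (hib : i ∈ b) :
    b = blk P i := by
  have : b ∈ P.filter (fun b => i ∈ b) := Finset.mem_filter.mpr ⟨hb, hib⟩
  rw [filter_mem_eq h i] at this
  simpa using this

lemma mem_blk_iff {i j : Fin n} : j ∈ blk P i ↔ blk P j = blk P i :=
  ⟨fun hj => (blk_eq_of_mem h (blk_mem h i) hj).symm,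
   fun hj => hj ▸ mem_blk h j⟩

/-- Distinct blocks of a partition have distinct minima. -/
lemma min_inj {b c : Finset (Fin n)} (hb : b ∈ P) (hc : c ∈ P) (hbc : b.min = c.min) :
    b = c := by
  have hbne : b.Nonempty := h.1 b hb
  have hcne : c.Nonempty := h.1 c hc
  have hmb : b.min' hbne ∈ b := Finset.min'_mem b hbne
  have hmc : c.min' hcne ∈ c := Finset.min'_mem c hcne
  have : (b.min' hbne : WithTop (Fin n)) = (c.min' hcne : WithTop (Fin n)) := by
    rw [Finset.coe_min', Finset.coe_min', hbc]
  have hmm : b.min' hbne = c.min' hcne := by exact_mod_cast this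
  rw [blk_eq_of_mem h hb hmb, blk_eq_of_mem h hc (hmm ▸ hmc)]

end blk

/-- The restricted growth string of a partition. -/
def rgsOf (n : ℕ) (P : Finset (Finset (Fin n))) : ℕ → ℕ := fun i =>
  if hi : i < n then (P.filter (fun b => b.min < (blk P ⟨i, hi⟩).min)).card else 0

/-- The partition determined by a string: blocks are the fibers. -/
def partOf (n : ℕ) (w : ℕ → ℕ) : Finset (Finset (Fin n)) :=
  Finset.univ.image (fun i : Fin n => Finset.univ.filter (fun j : Fin n => w ↑j = w ↑i))

lemma partOf_isPartition (n : ℕ) (w : ℕ → ℕ) : IsPartition n (partOf n w) := by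
  constructor
  · intro B hB
    simp only [partOf, Finset.mem_image] at hB
    obtain ⟨i, -, rfl⟩ := hB
    exact ⟨i, by simp⟩
  · intro x
    refine ⟨Finset.univ.filter (fun j : Fin n => w ↑j = w ↑x), ⟨?_, by simp⟩, ?_⟩
    · simp only [partOf, Finset.mem_image]
      exact ⟨x, Finset.mem_univ x, rfl⟩
    · rintro B ⟨hB, hxB⟩
      simp only [partOf, Finset.mem_image] at hB
      obtain ⟨i, -, rfl⟩ := hB
      simp only [Finset.mem_filter] at hxB
      ext j
      simp only [Finset.mem_filter, Finset.mem_univ, true_and]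
      rw [hxB.2]



/-- Rank lemma: in a finite subset of a linear order, for every `k < |T|` there is an
element of rank exactly `k`. -/
lemma rank_surj {α : Type*} [LinearOrder α] [DecidableEq α] (T : Finset α) :
    ∀ k < T.card, ∃ x ∈ T, (T.filter (· < x)).card = k := by
  classical
  have hmaps : ∀ a ∈ T, (T.filter (· < a)).card ∈ Finset.range T.card := by
    intro a ha
    rw [Finset.mem_range]
    have hsub : T.filter (· < a) ⊆ T.erase a := by
      intro x hx
      rw [Finset.mem_filter] at hx
      exact Finset.mem_erase.mpr ⟨ne_of_lt hx.2, hx.1⟩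
    calc (T.filter (· < a)).card ≤ (T.erase a).card := Finset.card_le_card hsub
      _ < T.card := Finset.card_erase_lt_of_mem ha
  have hmono : ∀ a b, a ∈ T → b ∈ T → a < b →
      (T.filter (· < a)).card < (T.filter (· < b)).card := by
    intro a b ha hb hab
    apply Finset.card_lt_card
    constructor
    · intro x hx
      rw [Finset.mem_filter] at hx ⊢
      exact ⟨hx.1, lt_trans hx.2 hab⟩
    · intro hsub
      have : a ∈ T.filter (· < b) := Finset.mem_filter.mpr ⟨ha, hab⟩
      have := hsub this
      rw [Finset.mem_filter] at this
      exact absurd this.2 (lt_irrefl a)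
  have hinj : ∀ a₁ a₂ (ha₁ : a₁ ∈ T) (ha₂ : a₂ ∈ T),
      (fun a (_ : a ∈ T) => (T.filter (· < a)).card) a₁ ha₁ =
      (fun a (_ : a ∈ T) => (T.filter (· < a)).card) a₂ ha₂ → a₁ = a₂ := by
    intro a₁ a₂ ha₁ ha₂ heq
    rcases lt_trichotomy a₁ a₂ with hlt | heq' | hlt
    · exact absurd heq (ne_of_lt (hmono _ _ ha₁ ha₂ hlt))
    · exact heq'
    · exact absurd heq.symm (ne_of_lt (hmono _ _ ha₂ ha₁ hlt))
  intro k hk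
  obtain ⟨a, ha, heq⟩ := Finset.surj_on_of_inj_on_of_card_le
    (fun a (_ : a ∈ T) => (T.filter (· < a)).card) hmaps hinj
    (by rw [Finset.card_range]) k (Finset.mem_range.mpr hk)
  exact ⟨a, ha, heq.symm⟩



section rgs

variable {n : ℕ} {P : Finset (Finset (Fin n))}

lemma rgsOf_coe (h : IsPartition n P) (j : Fin n) :
    rgsOf n P ↑j = (P.filter (fun b => b.min < (blk P j).min)).card := by
  rw [rgsOf, dif_pos j.isLt]

lemma rgsOf_strict_mono (h : IsPartition n P) {i j : Fin n}
    (hij : (blk P i).min < (blk P j).min) : rgsOf n P ↑i < rgsOf n P ↑j := by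
  classical
  rw [rgsOf_coe h, rgsOf_coe h]
  apply Finset.card_lt_card
  constructor
  · intro b hb
    rw [Finset.mem_filter] at hb ⊢
    exact ⟨hb.1, lt_trans hb.2 hij⟩
  · intro hsub
    have hmem : blk P i ∈ P.filter (fun b => b.min < (blk P j).min) :=
      Finset.mem_filter.mpr ⟨blk_mem h i, hij⟩
    have := hsub hmem
    rw [Finset.mem_filter] at this
    exact absurd this.2 (lt_irrefl _)

lemma rgsOf_eq_iff (h : IsPartition n P) {i j : Fin n} :
    rgsOf n P ↑i = rgsOf n P ↑j ↔ blk P i = blk P j := by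
  constructor
  · intro heq
    rcases lt_trichotomy ((blk P i).min) ((blk P j).min) with hlt | heq' | hlt
    · exact absurd heq (ne_of_lt (rgsOf_strict_mono h hlt))
    · exact min_inj h (blk_mem h i) (blk_mem h j) heq'
    · exact absurd heq.symm (ne_of_lt (rgsOf_strict_mono h hlt))
  · intro heq
    rw [rgsOf_coe h, rgsOf_coe h, heq]

lemma rgsOf_isRgs (h : IsPartition n P) :
    ∀ i < n, ∀ k < rgsOf n P i, ∃ j < i, rgsOf n P j = k := by
  classical
  intro i hi k hk
  set I : Fin n := ⟨i, hi⟩ with hI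
  have hcoe : rgsOf n P i = rgsOf n P ↑I := by rw [hI]
  rw [hcoe, rgsOf_coe h] at hk
  set T : Finset (WithTop (Fin n)) := P.image Finset.min with hT
  have hinjOn : ∀ b ∈ P, ∀ c ∈ P, b.min = c.min → b = c := fun b hb c hc => min_inj h hb hc
  have hfilter : ∀ x : WithTop (Fin n),
      (T.filter (· < x)) = (P.filter (fun b => b.min < x)).image Finset.min := by
    intro x
    rw [hT, Finset.filter_image]
  have hcard : ∀ x : WithTop (Fin n),
      (T.filter (· < x)).card = (P.filter (fun b => b.min < x)).card := by
    intro x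
    rw [hfilter]
    apply Finset.card_image_of_injOn
    intro b hb c hc
    exact hinjOn b (Finset.mem_filter.mp hb).1 c (Finset.mem_filter.mp hc).1
  have hkT : k < T.card := by
    have h1 : (P.filter (fun b => b.min < (blk P I).min)).card ≤ T.card := by
      rw [← hcard]
      exact Finset.card_le_card (Finset.filter_subset _ _)
    omega
  obtain ⟨x, hxT, hxrank⟩ := rank_surj T k hkT
  -- x < (blk P I).min
  have hxlt : x < (blk P I).min := by
    by_contra hge
    push_neg at hge
    have hsub : T.filter (· < (blk P I).min) ⊆ T.filter (· < x) := by
      intro y hy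
      rw [Finset.mem_filter] at hy ⊢
      exact ⟨hy.1, lt_of_lt_of_le hy.2 hge⟩
    have := Finset.card_le_card hsub
    rw [hxrank, hcard] at this
    omega
  obtain ⟨b, hbP, hbmin⟩ := Finset.mem_image.mp hxT
  have hbne : b.Nonempty := h.1 b hbP
  set j : Fin n := b.min' hbne with hj
  have hjb : j ∈ b := Finset.min'_mem b hbne
  have hblkj : b = blk P j := blk_eq_of_mem h hbP hjb
  have hjmin : (j : WithTop (Fin n)) = b.min := Finset.coe_min' hbne
  refine ⟨↑j, ?_, ?_⟩
  · -- ↑j < i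
    have h1 : (j : WithTop (Fin n)) < (blk P I).min := by rw [hjmin, hbmin]; exact hxlt
    have h2 : (blk P I).min ≤ (I : WithTop (Fin n)) := Finset.min_le (mem_blk h I)
    have h3 : (j : WithTop (Fin n)) < (I : WithTop (Fin n)) := lt_of_lt_of_le h1 h2
    have h4 : j < I := by exact_mod_cast h3
    exact h4
  · rw [rgsOf_coe h, ← hblkj, hbmin, ← hcard, hxrank]

lemma rgsOf_vanish (i : ℕ) (hi : n ≤ i) : rgsOf n P i = 0 := by
  rw [rgsOf, dif_neg (by omega)]

lemma partOf_rgsOf (h : IsPartition n P) : partOf n (rgsOf n P) = P := by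
  classical
  have hfib : ∀ i : Fin n,
      (Finset.univ.filter (fun j : Fin n => rgsOf n P ↑j = rgsOf n P ↑i)) = blk P i := by
    intro i
    ext j
    simp only [Finset.mem_filter, Finset.mem_univ, true_and]
    rw [rgsOf_eq_iff h, mem_blk_iff h]
  ext b
  simp only [partOf, Finset.mem_image]
  constructor
  · rintro ⟨i, -, rfl⟩
    rw [hfib i]
    exact blk_mem h i
  · intro hb
    obtain ⟨i, hib⟩ := h.1 b hb
    exact ⟨i, Finset.mem_univ i, by rw [hfib i, ← blk_eq_of_mem h hb hib]⟩

end rgs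


/-- `w` is a restricted growth string of length `n`, vanishing from `n` on. -/
def InRgs (n : ℕ) (w : ℕ → ℕ) : Prop :=
  (∀ i, n ≤ i → w i = 0) ∧ (∀ i < n, ∀ k < w i, ∃ j < i, w j = k)

/-- No two cyclically adjacent letters are equal. -/
def CycFree (n : ℕ) (w : ℕ → ℕ) : Prop := ∀ i < n, w i ≠ w ((i + 1) % n)

section partOfRgs

variable {n : ℕ} {w : ℕ → ℕ}

/-- The fiber of the value `k`. -/
def fib (n : ℕ) (w : ℕ → ℕ) (k : ℕ) : Finset (Fin n) :=
  Finset.univ.filter (fun j : Fin n => w ↑j = k)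

lemma partOf_eq_image : partOf n w = Finset.univ.image (fun i : Fin n => fib n w (w ↑i)) := rfl

lemma fib_mem_partOf (i : Fin n) : fib n w (w ↑i) ∈ partOf n w := by
  rw [partOf_eq_image]
  exact Finset.mem_image.mpr ⟨i, Finset.mem_univ i, rfl⟩

lemma mem_fib_self (i : Fin n) : i ∈ fib n w (w ↑i) := by simp [fib]

lemma blk_partOf (i : Fin n) : blk (partOf n w) i = fib n w (w ↑i) :=
  (blk_eq_of_mem (partOf_isPartition n w) (fib_mem_partOf i) (mem_fib_self i)).symm

lemma fib_min_mono (hw : InRgs n w) {k m : ℕ} (hkm : k < m) (hm : (fib n w m).Nonempty) :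
    (fib n w k).min < (fib n w m).min := by
  set j0 : Fin n := (fib n w m).min' hm with hj0def
  have hj0mem : j0 ∈ fib n w m := Finset.min'_mem _ hm
  have hj0w : w ↑j0 = m := by simpa [fib] using hj0mem
  obtain ⟨j', hj'lt, hj'w⟩ := hw.2 ↑j0 j0.isLt k (by omega)
  have hj'n : j' < n := lt_trans hj'lt j0.isLt
  set j'' : Fin n := ⟨j', hj'n⟩ with hj''def
  have hj''mem : j'' ∈ fib n w k := by simp [fib, hj''def, hj'w]
  have h1 : (fib n w k).min ≤ (j'' : WithTop (Fin n)) := Finset.min_le hj''mem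
  have h2 : (j'' : Fin n) < j0 := by
    rw [Fin.lt_def]
    exact hj'lt
  have h3 : (j'' : WithTop (Fin n)) < (j0 : WithTop (Fin n)) := by exact_mod_cast h2
  have h4 : (fib n w m).min = (j0 : WithTop (Fin n)) := (Finset.coe_min' hm).symm
  rw [h4]
  exact lt_of_le_of_lt h1 h3

lemma rgsOf_partOf (hw : InRgs n w) : rgsOf n (partOf n w) = w := by
  classical
  funext i
  by_cases hi : i < n
  · rw [rgsOf, dif_pos hi, blk_partOf]
    have hcoe : ((⟨i, hi⟩ : Fin n) : ℕ) = i := rfl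
    rw [hcoe]
    have hset : (partOf n w).filter (fun b => b.min < (fib n w (w i)).min)
        = (Finset.range (w i)).image (fib n w) := by
      ext b
      simp only [Finset.mem_filter, Finset.mem_image, Finset.mem_range]
      constructor
      · rintro ⟨hbmem, hblt⟩
        rw [partOf_eq_image] at hbmem
        obtain ⟨i', -, rfl⟩ := Finset.mem_image.mp hbmem
        rcases lt_trichotomy (w ↑i') (w i) with hlt | heq | hlt
        · exact ⟨w ↑i', hlt, rfl⟩
        · rw [heq] at hblt
          exact absurd hblt (lt_irrefl _)
        · have hne : (fib n w (w ↑i')).Nonempty := ⟨i', mem_fib_self i'⟩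
          have := fib_min_mono hw hlt hne
          exact absurd hblt (not_lt_of_gt this)
      · rintro ⟨k, hk, rfl⟩
        obtain ⟨j, hj, hjw⟩ := hw.2 i hi k hk
        have hjn : j < n := lt_trans hj hi
        have hfib : fib n w k = fib n w (w ↑(⟨j, hjn⟩ : Fin n)) := by
          congr 1
          exact hjw.symm
        constructor
        · rw [hfib]; exact fib_mem_partOf _
        · have hne : (fib n w (w i)).Nonempty := ⟨⟨i, hi⟩, mem_fib_self ⟨i, hi⟩⟩
          exact fib_min_mono hw hk hne
    rw [hset, Finset.card_image_of_injOn, Finset.card_range]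
    intro k hk k' hk' heq
    rw [Finset.mem_coe, Finset.mem_range] at hk hk'
    obtain ⟨j, hj, hjw⟩ := hw.2 i hi k hk
    have hjn : j < n := lt_trans hj hi
    have hmem : (⟨j, hjn⟩ : Fin n) ∈ fib n w k := by simp [fib, hjw]
    rw [heq] at hmem
    simp only [fib, Finset.mem_filter] at hmem
    have : w j = k' := hmem.2
    omega
  · rw [rgsOf, dif_neg hi, hw.1 i (by omega)]

lemma rgsOf_inRgs {P : Finset (Finset (Fin n))} (h : IsPartition n P) :
    InRgs n (rgsOf n P) :=
  ⟨fun i hi => rgsOf_vanish i hi, rgsOf_isRgs h⟩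

lemma numAdj_eq_zero_iff {P : Finset (Finset (Fin n))} (h : IsPartition n P) :
    numAdjacencies n P = 0 ↔ CycFree n (rgsOf n P) := by
  rw [numAdjacencies, Finset.card_eq_zero, Finset.filter_eq_empty_iff]
  constructor
  · intro hnone i hi heq
    apply hnone (Finset.mem_univ (⟨i, hi⟩ : Fin n))
    have hcoe : ((cycNext (⟨i, hi⟩ : Fin n)) : ℕ) = (i + 1) % n := rfl
    have heq' : rgsOf n P ↑(⟨i, hi⟩ : Fin n) = rgsOf n P ↑(cycNext (⟨i, hi⟩ : Fin n)) := by
      rw [hcoe]; exact heq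
    have hblk := (rgsOf_eq_iff h).mp heq'
    exact ⟨blk P ⟨i, hi⟩, blk_mem h _, mem_blk h _, (mem_blk_iff h).mpr hblk.symm⟩
  · rintro hcf x - ⟨B, hB, hx, hnx⟩
    have h1 : B = blk P x := blk_eq_of_mem h hB hx
    have h2 : B = blk P (cycNext x) := blk_eq_of_mem h hB hnx
    have h3 : rgsOf n P ↑x = rgsOf n P ↑(cycNext x) :=
      (rgsOf_eq_iff h).mpr (h1 ▸ h2)
    have hcoe : ((cycNext x) : ℕ) = (↑x + 1) % n := rfl
    exact hcf ↑x x.isLt (by rw [← hcoe]; exact h3)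

end partOfRgs

/-- Truncation of the lift to length `n+1`. -/
def truncLift (n : ℕ) (v : ℕ → ℕ) : ℕ → ℕ := fun i => if i < n + 1 then lift v i else 0

variable {n : ℕ} {v w u : ℕ → ℕ}

lemma truncLift_lt {i : ℕ} (h : i < n + 1) : truncLift n v i = lift v i := if_pos h

lemma truncLift_ge {i : ℕ} (h : ¬ i < n + 1) : truncLift n v i = 0 := if_neg h

lemma inRgs_zero {m : ℕ} (hu : InRgs m u) : u 0 = 0 := by
  rcases Nat.eq_zero_or_pos m with h | h
  · exact hu.1 0 (by omega)
  · by_contra hne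
    obtain ⟨j, hj, -⟩ := hu.2 0 h 0 (by omega)
    omega

lemma truncLift_inRgs_succ (hv : InRgs n v) : InRgs (n + 1) (truncLift n v) := by
  constructor
  · intro i hi
    rw [truncLift, if_neg (by omega)]
  · intro i hi k hk
    rw [truncLift, if_pos hi] at hk
    obtain ⟨j, hj, hjeq⟩ := lift_rgs hv.2 i (by omega) k hk
    exact ⟨j, hj, by rw [truncLift, if_pos (by omega)]; exact hjeq⟩

lemma truncLift_cycFree_succ (h : lift v n ≠ 0) : CycFree (n + 1) (truncLift n v) := by
  intro i hi
  rcases Nat.lt_or_ge i n with hin | hin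
  · have hmod : (i + 1) % (n + 1) = i + 1 := Nat.mod_eq_of_lt (by omega)
    rw [hmod, truncLift, truncLift, if_pos (by omega), if_pos (by omega)]
    exact fun heq => lift_succ_ne v i heq.symm
  · have hieq : i = n := by omega
    subst hieq
    have hmod : (i + 1) % (i + 1) = 0 := Nat.mod_self _
    rw [hmod, truncLift, truncLift, if_pos (by omega), if_pos (by omega), lift_zero]
    exact h

lemma truncLift_inRgs_self (hv : InRgs n v) (h : lift v n = 0) : InRgs n (truncLift n v) := by
  constructor
  · intro i hi
    rcases Nat.lt_or_ge i (n+1) with h1 | h1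
    · have : i = n := by omega
      subst this
      rw [truncLift, if_pos (by omega)]
      exact h
    · rw [truncLift, if_neg (by omega)]
  · intro i hi k hk
    rw [truncLift, if_pos (by omega)] at hk
    obtain ⟨j, hj, hjeq⟩ := lift_rgs hv.2 i (by omega) k hk
    exact ⟨j, hj, by rw [truncLift, if_pos (by omega)]; exact hjeq⟩

lemma truncLift_cycFree_self (h : lift v n = 0) (hn : 1 ≤ n) : CycFree n (truncLift n v) := by
  intro i hi
  rcases Nat.lt_or_ge (i + 1) n with hin | hin
  · have hmod : (i + 1) % n = i + 1 := Nat.mod_eq_of_lt hin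
    rw [hmod, truncLift, truncLift, if_pos (by omega), if_pos (by omega)]
    exact fun heq => lift_succ_ne v i heq.symm
  · have hieq : i + 1 = n := by omega
    have hmod : (i + 1) % n = 0 := by rw [hieq]; exact Nat.mod_self _
    rw [hmod, truncLift, truncLift, if_pos (by omega), if_pos (by omega), lift_zero]
    intro heq
    apply lift_succ_ne v i
    rw [hieq, h, heq]

lemma clps_inRgs {m : ℕ} (hu : InRgs m u) (hmn : m = n ∨ m = n + 1) (hn : 1 ≤ n) :
    InRgs n (clps u) := by
  constructor
  · intro i hi
    have hvan : u (i + 1) = 0 := hu.1 (i + 1) (by omega)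
    rw [clps, hvan]
    split <;> omega
  · apply clps_rgs _ (by omega)
    intro i hi k hk
    rcases hmn with rfl | rfl
    · rcases Nat.lt_or_ge i m with h1 | h1
      · exact hu.2 i h1 k hk
      · rw [hu.1 i (by omega)] at hk; omega
    · exact hu.2 i hi k hk

/-- The word `u` has no two consecutive equal letters among its first `m+1` letters,
when it is a cyclically free RGS. -/
lemma smirnov_of_cycFree {m : ℕ} (hu : InRgs m u) (hc : CycFree m u) (hm : 1 ≤ m) :
    ∀ j < m, u (j+1) ≠ u j := by
  intro j hj
  rcases Nat.lt_or_ge (j + 1) m with h1 | h1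
  · have hmod : (j + 1) % m = j + 1 := Nat.mod_eq_of_lt h1
    have := hc j hj
    rw [hmod] at this
    exact fun heq => this heq.symm
  · have hjm : j + 1 = m := by omega
    have hvan : u (j + 1) = 0 := hu.1 (j+1) (by omega)
    have hmod : (j + 1) % m = 0 := by rw [hjm]; exact Nat.mod_self _
    have := hc j hj
    rw [hmod, inRgs_zero hu] at this
    rw [hvan]
    exact fun heq => this heq.symm

/-- The key equivalence: RGSs of length `n` correspond to cyclically free RGSs of
length `n` or `n + 1`. -/
noncomputable def sumEquiv (n : ℕ) (hn : 1 ≤ n) :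
    {w : ℕ → ℕ // InRgs n w} ≃
      {w : ℕ → ℕ // InRgs n w ∧ CycFree n w} ⊕ {w : ℕ → ℕ // InRgs (n+1) w ∧ CycFree (n+1) w} := by
  classical
  refine
  { toFun := fun v =>
      if h : lift v.1 n = 0 then
        Sum.inl ⟨truncLift n v.1, truncLift_inRgs_self v.2 h, truncLift_cycFree_self h hn⟩
      else
        Sum.inr ⟨truncLift n v.1, truncLift_inRgs_succ v.2, truncLift_cycFree_succ h⟩
    invFun := fun s =>
      Sum.elim (fun u => ⟨clps u.1, clps_inRgs u.2.1 (Or.inl rfl) hn⟩)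
        (fun u => ⟨clps u.1, clps_inRgs u.2.1 (Or.inr rfl) hn⟩) s
    left_inv := ?_
    right_inv := ?_ }
  · intro v
    have key : clps (truncLift n v.1) = v.1 := by
      funext i
      rcases Nat.lt_or_ge i n with hi | hi
      · rw [clps, truncLift_lt (by omega : i + 1 < n + 1), truncLift_lt (by omega : i < n + 1)]
        exact clps_lift v.1 i
      · rw [clps, truncLift_ge (by omega : ¬ (i + 1 < n + 1))]
        rw [v.2.1 i hi]
        split <;> omega
    by_cases h : lift v.1 n = 0 <;> simp only [h, dif_pos, dif_neg, not_false_iff] <;>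
      [skip; skip] <;> simp [key]
  · rintro (⟨u, hu, hc⟩ | ⟨u, hu, hc⟩)
    · -- inl case : length n
      have hsm : ∀ j < n, u (j+1) ≠ u j := smirnov_of_cycFree hu hc hn
      have hlc : ∀ i ≤ n, lift (clps u) i = u i := lift_clps u (inRgs_zero hu) hsm
      have hdisc : lift (clps u) n = 0 := by rw [hlc n (le_refl n)]; exact hu.1 n (le_refl n)
      simp only [Sum.elim_inl, dif_pos hdisc]
      refine (dif_pos hdisc).trans ?_
      congr 1
      apply Subtype.ext
      show truncLift n (clps u) = u
      funext i
      rcases Nat.lt_or_ge i (n+1) with hi | hi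
      · rw [truncLift_lt hi, hlc i (by omega)]
      · rw [truncLift_ge (by omega), hu.1 i (by omega)]
    · -- inr case : length n + 1
      have hsm : ∀ j < n + 1, u (j+1) ≠ u j := smirnov_of_cycFree hu hc (by omega)
      have hlc : ∀ i ≤ n + 1, lift (clps u) i = u i := lift_clps u (inRgs_zero hu) hsm
      have hun : u n ≠ 0 := by
        have := hc n (by omega)
        rw [Nat.mod_self, inRgs_zero hu] at this
        exact this
      have hdisc : lift (clps u) n ≠ 0 := by rw [hlc n (by omega)]; exact hun
      simp only [Sum.elim_inr, dif_neg hdisc]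
      refine (dif_neg hdisc).trans ?_
      congr 1
      apply Subtype.ext
      show truncLift n (clps u) = u
      funext i
      rcases Nat.lt_or_ge i (n+1) with hi | hi
      · rw [truncLift_lt hi, hlc i (by omega)]
      · rw [truncLift_ge (by omega), hu.1 i (by omega)]


/-- Partitions correspond to restricted growth strings. -/
noncomputable def partEquiv (n : ℕ) :
    {P : Finset (Finset (Fin n)) // IsPartition n P} ≃ {w : ℕ → ℕ // InRgs n w} where
  toFun := fun p => ⟨rgsOf n p.1, rgsOf_inRgs p.2⟩
  invFun := fun w => ⟨partOf n w.1, partOf_isPartition n w.1⟩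
  left_inv := fun p => Subtype.ext (partOf_rgsOf p.2)
  right_inv := fun w => Subtype.ext (rgsOf_partOf w.2)

/-- Adjacency-free partitions correspond to cyclically free restricted growth strings. -/
noncomputable def partEquivAdj (n : ℕ) :
    {P : Finset (Finset (Fin n)) // IsPartition n P ∧ numAdjacencies n P = 0} ≃
      {w : ℕ → ℕ // InRgs n w ∧ CycFree n w} where
  toFun := fun p => ⟨rgsOf n p.1, rgsOf_inRgs p.2.1, (numAdj_eq_zero_iff p.2.1).mp p.2.2⟩
  invFun := fun w => ⟨partOf n w.1, partOf_isPartition n w.1, by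
    apply (numAdj_eq_zero_iff (partOf_isPartition n w.1)).mpr
    rw [rgsOf_partOf w.2.1]
    exact w.2.2⟩
  left_inv := fun p => Subtype.ext (partOf_rgsOf p.2.1)
  right_inv := fun w => Subtype.ext (rgsOf_partOf w.2.1)

end AdjProof

theorem adjacencyFree_add_bell (n : ℕ) (hn : 1 ≤ n) :
    Nat.card {P : Finset (Finset (Fin n)) // IsPartition n P ∧ numAdjacencies n P = 0}
      + Nat.card {P : Finset (Finset (Fin (n + 1))) //
          IsPartition (n + 1) P ∧ numAdjacencies (n + 1) P = 0}
      = bell n := by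
  classical
  haveI h1 : Finite {w : ℕ → ℕ // AdjProof.InRgs n w ∧ AdjProof.CycFree n w} :=
    Finite.of_equiv _ (AdjProof.partEquivAdj n)
  haveI h2 : Finite {w : ℕ → ℕ // AdjProof.InRgs (n+1) w ∧ AdjProof.CycFree (n+1) w} :=
    Finite.of_equiv _ (AdjProof.partEquivAdj (n+1))
  calc Nat.card {P : Finset (Finset (Fin n)) // IsPartition n P ∧ numAdjacencies n P = 0}
      + Nat.card {P : Finset (Finset (Fin (n + 1))) //
          IsPartition (n + 1) P ∧ numAdjacencies (n + 1) P = 0}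
      = Nat.card {w : ℕ → ℕ // AdjProof.InRgs n w ∧ AdjProof.CycFree n w}
        + Nat.card {w : ℕ → ℕ // AdjProof.InRgs (n+1) w ∧ AdjProof.CycFree (n+1) w} := by
        rw [Nat.card_congr (AdjProof.partEquivAdj n), Nat.card_congr (AdjProof.partEquivAdj (n+1))]
    _ = Nat.card ({w : ℕ → ℕ // AdjProof.InRgs n w ∧ AdjProof.CycFree n w} ⊕
        {w : ℕ → ℕ // AdjProof.InRgs (n+1) w ∧ AdjProof.CycFree (n+1) w}) :=
        (Nat.card_sum).symm
    _ = Nat.card {w : ℕ → ℕ // AdjProof.InRgs n w} :=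
        (Nat.card_congr (AdjProof.sumEquiv n hn)).symm
    _ = bell n := by
        rw [bell, Nat.card_congr (AdjProof.partEquiv n)]
end

section
/- The joint distribution of the number of singletons and the number of cyclic adjacencies is symmetric over set partitions of [n]: the number of partitions of [n] with exactly s singletons and a adjacencies equals the number with exactly a singletons and s adjacencies. -/
open Finset
open Fin.NatCast Fin.CommRing

section Dev
variable {n : ℕ}

open Classical in
/-- block of `x` in `P` (junk if not a partition) -/
noncomputable def blk (P : Finset (Finset (Fin n))) (x : Fin n) : Finset (Fin n) :=
  if h : ∃! B, B ∈ P ∧ x ∈ B then h.choose else ∅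

variable {P : Finset (Finset (Fin n))}

lemma blk_mem (hP : IsPartition n P) (x : Fin n) : blk P x ∈ P := by
  rw [blk, dif_pos (hP.2 x)]; exact (hP.2 x).choose_spec.1.1

lemma mem_blk (hP : IsPartition n P) (x : Fin n) : x ∈ blk P x := by
  rw [blk, dif_pos (hP.2 x)]; exact (hP.2 x).choose_spec.1.2

lemma blk_eq_of_mem (hP : IsPartition n P) {B : Finset (Fin n)} {x : Fin n} (hB : B ∈ P) (hx : x ∈ B) :
    B = blk P x := by
  rw [blk, dif_pos (hP.2 x)]
  exact (hP.2 x).choose_spec.2 B ⟨hB, hx⟩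

lemma blk_eq_blk_of_mem (hP : IsPartition n P) {x y : Fin n} (hy : y ∈ blk P x) : blk P y = blk P x :=
  (blk_eq_of_mem hP (blk_mem hP x) hy).symm

lemma image_blk (hP : IsPartition n P) : Finset.univ.image (blk P) = P := by
  ext B
  simp only [mem_image, mem_univ, true_and]
  constructor
  · rintro ⟨x, rfl⟩; exact blk_mem hP x
  · intro hB
    obtain ⟨x, hx⟩ := hP.1 B hB
    exact ⟨x, (blk_eq_of_mem hP hB hx).symm⟩

end Dev

section Dev2
variable {n : ℕ}

open Classical in
/-- set of singleton elements -/
noncomputable def Sset (P : Finset (Finset (Fin n))) : Finset (Fin n) :=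
  Finset.univ.filter (fun i => {i} ∈ P)

/-- set of adjacency positions -/
def Aset (P : Finset (Finset (Fin n))) : Finset (Fin n) :=
  Finset.univ.filter (fun i : Fin n => ∃ B ∈ P, i ∈ B ∧ cycNext i ∈ B)

lemma numAdjacencies_eq (P : Finset (Finset (Fin n))) :
    numAdjacencies n P = (Aset P).card := rfl

variable {P : Finset (Finset (Fin n))}

lemma mem_Sset {i : Fin n} : i ∈ Sset P ↔ ({i} : Finset (Fin n)) ∈ P := by
  simp [Sset]

lemma mem_Aset {i : Fin n} : i ∈ Aset P ↔ ∃ B ∈ P, i ∈ B ∧ cycNext i ∈ B := by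
  simp [Aset]

lemma mem_Sset_iff_blk (hP : IsPartition n P) {i : Fin n} :
    i ∈ Sset P ↔ blk P i = {i} := by
  rw [mem_Sset]
  constructor
  · intro h; exact (blk_eq_of_mem hP h (Finset.mem_singleton_self i)).symm
  · intro h; rw [← h]; exact blk_mem hP i

lemma mem_Aset_iff_blk (hP : IsPartition n P) {i : Fin n} :
    i ∈ Aset P ↔ cycNext i ∈ blk P i := by
  rw [mem_Aset]
  constructor
  · rintro ⟨B, hB, hi, hi'⟩; rwa [blk_eq_of_mem hP hB hi] at hi'
  · intro h; exact ⟨blk P i, blk_mem hP i, mem_blk hP i, h⟩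

lemma numSingletons_eq (hP : IsPartition n P) :
    numSingletons n P = (Sset P).card := by
  rw [numSingletons]
  symm
  apply Finset.card_bij (fun i _ => ({i} : Finset (Fin n)))
  · intro a ha
    simp only [Finset.mem_filter]
    exact ⟨mem_Sset.1 ha, Finset.card_singleton a⟩
  · intro a _ b _ h
    simpa using h
  · intro B hB
    rw [Finset.mem_filter] at hB
    obtain ⟨x, rfl⟩ := Finset.card_eq_one.1 hB.2
    exact ⟨x, mem_Sset.2 hB.1, rfl⟩

end Dev2

section Dev3
variable {n : ℕ} [NeZero n]

lemma cycNext_eq (i : Fin n) : cycNext i = i + 1 := by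
  apply Fin.ext
  rw [Fin.add_def]
  show (i.val + 1) % n = (i.val + (1 : Fin n).val) % n
  rw [Fin.val_one', Nat.add_mod, Nat.mod_eq_of_lt i.isLt]

open Classical in
/-- generic block function construction -/
noncomputable def mkBlk (T : Finset (Fin n)) (g : Fin n → Fin n)
    (P : Finset (Finset (Fin n))) (x : Fin n) : Finset (Fin n) :=
  if x ∈ T then {x}
  else Finset.univ.filter (fun y => y ∉ T ∧ blk P (g y) = blk P (g x))

noncomputable def build (T : Finset (Fin n)) (g : Fin n → Fin n)
    (P : Finset (Finset (Fin n))) : Finset (Finset (Fin n)) :=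
  Finset.univ.image (mkBlk T g P)

variable {T : Finset (Fin n)} {g : Fin n → Fin n} {P : Finset (Finset (Fin n))}

lemma mem_mkBlk_self (x : Fin n) : x ∈ mkBlk T g P x := by
  rw [mkBlk]
  split
  · exact Finset.mem_singleton_self x
  · next h => simp [h]

lemma mkBlk_eq_of_mem {x y : Fin n} (hy : y ∈ mkBlk T g P x) :
    mkBlk T g P y = mkBlk T g P x := by
  rw [mkBlk] at hy ⊢
  split at hy
  · next h => rw [Finset.mem_singleton] at hy; subst hy; simp [mkBlk, h]
  · next h =>
    simp only [Finset.mem_filter, Finset.mem_univ, true_and] at hy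
    rw [mkBlk, if_neg hy.1, if_neg h]
    ext z
    simp only [Finset.mem_filter, Finset.mem_univ, true_and, hy.2]

lemma isPartition_build : IsPartition n (build T g P) := by
  constructor
  · intro B hB
    rw [build, Finset.mem_image] at hB
    obtain ⟨x, _, rfl⟩ := hB
    exact ⟨x, mem_mkBlk_self x⟩
  · intro x
    refine ⟨mkBlk T g P x, ⟨Finset.mem_image_of_mem _ (Finset.mem_univ x), mem_mkBlk_self x⟩, ?_⟩
    rintro B ⟨hB, hxB⟩
    rw [build, Finset.mem_image] at hB
    obtain ⟨y, _, rfl⟩ := hB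
    exact (mkBlk_eq_of_mem hxB).symm

lemma blk_build (x : Fin n) : blk (build T g P) x = mkBlk T g P x :=
  (blk_eq_of_mem isPartition_build (Finset.mem_image_of_mem _ (Finset.mem_univ x))
    (mem_mkBlk_self x)).symm

lemma mkBlk_of_mem {x : Fin n} (hx : x ∈ T) : mkBlk T g P x = {x} := if_pos hx

lemma mkBlk_of_not_mem {x : Fin n} (hx : x ∉ T) :
    mkBlk T g P x = Finset.univ.filter (fun y => y ∉ T ∧ blk P (g y) = blk P (g x)) :=
  if_neg hx

end Dev3

section Dev4
variable {n : ℕ} [NeZero n]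

open Classical in
noncomputable def nextS (S : Finset (Fin n)) (x : Fin n) : Fin n :=
  if h : ∃ k : ℕ, x + (k : Fin n) ∉ S then x + ((Nat.find h : ℕ) : Fin n) else x

open Classical in
noncomputable def prevA (A : Finset (Fin n)) (x : Fin n) : Fin n :=
  if h : ∃ k : ℕ, (x - (k : Fin n)) - 1 ∉ A then x - ((Nat.find h : ℕ) : Fin n) else x

variable {S A : Finset (Fin n)} {x : Fin n}

open Classical

lemma exnS (hS : ∃ y, y ∉ S) (x : Fin n) : ∃ k : ℕ, x + (k : Fin n) ∉ S := by
  obtain ⟨y, hy⟩ := hS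
  exact ⟨(y - x).val, by rwa [Fin.cast_val_eq_self, add_sub_cancel]⟩

lemma exnA (hA : ∃ y, y - 1 ∉ A) (x : Fin n) : ∃ k : ℕ, (x - (k : Fin n)) - 1 ∉ A := by
  obtain ⟨y, hy⟩ := hA
  exact ⟨(x - y).val, by rwa [Fin.cast_val_eq_self, sub_sub_cancel]⟩

lemma nextS_def (hS : ∃ y, y ∉ S) :
    nextS S x = x + ((Nat.find (exnS hS x) : ℕ) : Fin n) := by
  rw [nextS, dif_pos (exnS hS x)]

lemma prevA_def (hA : ∃ y, y - 1 ∉ A) :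
    prevA A x = x - ((Nat.find (exnA hA x) : ℕ) : Fin n) := by
  rw [prevA, dif_pos (exnA hA x)]

lemma nextS_not_mem (hS : ∃ y, y ∉ S) : nextS S x ∉ S := by
  rw [nextS_def hS]; exact Nat.find_spec (exnS hS x)

lemma prevA_spec (hA : ∃ y, y - 1 ∉ A) : (prevA A x) - 1 ∉ A := by
  rw [prevA_def hA]; exact Nat.find_spec (exnA hA x)

lemma nextS_eq_self (hx : x ∉ S) : nextS S x = x := by
  rw [nextS]
  split
  · next h =>
    have : Nat.find h = 0 := Nat.find_eq_zero h |>.2 (by simpa using hx)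
    simp [this]
  · rfl

lemma prevA_eq_self (hx : x - 1 ∉ A) : prevA A x = x := by
  rw [prevA]
  split
  · next h =>
    have : Nat.find h = 0 := Nat.find_eq_zero h |>.2 (by simpa using hx)
    simp [this]
  · rfl

lemma nextS_find_succ (hS : ∃ y, y ∉ S) (hx : x ∈ S) :
    Nat.find (exnS hS x) = Nat.find (exnS hS (x + 1)) + 1 := by
  rw [Nat.find_eq_iff]
  constructor
  · have := Nat.find_spec (exnS hS (x + 1))
    rwa [show x + ((Nat.find (exnS hS (x+1)) + 1 : ℕ) : Fin n)
        = (x + 1) + ((Nat.find (exnS hS (x+1)) : ℕ) : Fin n) by push_cast; ring]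
  · intro j hj
    match j with
    | 0 => simpa using hx
    | (i+1) =>
      have hi : i < Nat.find (exnS hS (x+1)) := by omega
      have := Nat.find_min (exnS hS (x+1)) hi
      rw [not_not] at this ⊢
      rwa [show x + ((i + 1 : ℕ) : Fin n) = (x + 1) + ((i : ℕ) : Fin n) by push_cast; ring]

lemma prevA_find_succ (hA : ∃ y, y - 1 ∉ A) (hx : x - 1 ∈ A) :
    Nat.find (exnA hA x) = Nat.find (exnA hA (x - 1)) + 1 := by
  rw [Nat.find_eq_iff]
  constructor
  · have := Nat.find_spec (exnA hA (x - 1))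
    rwa [show x - ((Nat.find (exnA hA (x-1)) + 1 : ℕ) : Fin n)
        = (x - 1) - ((Nat.find (exnA hA (x-1)) : ℕ) : Fin n) by push_cast; ring]
  · intro j hj
    match j with
    | 0 => simpa using hx
    | (i+1) =>
      have hi : i < Nat.find (exnA hA (x-1)) := by omega
      have := Nat.find_min (exnA hA (x-1)) hi
      rw [not_not] at this ⊢
      rwa [show x - ((i + 1 : ℕ) : Fin n) = (x - 1) - ((i : ℕ) : Fin n) by push_cast; ring]

lemma nextS_succ (hS : ∃ y, y ∉ S) (hx : x ∈ S) : nextS S x = nextS S (x + 1) := by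
  rw [nextS_def hS, nextS_def hS, nextS_find_succ hS hx]
  push_cast; ring

lemma prevA_succ (hA : ∃ y, y - 1 ∉ A) (hx : x - 1 ∈ A) : prevA A x = prevA A (x - 1) := by
  rw [prevA_def hA, prevA_def hA, prevA_find_succ hA hx]
  push_cast; ring

lemma nextS_induction (hS : ∃ y, y ∉ S) (motive : Fin n → Prop)
    (h0 : ∀ x, x ∉ S → motive x)
    (hstep : ∀ x, x ∈ S → motive (x + 1) → motive x) : ∀ x, motive x := by
  suffices h : ∀ k x, Nat.find (exnS hS x) ≤ k → motive x by
    intro x; exact h _ x le_rfl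
  intro k
  induction k with
  | zero =>
    intro x hx
    apply h0
    have := Nat.find_eq_zero (exnS hS x) |>.1 (Nat.le_zero.1 hx)
    simpa using this
  | succ k ih =>
    intro x hx
    by_cases hxS : x ∈ S
    · exact hstep x hxS (ih (x + 1) (by have := nextS_find_succ hS hxS; omega))
    · exact h0 x hxS

lemma prevA_induction (hA : ∃ y, y - 1 ∉ A) (motive : Fin n → Prop)
    (h0 : ∀ x, x - 1 ∉ A → motive x)
    (hstep : ∀ x, x - 1 ∈ A → motive (x - 1) → motive x) : ∀ x, motive x := by
  suffices h : ∀ k x, Nat.find (exnA hA x) ≤ k → motive x by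
    intro x; exact h _ x le_rfl
  intro k
  induction k with
  | zero =>
    intro x hx
    apply h0
    have := Nat.find_eq_zero (exnA hA x) |>.1 (Nat.le_zero.1 hx)
    simpa using this
  | succ k ih =>
    intro x hx
    by_cases hxA : x - 1 ∈ A
    · exact hstep x hxA (ih (x - 1) (by have := prevA_find_succ hA hxA; omega))
    · exact h0 x hxA

end Dev4

section Dev5
variable {n : ℕ} [NeZero n]

/-- shift a finset by one -/
def sh (A : Finset (Fin n)) : Finset (Fin n) := A.image (· + 1)

lemma mem_sh {A : Finset (Fin n)} {x : Fin n} : x ∈ sh A ↔ x - 1 ∈ A := by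
  simp only [sh, Finset.mem_image]
  constructor
  · rintro ⟨a, ha, rfl⟩; simpa using ha
  · intro h; exact ⟨x - 1, h, by simp⟩

variable {S A : Finset (Fin n)} {P Q : Finset (Finset (Fin n))}

lemma blk_prevA (hA : ∃ y, y - 1 ∉ A) (hP : IsPartition n P) (hPA : A ⊆ Aset P) :
    ∀ y, blk P (prevA A y) = blk P y := by
  apply prevA_induction hA (motive := fun y => blk P (prevA A y) = blk P y)
  · intro x hx; rw [prevA_eq_self hx]
  · intro x hx ih
    rw [prevA_succ hA hx, ih]
    have h1 : cycNext (x - 1) ∈ blk P (x - 1) := (mem_Aset_iff_blk hP).1 (hPA hx)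
    rw [cycNext_eq, sub_add_cancel] at h1
    exact (blk_eq_blk_of_mem hP h1).symm

lemma prevA_not_S (hA : ∃ y, y - 1 ∉ A) (hAS : ∀ i ∈ A, i ∉ S) :
    ∀ y, y ∉ S → prevA A y ∉ S := by
  apply prevA_induction hA (motive := fun y => y ∉ S → prevA A y ∉ S)
  · intro x hx _; rwa [prevA_eq_self hx]
  · intro x hx ih _
    rw [prevA_succ hA hx]
    exact ih (hAS _ hx)

lemma blk_nextS (hS : ∃ y, y ∉ S) (hQ : IsPartition n Q) (hQA : S ⊆ Aset Q) :
    ∀ y, blk Q (nextS S y) = blk Q y := by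
  apply nextS_induction hS (motive := fun y => blk Q (nextS S y) = blk Q y)
  · intro x hx; rw [nextS_eq_self hx]
  · intro x hx ih
    rw [nextS_succ hS hx, ih]
    have h1 : cycNext x ∈ blk Q x := (mem_Aset_iff_blk hQ).1 (hQA hx)
    rw [cycNext_eq] at h1
    exact blk_eq_blk_of_mem hQ h1

lemma nextS_not_sh (hS : ∃ y, y ∉ S) (hSA : ∀ i ∈ S, i ∉ A) :
    ∀ y, y ∉ sh A → nextS S y ∉ sh A := by
  apply nextS_induction hS (motive := fun y => y ∉ sh A → nextS S y ∉ sh A)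
  · intro x hx _; rwa [nextS_eq_self hx]
  · intro x hx ih _
    rw [nextS_succ hS hx]
    apply ih
    rw [mem_sh, add_sub_cancel_right]
    exact hSA _ hx

lemma Sset_build {T : Finset (Fin n)} {g : Fin n → Fin n} {x : Fin n} (hx : x ∈ T) :
    x ∈ Sset (build T g P) := by
  rw [mem_Sset, build]
  rw [← mkBlk_of_mem (g := g) (P := P) hx]
  exact Finset.mem_image_of_mem _ (Finset.mem_univ x)

/-- the forward map lands in the correct set -/
lemma Psi_spec (hP : IsPartition n P) (hPS : S ⊆ Sset P)
    (hS : ∃ y, y ∉ S) (hSA : ∀ i ∈ S, i ∉ A) (hSA1 : ∀ i ∈ S, i - 1 ∉ A) :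
    IsPartition n (build (sh A) (nextS S) P) ∧
      sh A ⊆ Sset (build (sh A) (nextS S) P) ∧
      S ⊆ Aset (build (sh A) (nextS S) P) := by
  refine ⟨isPartition_build, fun x hx => Sset_build hx, fun i hi => ?_⟩
  rw [mem_Aset_iff_blk isPartition_build, cycNext_eq, blk_build,
    mkBlk_of_not_mem (by rw [mem_sh]; exact hSA1 _ hi)]
  simp only [Finset.mem_filter, Finset.mem_univ, true_and]
  constructor
  · rw [mem_sh, add_sub_cancel_right]; exact hSA _ hi
  · rw [nextS_succ hS hi]

/-- the backward map lands in the correct set -/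
lemma Phi_spec (hQ : IsPartition n Q) (hQS : sh A ⊆ Sset Q)
    (hA : ∃ y, y - 1 ∉ A) (hAS : ∀ i ∈ A, i ∉ S) (hAS1 : ∀ i ∈ A, i + 1 ∉ S) :
    IsPartition n (build S (prevA A) Q) ∧
      S ⊆ Sset (build S (prevA A) Q) ∧
      A ⊆ Aset (build S (prevA A) Q) := by
  refine ⟨isPartition_build, fun x hx => Sset_build hx, fun i hi => ?_⟩
  rw [mem_Aset_iff_blk isPartition_build, cycNext_eq, blk_build,
    mkBlk_of_not_mem (hAS _ hi)]
  simp only [Finset.mem_filter, Finset.mem_univ, true_and]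
  constructor
  · exact hAS1 _ hi
  · rw [prevA_succ hA (by rwa [add_sub_cancel_right]), add_sub_cancel_right]

end Dev5

section Dev6
variable {n : ℕ} [NeZero n] {S A : Finset (Fin n)} {P Q : Finset (Finset (Fin n))}

lemma roundtrip1 (hP : IsPartition n P) (hPS : S ⊆ Sset P) (hPA : A ⊆ Aset P)
    (hS : ∃ y, y ∉ S) (hA : ∃ y, y - 1 ∉ A) (hAS : ∀ i ∈ A, i ∉ S) :
    build S (prevA A) (build (sh A) (nextS S) P) = P := by
  set Q := build (sh A) (nextS S) P with hQdef
  have hblkQ : ∀ y, y ∉ S → blk Q (prevA A y) =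
      Finset.univ.filter (fun z => z ∉ sh A ∧ blk P (nextS S z) = blk P y) := by
    intro y hy
    rw [hQdef, blk_build, mkBlk_of_not_mem (show prevA A y ∉ sh A by
      rw [mem_sh]; exact prevA_spec hA)]
    have h2 : blk P (nextS S (prevA A y)) = blk P y := by
      rw [nextS_eq_self (prevA_not_S hA hAS y hy), blk_prevA hA hP hPA]
    simp only [h2]
  have key : ∀ x, mkBlk S (prevA A) Q x = blk P x := by
    intro x
    by_cases hxS : x ∈ S
    · rw [mkBlk_of_mem hxS]
      exact ((mem_Sset_iff_blk hP).1 (hPS hxS)).symm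
    · rw [mkBlk_of_not_mem hxS]
      ext y
      simp only [Finset.mem_filter, Finset.mem_univ, true_and]
      constructor
      · rintro ⟨hyS, heq⟩
        rw [hblkQ y hyS, hblkQ x hxS] at heq
        have hmem : prevA A y ∈ Finset.univ.filter
            (fun z => z ∉ sh A ∧ blk P (nextS S z) = blk P y) := by
          simp only [Finset.mem_filter, Finset.mem_univ, true_and]
          refine ⟨by rw [mem_sh]; exact prevA_spec hA, ?_⟩
          rw [nextS_eq_self (prevA_not_S hA hAS y hyS), blk_prevA hA hP hPA]
        rw [heq] at hmem
        simp only [Finset.mem_filter, Finset.mem_univ, true_and] at hmem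
        rw [nextS_eq_self (prevA_not_S hA hAS y hyS), blk_prevA hA hP hPA] at hmem
        rw [← hmem.2]
        exact mem_blk hP y
      · intro hy
        have hbb : blk P y = blk P x := blk_eq_blk_of_mem hP hy
        have hyS : y ∉ S := by
          intro hyS'
          have h1 : blk P y = {y} := (mem_Sset_iff_blk hP).1 (hPS hyS')
          have : x ∈ ({y} : Finset (Fin n)) := by
            rw [← h1, hbb]; exact mem_blk hP x
          rw [Finset.mem_singleton] at this
          exact hxS (this ▸ hyS')
        exact ⟨hyS, by rw [hblkQ y hyS, hblkQ x hxS, hbb]⟩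
  rw [build, Finset.image_congr (g := blk P) (fun x _ => key x), image_blk hP]

lemma roundtrip2 (hQ : IsPartition n Q) (hQS : sh A ⊆ Sset Q) (hQA : S ⊆ Aset Q)
    (hS : ∃ y, y ∉ S) (hA : ∃ y, y - 1 ∉ A) (hSA : ∀ i ∈ S, i ∉ A) :
    build (sh A) (nextS S) (build S (prevA A) Q) = Q := by
  set P := build S (prevA A) Q with hPdef
  have hblkP : ∀ y, y ∉ sh A → blk P (nextS S y) =
      Finset.univ.filter (fun z => z ∉ S ∧ blk Q (prevA A z) = blk Q y) := by
    intro y hy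
    rw [hPdef, blk_build, mkBlk_of_not_mem (nextS_not_mem hS)]
    have h2 : blk Q (prevA A (nextS S y)) = blk Q y := by
      rw [prevA_eq_self (by
        have := nextS_not_sh hS hSA y hy
        rwa [mem_sh] at this), blk_nextS hS hQ hQA]
    simp only [h2]
  have key : ∀ x, mkBlk (sh A) (nextS S) P x = blk Q x := by
    intro x
    by_cases hxA : x ∈ sh A
    · rw [mkBlk_of_mem hxA]
      exact ((mem_Sset_iff_blk hQ).1 (hQS hxA)).symm
    · rw [mkBlk_of_not_mem hxA]
      ext y
      simp only [Finset.mem_filter, Finset.mem_univ, true_and]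
      constructor
      · rintro ⟨hyA, heq⟩
        rw [hblkP y hyA, hblkP x hxA] at heq
        have hmem : nextS S y ∈ Finset.univ.filter
            (fun z => z ∉ S ∧ blk Q (prevA A z) = blk Q y) := by
          simp only [Finset.mem_filter, Finset.mem_univ, true_and]
          refine ⟨nextS_not_mem hS, ?_⟩
          rw [prevA_eq_self (by
            have := nextS_not_sh hS hSA y hyA
            rwa [mem_sh] at this), blk_nextS hS hQ hQA]
        rw [heq] at hmem
        simp only [Finset.mem_filter, Finset.mem_univ, true_and] at hmem
        rw [prevA_eq_self (by
            have := nextS_not_sh hS hSA y hyA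
            rwa [mem_sh] at this), blk_nextS hS hQ hQA] at hmem
        rw [← hmem.2]
        exact mem_blk hQ y
      · intro hy
        have hbb : blk Q y = blk Q x := blk_eq_blk_of_mem hQ hy
        have hyA : y ∉ sh A := by
          intro hyA'
          have h1 : blk Q y = {y} := (mem_Sset_iff_blk hQ).1 (hQS hyA')
          have : x ∈ ({y} : Finset (Fin n)) := by
            rw [← h1, hbb]; exact mem_blk hQ x
          rw [Finset.mem_singleton] at this
          exact hxA (this ▸ hyA')
        exact ⟨hyA, by rw [hblkP y hyA, hblkP x hxA, hbb]⟩
  rw [build, Finset.image_congr (g := blk Q) (fun x _ => key x), image_blk hQ]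

end Dev6

section Dev7
variable {n : ℕ} [NeZero n]

open Classical in
noncomputable def Lcard (n : ℕ) (S A : Finset (Fin n)) : ℕ :=
  (Finset.univ.filter (fun P => IsPartition n P ∧ S ⊆ Sset P ∧ A ⊆ Aset P)).card

open Classical in
noncomputable def Mcard (n : ℕ) (S A : Finset (Fin n)) : ℕ :=
  (Finset.univ.filter (fun P => IsPartition n P ∧ Sset P = S ∧ Aset P = A)).card

variable {S A : Finset (Fin n)}

lemma fin_one_ne_zero' (hn : 2 ≤ n) : (1 : Fin n) ≠ 0 := by
  intro h
  have h1 : (1 : Fin n).val = 1 % n := Fin.val_one' n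
  rw [h, Nat.mod_eq_of_lt hn] at h1
  simp at h1

lemma fin_succ_ne_self (hn : 2 ≤ n) (i : Fin n) : i + 1 ≠ i := by
  intro h
  have : i + 1 = i + 0 := by rw [add_zero]; exact h
  exact fin_one_ne_zero' hn (add_left_cancel this)

open Classical in
lemma Lcard_main (hS : ∃ y, y ∉ S) (hA : ∃ y, y - 1 ∉ A)
    (hSA : ∀ i ∈ S, i ∉ A) (hSA1 : ∀ i ∈ S, i - 1 ∉ A) :
    Lcard n S A = Lcard n (sh A) S := by
  have hAS : ∀ i ∈ A, i ∉ S := fun i hi hi' => hSA i hi' hi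
  have hAS1 : ∀ i ∈ A, i + 1 ∉ S := fun i hi hi' => hSA1 _ hi' (by rwa [add_sub_cancel_right])
  rw [Lcard, Lcard]
  apply Finset.card_bij' (i := fun P _ => build (sh A) (nextS S) P)
    (j := fun Q _ => build S (prevA A) Q)
  · intro P hP
    simp only [Finset.mem_filter, Finset.mem_univ, true_and] at hP ⊢
    obtain ⟨hP1, hP2, hP3⟩ := hP
    exact Psi_spec hP1 hP2 hS hSA hSA1
  · intro Q hQ
    simp only [Finset.mem_filter, Finset.mem_univ, true_and] at hQ ⊢
    obtain ⟨hQ1, hQ2, hQ3⟩ := hQ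
    exact Phi_spec hQ1 hQ2 hA hAS hAS1
  · intro P hP
    simp only [Finset.mem_filter, Finset.mem_univ, true_and] at hP
    exact roundtrip1 hP.1 hP.2.1 hP.2.2 hS hA hAS
  · intro Q hQ
    simp only [Finset.mem_filter, Finset.mem_univ, true_and] at hQ
    exact roundtrip2 hQ.1 hQ.2.1 hQ.2.2 hS hA hSA

open Classical in
lemma Lcard_incompat (hn : 2 ≤ n) {i : Fin n} (hiS : i ∈ S) (hiA : i ∈ A ∨ i - 1 ∈ A) :
    Lcard n S A = 0 ∧ Lcard n (sh A) S = 0 := by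
  constructor
  · rw [Lcard, Finset.card_eq_zero, Finset.filter_eq_empty_iff]
    rintro P - ⟨hP, hPS, hPA⟩
    have hsing : blk P i = {i} := (mem_Sset_iff_blk hP).1 (hPS hiS)
    rcases hiA with h | h
    · have : cycNext i ∈ blk P i := (mem_Aset_iff_blk hP).1 (hPA h)
      rw [cycNext_eq, hsing, Finset.mem_singleton] at this
      exact fin_succ_ne_self hn i this
    · have h1 : cycNext (i-1) ∈ blk P (i-1) := (mem_Aset_iff_blk hP).1 (hPA h)
      rw [cycNext_eq, sub_add_cancel] at h1
      have h2 : blk P i = blk P (i - 1) := blk_eq_blk_of_mem hP h1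
      have h3 : i - 1 ∈ blk P i := by rw [h2]; exact mem_blk hP (i-1)
      rw [hsing, Finset.mem_singleton] at h3
      apply fin_succ_ne_self hn (i - 1)
      rw [sub_add_cancel, h3]
  · rw [Lcard, Finset.card_eq_zero, Finset.filter_eq_empty_iff]
    rintro Q - ⟨hQ, hQS, hQA⟩
    rcases hiA with h | h
    · have hsing : blk Q (i+1) = {i+1} := (mem_Sset_iff_blk hQ).1 (hQS (by
        rw [mem_sh, add_sub_cancel_right]; exact h))
      have h1 : cycNext i ∈ blk Q i := (mem_Aset_iff_blk hQ).1 (hQA hiS)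
      rw [cycNext_eq] at h1
      have h2 : blk Q (i+1) = blk Q i := blk_eq_blk_of_mem hQ h1
      have h3 : i ∈ blk Q (i+1) := by rw [h2]; exact mem_blk hQ i
      rw [hsing, Finset.mem_singleton] at h3
      exact fin_succ_ne_self hn i h3.symm
    · have hsing : blk Q i = {i} := (mem_Sset_iff_blk hQ).1 (hQS (by rw [mem_sh]; exact h))
      have h1 : cycNext i ∈ blk Q i := (mem_Aset_iff_blk hQ).1 (hQA hiS)
      rw [cycNext_eq, hsing, Finset.mem_singleton] at h1
      exact fin_succ_ne_self hn i h1

open Classical in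
lemma Lcard_univ_empty : Lcard n Finset.univ ∅ = 1 := by
  classical
  rw [Lcard, Finset.card_eq_one]
  have hbuild : (Finset.univ.image (fun i : Fin n => ({i} : Finset (Fin n))))
      = build Finset.univ id ∅ := by
    rw [build]
    apply Finset.image_congr
    intro x _
    rw [mkBlk_of_mem (Finset.mem_univ x)]
  refine ⟨Finset.univ.image (fun i : Fin n => ({i} : Finset (Fin n))), ?_⟩
  ext P
  simp only [Finset.mem_filter, Finset.mem_univ, true_and, Finset.mem_singleton]
  constructor
  · rintro ⟨hP, hPS, -⟩
    have key : ∀ x, blk P x = {x} := fun x => (mem_Sset_iff_blk hP).1 (hPS (Finset.mem_univ x))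
    rw [← image_blk hP]
    apply Finset.image_congr
    intro x _
    exact key x
  · rintro rfl
    rw [hbuild]
    exact ⟨isPartition_build, fun x _ => Sset_build (Finset.mem_univ x), by simp⟩

open Classical in
lemma Lcard_empty_univ : Lcard n ∅ Finset.univ = 1 := by
  classical
  rw [Lcard, Finset.card_eq_one]
  refine ⟨{Finset.univ}, ?_⟩
  ext P
  simp only [Finset.mem_filter, Finset.mem_univ, true_and, Finset.mem_singleton]
  constructor
  · rintro ⟨hP, -, hPA⟩
    have hadj : ∀ i : Fin n, i + 1 ∈ blk P i := by
      intro i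
      have := (mem_Aset_iff_blk hP).1 (hPA (Finset.mem_univ i))
      rwa [cycNext_eq] at this
    have hcast : ∀ k : ℕ, blk P ((k : ℕ) : Fin n) = blk P 0 := by
      intro k
      induction k with
      | zero => norm_num
      | succ k ih =>
        rw [show (((k+1 : ℕ)) : Fin n) = ((k : ℕ) : Fin n) + 1 by push_cast; ring]
        rw [← ih]
        exact blk_eq_blk_of_mem hP (hadj _)
    have hall : ∀ x : Fin n, blk P x = blk P 0 := by
      intro x
      have := hcast x.val
      rwa [Fin.cast_val_eq_self] at this
    have huniv : blk P 0 = Finset.univ := by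
      apply Finset.eq_univ_of_forall
      intro x
      rw [← hall x]
      exact mem_blk hP x
    rw [← image_blk hP, Finset.image_congr (g := fun _ => Finset.univ)
      (fun x _ => by rw [hall x, huniv]), Finset.image_const Finset.univ_nonempty]
  · rintro rfl
    refine ⟨⟨?_, ?_⟩, ?_, ?_⟩
    · intro B hB
      rw [Finset.mem_singleton] at hB
      subst hB
      exact Finset.univ_nonempty
    · intro x
      exact ⟨Finset.univ, ⟨Finset.mem_singleton_self _, Finset.mem_univ x⟩,
        by rintro B ⟨hB, -⟩; rwa [Finset.mem_singleton] at hB⟩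
    · simp
    · intro i _
      rw [mem_Aset]
      exact ⟨Finset.univ, Finset.mem_singleton_self _, Finset.mem_univ _, Finset.mem_univ _⟩

end Dev7

section Dev8
variable {n : ℕ} [NeZero n]

open Classical in
lemma Lcard_one (S A : Finset (Fin 1)) :
    Lcard 1 S A = (Finset.univ.filter (fun P => IsPartition 1 P)).card := by
  rw [Lcard]
  congr 1
  apply Finset.filter_congr
  intro P _
  constructor
  · exact fun h => h.1
  · intro hP
    have hblk : ∀ i : Fin 1, blk P i = {i} := by
      intro i
      ext y
      simp only [Finset.mem_singleton]
      constructor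
      · intro _; exact Subsingleton.elim y i
      · intro h; subst h; exact mem_blk hP y
    refine ⟨hP, ?_, ?_⟩
    · intro i _
      rw [mem_Sset_iff_blk hP]
      exact hblk i
    · intro i _
      rw [mem_Aset_iff_blk hP, hblk i, Finset.mem_singleton]
      exact Subsingleton.elim _ i
  
lemma sh_empty : sh (∅ : Finset (Fin n)) = ∅ := by simp [sh]

lemma sh_univ : sh (Finset.univ : Finset (Fin n)) = Finset.univ := by
  apply Finset.eq_univ_of_forall
  intro x
  rw [mem_sh]
  exact Finset.mem_univ _

lemma Lcard_symm (S A : Finset (Fin n)) : Lcard n S A = Lcard n (sh A) S := by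
  by_cases hn1 : n = 1
  · subst hn1
    rw [Lcard_one, Lcard_one]
  have hn : 2 ≤ n := by
    have := NeZero.pos n
    omega
  by_cases hcompat : ∀ i ∈ S, i ∉ A ∧ i - 1 ∉ A
  · by_cases hSu : S = Finset.univ
    · have hAe : A = ∅ := by
        rw [Finset.eq_empty_iff_forall_notMem]
        intro i hi
        exact (hcompat i (hSu ▸ Finset.mem_univ i)).1 hi
      subst hSu; subst hAe
      rw [sh_empty, Lcard_univ_empty, Lcard_empty_univ]
    by_cases hAu : A = Finset.univ
    · have hSe : S = ∅ := by
        rw [Finset.eq_empty_iff_forall_notMem]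
        intro i hi
        exact (hcompat i hi).1 (hAu ▸ Finset.mem_univ i)
      subst hAu; subst hSe
      rw [sh_univ, Lcard_empty_univ, Lcard_univ_empty]
    · have hS : ∃ y, y ∉ S := by
        by_contra h
        push_neg at h
        exact hSu (Finset.eq_univ_of_forall h)
      have hA : ∃ y, y - 1 ∉ A := by
        have : ∃ z, z ∉ A := by
          by_contra h
          push_neg at h
          exact hAu (Finset.eq_univ_of_forall h)
        obtain ⟨z, hz⟩ := this
        exact ⟨z + 1, by rwa [add_sub_cancel_right]⟩
      exact Lcard_main hS hA (fun i hi => (hcompat i hi).1) (fun i hi => (hcompat i hi).2)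
  · push_neg at hcompat
    obtain ⟨i, hiS, hiA⟩ := hcompat
    have hiA' : i ∈ A ∨ i - 1 ∈ A := by
      by_cases h : i ∈ A
      · exact Or.inl h
      · exact Or.inr (hiA h)
    obtain ⟨h1, h2⟩ := Lcard_incompat hn hiS hiA'
    rw [h1, h2]

end Dev8

section Dev9
variable {n : ℕ} [NeZero n]

open Classical

noncomputable def idx (n : ℕ) (S A : Finset (Fin n)) :
    Finset (Finset (Fin n) × Finset (Fin n)) :=
  Finset.univ.filter (fun q => S ⊆ q.1 ∧ A ⊆ q.2)

lemma Lcard_eq_sum (S A : Finset (Fin n)) :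
    Lcard n S A = ∑ q ∈ idx n S A, Mcard n q.1 q.2 := by
  rw [Lcard]
  rw [Finset.card_eq_sum_card_fiberwise
    (f := fun P => (Sset P, Aset P)) (t := idx n S A) (by
      intro P hP
      simp only [idx, Finset.mem_coe, Finset.mem_filter, Finset.mem_univ, true_and] at hP ⊢
      exact ⟨hP.2.1, hP.2.2⟩)]
  apply Finset.sum_congr rfl
  intro q hq
  simp only [idx, Finset.mem_filter, Finset.mem_univ, true_and] at hq
  rw [Mcard, Finset.filter_filter]
  congr 1
  apply Finset.filter_congr
  intro P _
  simp only [Prod.ext_iff]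
  constructor
  · rintro ⟨⟨hP, -, -⟩, h1, h2⟩
    exact ⟨hP, h1, h2⟩
  · rintro ⟨hP, h1, h2⟩
    exact ⟨⟨hP, h1 ▸ hq.1, h2 ▸ hq.2⟩, h1, h2⟩

noncomputable def shInv (A : Finset (Fin n)) : Finset (Fin n) := A.image (· - 1)

lemma mem_shInv {A : Finset (Fin n)} {x : Fin n} : x ∈ shInv A ↔ x + 1 ∈ A := by
  simp only [shInv, Finset.mem_image]
  constructor
  · rintro ⟨a, ha, rfl⟩; rwa [sub_add_cancel]
  · intro h; exact ⟨x + 1, h, by rw [add_sub_cancel_right]⟩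

lemma shInv_sh (A : Finset (Fin n)) : shInv (sh A) = A := by
  ext x; rw [mem_shInv, mem_sh, add_sub_cancel_right]

lemma sh_shInv (A : Finset (Fin n)) : sh (shInv A) = A := by
  ext x; rw [mem_sh, mem_shInv, sub_add_cancel]

lemma sh_subset {A B : Finset (Fin n)} (h : A ⊆ B) : sh A ⊆ sh B :=
  Finset.image_subset_image h

lemma shInv_subset {A B : Finset (Fin n)} (h : A ⊆ B) : shInv A ⊆ shInv B :=
  Finset.image_subset_image h

lemma sh_card (A : Finset (Fin n)) : (sh A).card = A.card :=
  Finset.card_image_of_injective _ (fun a b h => by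
    have : a + 1 - 1 = b + 1 - 1 := by rw [h]
    simpa [add_sub_cancel_right] using this)

lemma Mcard_symm_aux : ∀ (k : ℕ) (S A : Finset (Fin n)),
    Sᶜ.card + Aᶜ.card ≤ k → Mcard n S A = Mcard n (sh A) S := by
  intro k
  induction k with
  | zero =>
    intro S A h
    have hS : Sᶜ = ∅ := Finset.card_eq_zero.1 (by omega)
    have hA : Aᶜ = ∅ := Finset.card_eq_zero.1 (by omega)
    have hS' : S = Finset.univ := by
      rwa [← Finset.compl_eq_empty_iff]
    have hA' : A = Finset.univ := by
      rwa [← Finset.compl_eq_empty_iff]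
    subst hS'; subst hA'
    rw [sh_univ]
  | succ k ih =>
    intro S A h
    have hmem : (S, A) ∈ idx n S A := by
      simp only [idx, Finset.mem_filter, Finset.mem_univ, true_and]
      exact ⟨subset_rfl, subset_rfl⟩
    have hmem' : (sh A, S) ∈ idx n (sh A) S := by
      simp only [idx, Finset.mem_filter, Finset.mem_univ, true_and]
      exact ⟨subset_rfl, subset_rfl⟩
    have hL1 := Lcard_eq_sum S A
    have hL2 := Lcard_eq_sum (sh A) S
    rw [← Finset.add_sum_erase _ _ hmem] at hL1
    rw [← Finset.add_sum_erase _ _ hmem'] at hL2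
    have hsum : ∑ q ∈ (idx n S A).erase (S, A), Mcard n q.1 q.2
        = ∑ q ∈ (idx n (sh A) S).erase (sh A, S), Mcard n q.1 q.2 := by
      refine Finset.sum_bij' (fun q _ => (sh q.2, q.1)) (fun q _ => (q.2, shInv q.1))
        ?hi ?hj ?left ?right ?term
      case hi =>
        intro q hq
        simp only [Finset.mem_erase, idx, Finset.mem_filter, Finset.mem_univ, true_and] at hq ⊢
        refine ⟨?_, sh_subset hq.2.2, hq.2.1⟩
        intro heq
        rw [Prod.mk.injEq] at heq
        exact hq.1 (Prod.ext_iff.2 ⟨heq.2, by rw [← shInv_sh q.2, heq.1, shInv_sh]⟩)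
      case hj =>
        intro q hq
        simp only [Finset.mem_erase, idx, Finset.mem_filter, Finset.mem_univ, true_and] at hq ⊢
        refine ⟨?_, hq.2.2, by
          have := shInv_subset hq.2.1
          rwa [shInv_sh] at this⟩
        intro heq
        rw [Prod.mk.injEq] at heq
        exact hq.1 (Prod.ext_iff.2 ⟨by rw [← sh_shInv q.1, heq.2], heq.1⟩)
      case left =>
        intro q hq
        simp [shInv_sh]
      case right =>
        intro q hq
        simp [sh_shInv]
      case term =>
        intro q hq
        simp only [Finset.mem_erase, idx, Finset.mem_filter, Finset.mem_univ, true_and] at hq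
        apply ih
        have h1 : S.card ≤ q.1.card := Finset.card_le_card hq.2.1
        have h2 : A.card ≤ q.2.card := Finset.card_le_card hq.2.2
        have h3 : S.card + A.card < q.1.card + q.2.card := by
          by_contra hcon
          push_neg at hcon
          have e1 : S.card = q.1.card := by omega
          have e2 : A.card = q.2.card := by omega
          exact hq.1 (Prod.ext_iff.2 ⟨(Finset.eq_of_subset_of_card_le hq.2.1 (le_of_eq e1.symm)).symm,
            (Finset.eq_of_subset_of_card_le hq.2.2 (le_of_eq e2.symm)).symm⟩)
        have c1 := Finset.card_compl q.1
        have c2 := Finset.card_compl q.2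
        have c3 := Finset.card_compl S
        have c4 := Finset.card_compl A
        have d1 : q.1.card ≤ Fintype.card (Fin n) := Finset.card_le_univ q.1
        have d2 : q.2.card ≤ Fintype.card (Fin n) := Finset.card_le_univ q.2
        omega
    have hL1' : Lcard n S A = Mcard n S A
        + ∑ q ∈ (idx n S A).erase (S, A), Mcard n q.1 q.2 := hL1
    have hL2' : Lcard n (sh A) S = Mcard n (sh A) S
        + ∑ q ∈ (idx n (sh A) S).erase (sh A, S), Mcard n q.1 q.2 := hL2
    have hmain := Lcard_symm S A
    rw [hL1', hL2', hsum] at hmain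
    omega

lemma Mcard_symm (S A : Finset (Fin n)) : Mcard n S A = Mcard n (sh A) S :=
  Mcard_symm_aux (Sᶜ.card + Aᶜ.card) S A le_rfl

end Dev9

section Dev10
variable {n : ℕ} [NeZero n]

open Classical in
noncomputable def Tcard (n : ℕ) (s a : ℕ) : ℕ :=
  (Finset.univ.filter (fun P =>
    IsPartition n P ∧ numSingletons n P = s ∧ numAdjacencies n P = a)).card

open Classical in
lemma Tcard_eq_sum (s a : ℕ) :
    Tcard n s a = ∑ q ∈ Finset.univ.filter
      (fun q : Finset (Fin n) × Finset (Fin n) => q.1.card = s ∧ q.2.card = a),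
      Mcard n q.1 q.2 := by
  rw [Tcard]
  rw [Finset.card_eq_sum_card_fiberwise (f := fun P => (Sset P, Aset P))
    (t := Finset.univ.filter
      (fun q : Finset (Fin n) × Finset (Fin n) => q.1.card = s ∧ q.2.card = a)) (by
      intro P hP
      simp only [Finset.mem_coe, Finset.mem_filter, Finset.mem_univ, true_and] at hP ⊢
      exact ⟨(numSingletons_eq hP.1) ▸ hP.2.1, (numAdjacencies_eq P) ▸ hP.2.2⟩)]
  apply Finset.sum_congr rfl
  intro q hq
  simp only [Finset.mem_filter, Finset.mem_univ, true_and] at hq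
  rw [Mcard, Finset.filter_filter]
  congr 1
  apply Finset.filter_congr
  intro P _
  constructor
  · rintro ⟨⟨hP, -, -⟩, heq⟩
    rw [Prod.mk.injEq] at heq
    exact ⟨hP, heq.1, heq.2⟩
  · rintro ⟨hP, h1, h2⟩
    refine ⟨⟨hP, ?_, ?_⟩, by rw [Prod.mk.injEq]; exact ⟨h1, h2⟩⟩
    · rw [numSingletons_eq hP, h1, hq.1]
    · rw [numAdjacencies_eq, h2, hq.2]

open Classical in
lemma Tcard_symm (s a : ℕ) : Tcard n s a = Tcard n a s := by
  rw [Tcard_eq_sum, Tcard_eq_sum]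
  refine Finset.sum_bij' (fun q _ => (sh q.2, q.1)) (fun q _ => (q.2, shInv q.1))
    ?hi ?hj ?left ?right ?term
  case hi =>
    intro q hq
    simp only [Finset.mem_filter, Finset.mem_univ, true_and] at hq ⊢
    exact ⟨by rw [sh_card]; exact hq.2, hq.1⟩
  case hj =>
    intro q hq
    simp only [Finset.mem_filter, Finset.mem_univ, true_and] at hq ⊢
    refine ⟨hq.2, ?_⟩
    rw [← sh_card (shInv q.1), sh_shInv]
    exact hq.1
  case left =>
    intro q hq
    simp [shInv_sh]
  case right =>
    intro q hq
    simp [sh_shInv]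
  case term =>
    intro q hq
    exact Mcard_symm q.1 q.2

open Classical in
lemma natCard_eq (p : Finset (Finset (Fin n)) → Prop) :
    Nat.card {P // p P} = (Finset.univ.filter p).card := by
  rw [Nat.card_eq_fintype_card, Fintype.card_subtype]

open Classical in
lemma natCard_T (s a : ℕ) :
    Nat.card {P : Finset (Finset (Fin n)) //
        IsPartition n P ∧ numSingletons n P = s ∧ numAdjacencies n P = a}
      = Tcard n s a := by
  rw [Tcard]
  convert natCard_eq (n := n)
    (fun P => IsPartition n P ∧ numSingletons n P = s ∧ numAdjacencies n P = a) using 2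
  ext P
  simp [Finset.mem_filter]

end Dev10


theorem joint_distribution_symmetric (n s a : ℕ) :
    Nat.card {P : Finset (Finset (Fin n)) //
        IsPartition n P ∧ numSingletons n P = s ∧ numAdjacencies n P = a}
      = Nat.card {P : Finset (Finset (Fin n)) //
        IsPartition n P ∧ numSingletons n P = a ∧ numAdjacencies n P = s} := by
  match n with
  | 0 =>
    apply Nat.card_congr
    apply Equiv.subtypeEquivRight
    intro P
    have hkey : ∀ Q : Finset (Finset (Fin 0)), IsPartition 0 Q →
        numSingletons 0 Q = 0 ∧ numAdjacencies 0 Q = 0 := by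
      intro Q hQ
      have hQe : Q = ∅ := by
        rw [Finset.eq_empty_iff_forall_notMem]
        intro B hB
        obtain ⟨x, -⟩ := hQ.1 B hB
        exact x.elim0
      subst hQe
      constructor
      · simp [numSingletons]
      · simp [numAdjacencies]
    constructor
    · rintro ⟨h1, h2, h3⟩
      obtain ⟨e1, e2⟩ := hkey P h1
      rw [e1] at h2
      rw [e2] at h3
      exact ⟨h1, by rw [e1, ← h3], by rw [e2, ← h2]⟩
    · rintro ⟨h1, h2, h3⟩
      obtain ⟨e1, e2⟩ := hkey P h1
      rw [e1] at h2
      rw [e2] at h3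
      exact ⟨h1, by rw [e1, ← h3], by rw [e2, ← h2]⟩
  | (m + 1) =>
    rw [natCard_T, natCard_T]
    exact Tcard_symm s a
end

section
/- The number of type B_n set partitions without zero-block having no singleton pair equals the number of type B_n set partitions without zero-block having no adjacency pair. -/
/-- The ground set `{±1, …, ±n}` of type `B_n` partitions, as a finset of integers. -/
noncomputable def BGround (n : ℕ) : Finset ℤ := (Finset.Icc (-(n : ℤ)) n).erase 0

/-- `P` is a set partition of the finset `S`: blocks are nonempty subsets of `S`
and every element of `S` lies in a unique block. -/
def IsPartitionOf (P : Finset (Finset ℤ)) (S : Finset ℤ) : Prop :=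
  (∀ B ∈ P, B.Nonempty) ∧ (∀ B ∈ P, B ⊆ S) ∧ (∀ x ∈ S, ∃! B, B ∈ P ∧ x ∈ B)

/-- The negation `-B` of a block `B`. -/
def negBlock (B : Finset ℤ) : Finset ℤ := B.image (fun x => -x)

/-- `P` is a type `B_n` set partition without zero-block: a set partition of
`{±1, …, ±n}` such that the negation of every block is a block and no block is
self-negating. -/
def IsBPartNZ (n : ℕ) (P : Finset (Finset ℤ)) : Prop :=
  IsPartitionOf P (BGround n) ∧ (∀ B ∈ P, negBlock B ∈ P) ∧ ∀ B ∈ P, negBlock B ≠ B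

/-- The number of singleton pairs `±i` of `P`, i.e. of `i ∈ [n]` with `{i}` a block. -/
noncomputable def spairs (n : ℕ) (P : Finset (Finset ℤ)) : ℕ :=
  ((Finset.Icc (1 : ℤ) n).filter (fun i => {i} ∈ P)).card

/-- The cyclic successor of `j` in `{1, …, n}` (so `n` is followed by `1`). -/
def bnext (n : ℕ) (j : ℤ) : ℤ := if j = n then 1 else j + 1

/-- The number of adjacency pairs `±(j, j+1)` of `P`, i.e. of `j ∈ [n]` with `j` and
`j+1` (mod `n`) in a common block. -/
noncomputable def apairs (n : ℕ) (P : Finset (Finset ℤ)) : ℕ :=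
  ((Finset.Icc (1 : ℤ) n).filter (fun j => ∃ B ∈ P, j ∈ B ∧ bnext n j ∈ B)).card

open Finset

noncomputable section

namespace BP

/-- A "signed" ground set: no zero, closed under negation. -/
def Signed (S : Finset ℤ) : Prop := (0 : ℤ) ∉ S ∧ ∀ x ∈ S, -x ∈ S

/-- Type-B partition of an arbitrary signed ground set. -/
def BPart (S : Finset ℤ) (P : Finset (Finset ℤ)) : Prop :=
  IsPartitionOf P S ∧ (∀ B ∈ P, negBlock B ∈ P) ∧ ∀ B ∈ P, negBlock B ≠ B

lemma isB_iff {n : ℕ} {P : Finset (Finset ℤ)} : IsBPartNZ n P ↔ BPart (BGround n) P := Iff.rfl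

/-- All type-B partitions of `S`, as a finset. -/
def bset (S : Finset ℤ) : Finset (Finset (Finset ℤ)) :=
  @Finset.filter _ (BPart S) (Classical.decPred _) S.powerset.powerset

def bcount (S : Finset ℤ) : ℕ := (bset S).card

lemma mem_bset {S : Finset ℤ} {P : Finset (Finset ℤ)} : P ∈ bset S ↔ BPart S P := by
  unfold bset
  rw [@Finset.mem_filter _ _ (Classical.decPred _)]
  simp only [mem_powerset, and_iff_right_iff_imp]
  intro hP B hB
  simpa [mem_powerset] using hP.1.2.1 B hB

lemma mem_negBlock {B : Finset ℤ} {x : ℤ} : x ∈ negBlock B ↔ -x ∈ B := by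
  constructor
  · rintro h
    obtain ⟨y, hy, rfl⟩ := Finset.mem_image.1 h
    simpa using hy
  · intro h
    have := Finset.mem_image_of_mem (fun x : ℤ => -x) h
    simpa [negBlock] using this

lemma negBlock_negBlock (B : Finset ℤ) : negBlock (negBlock B) = B := by
  ext x; simp [mem_negBlock]

lemma blk_eq {P : Finset (Finset ℤ)} {S : Finset ℤ} (h : IsPartitionOf P S)
    {B B' : Finset ℤ} {x : ℤ} (hB : B ∈ P) (hB' : B' ∈ P) (hx : x ∈ B) (hx' : x ∈ B') :
    B = B' := by
  obtain ⟨C, _, hu⟩ := h.2.2 x (h.2.1 B hB hx)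
  exact (hu B ⟨hB, hx⟩).trans (hu B' ⟨hB', hx'⟩).symm

lemma mem_BGround {n : ℕ} {x : ℤ} : x ∈ BGround n ↔ x ≠ 0 ∧ -(n:ℤ) ≤ x ∧ x ≤ n := by
  simp [BGround, Finset.mem_erase, Finset.mem_Icc, and_assoc]

lemma Icc_subset_BGround {n : ℕ} : Finset.Icc (1:ℤ) n ⊆ BGround n := by
  intro x hx
  simp only [Finset.mem_Icc] at hx
  rw [mem_BGround]
  omega

lemma signed_BGround (n : ℕ) : Signed (BGround n) := by
  constructor
  · simp [mem_BGround]
  · intro x hx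
    rw [mem_BGround] at hx ⊢
    omega


lemma image_image_id {f g : ℤ → ℤ} {S : Finset ℤ} (hgf : ∀ x ∈ S, g (f x) = x)
    {B : Finset ℤ} (hB : B ⊆ S) : (B.image f).image g = B := by
  ext x
  simp only [Finset.mem_image]
  constructor
  · rintro ⟨y, ⟨z, hz, rfl⟩, rfl⟩
    rw [hgf z (hB hz)]; exact hz
  · intro hx
    exact ⟨f x, ⟨x, hx, rfl⟩, hgf x (hB hx)⟩

lemma negBlock_image {f : ℤ → ℤ} {S B : Finset ℤ} (hB : B ⊆ S)
    (hneg : ∀ x ∈ S, f (-x) = -(f x)) (hS : ∀ x ∈ S, -x ∈ S) :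
    negBlock (B.image f) = (negBlock B).image f := by
  ext x
  simp only [mem_negBlock, Finset.mem_image]
  constructor
  · rintro ⟨y, hy, hxy⟩
    refine ⟨-y, by simpa [mem_negBlock] using hy, ?_⟩
    rw [hneg y (hB hy)]; omega
  · rintro ⟨y, hy, rfl⟩
    refine ⟨-y, hy, ?_⟩
    have := hneg (-y) (hB hy)
    simp only [neg_neg] at this
    omega

lemma BPart_image {S1 S2 : Finset ℤ} {f g : ℤ → ℤ}
    (hf : ∀ x ∈ S1, f x ∈ S2) (hg : ∀ y ∈ S2, g y ∈ S1)
    (hgf : ∀ x ∈ S1, g (f x) = x) (hfg : ∀ y ∈ S2, f (g y) = y)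
    (hneg : ∀ x ∈ S1, f (-x) = -(f x)) (hS1 : ∀ x ∈ S1, -x ∈ S1)
    {P : Finset (Finset ℤ)} (hP : BPart S1 P) :
    BPart S2 (P.image (fun B => B.image f)) := by
  obtain ⟨⟨hne, hsub, hex⟩, hnc, hnn⟩ := hP
  have himg_inj : ∀ B ∈ P, ∀ B' ∈ P, B.image f = B'.image f → B = B' := by
    intro B hB B' hB' h
    have := congrArg (fun C => C.image g) h
    simpa [image_image_id hgf (hsub B hB), image_image_id hgf (hsub B' hB')] using this
  refine ⟨⟨?_, ?_, ?_⟩, ?_, ?_⟩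
  · intro C hC
    obtain ⟨B, hB, rfl⟩ := Finset.mem_image.1 hC
    exact (hne B hB).image f
  · intro C hC x hx
    obtain ⟨B, hB, rfl⟩ := Finset.mem_image.1 hC
    obtain ⟨y, hy, rfl⟩ := Finset.mem_image.1 hx
    exact hf y (hsub B hB hy)
  · intro y hy
    obtain ⟨B, ⟨hB, hgyB⟩, hu⟩ := hex (g y) (hg y hy)
    refine ⟨B.image f, ⟨Finset.mem_image_of_mem _ hB, ?_⟩, ?_⟩
    · have : f (g y) ∈ B.image f := Finset.mem_image_of_mem f hgyB
      rwa [hfg y hy] at this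
    · rintro C ⟨hC, hyC⟩
      obtain ⟨B', hB', rfl⟩ := Finset.mem_image.1 hC
      obtain ⟨x', hx', hfx'⟩ := Finset.mem_image.1 hyC
      have hx'S : x' ∈ S1 := hsub B' hB' hx'
      have : g y = x' := by rw [← hfx', hgf x' hx'S]
      have hB'B : B' = B := hu B' ⟨hB', by rwa [this]⟩
      rw [hB'B]
  · intro C hC
    obtain ⟨B, hB, rfl⟩ := Finset.mem_image.1 hC
    rw [negBlock_image (hsub B hB) hneg hS1]
    exact Finset.mem_image_of_mem _ (hnc B hB)
  · intro C hC h
    obtain ⟨B, hB, rfl⟩ := Finset.mem_image.1 hC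
    rw [negBlock_image (hsub B hB) hneg hS1] at h
    exact hnn B hB (himg_inj _ (hnc B hB) _ hB h)

lemma bcount_transport {S1 S2 : Finset ℤ} {f g : ℤ → ℤ}
    (hf : ∀ x ∈ S1, f x ∈ S2) (hg : ∀ y ∈ S2, g y ∈ S1)
    (hgf : ∀ x ∈ S1, g (f x) = x) (hfg : ∀ y ∈ S2, f (g y) = y)
    (hneg : ∀ x ∈ S1, f (-x) = -(f x)) (hS1 : ∀ x ∈ S1, -x ∈ S1)
    (hS2 : ∀ y ∈ S2, -y ∈ S2) :
    bcount S1 = bcount S2 := by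
  have hneg' : ∀ y ∈ S2, g (-y) = -(g y) := by
    intro y hy
    have h1 : f (g (-y)) = -y := hfg _ (hS2 y hy)
    have h2 : f (-(g y)) = -y := by rw [hneg _ (hg y hy), hfg y hy]
    have := hgf _ (hg _ (hS2 y hy))
    rw [← this, h1, ← h2, hgf _ (hS1 _ (hg y hy))]
  unfold bcount
  apply Finset.card_bij' (fun P _ => P.image (fun B => B.image f))
      (fun Q _ => Q.image (fun C => C.image g))
  · intro P hP
    ext B
    simp only [Finset.mem_image]
    constructor
    · rintro ⟨C, ⟨B', hB', rfl⟩, rfl⟩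
      rwa [image_image_id hgf ((mem_bset.1 hP).1.2.1 B' hB')]
    · intro hB
      exact ⟨B.image f, ⟨B, hB, rfl⟩,
        image_image_id hgf ((mem_bset.1 hP).1.2.1 B hB)⟩
  · intro Q hQ
    ext C
    simp only [Finset.mem_image]
    constructor
    · rintro ⟨B, ⟨C', hC', rfl⟩, rfl⟩
      rwa [image_image_id hfg ((mem_bset.1 hQ).1.2.1 C' hC')]
    · intro hC
      exact ⟨C.image g, ⟨C, hC, rfl⟩,
        image_image_id hfg ((mem_bset.1 hQ).1.2.1 C hC)⟩
  · intro P hP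
    exact mem_bset.2 (BPart_image hf hg hgf hfg hneg hS1 (mem_bset.1 hP))
  · intro Q hQ
    exact mem_bset.2 (BPart_image hg hf hfg hgf hneg' hS2 (mem_bset.1 hQ))

lemma signed_decomp {S : Finset ℤ} (h : Signed S) :
    S = (S.filter (0 < ·)) ∪ (S.filter (0 < ·)).image Neg.neg := by
  ext x
  simp only [Finset.mem_union, Finset.mem_filter, Finset.mem_image]
  constructor
  · intro hx
    rcases lt_trichotomy x 0 with hlt | heq | hgt
    · exact Or.inr ⟨-x, ⟨h.2 x hx, by omega⟩, by omega⟩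
    · exact absurd (heq ▸ hx) h.1
    · exact Or.inl ⟨hx, hgt⟩
  · rintro (⟨hx, _⟩ | ⟨y, ⟨hy, _⟩, rfl⟩)
    · exact hx
    · exact h.2 y hy

lemma signed_pos_card {S : Finset ℤ} (h : Signed S) :
    S.card = 2 * (S.filter (0 < ·)).card := by
  have hd : Disjoint (S.filter (0 < ·)) ((S.filter (0 < ·)).image Neg.neg) := by
    rw [Finset.disjoint_left]
    rintro a ha hb
    obtain ⟨y, hy, rfl⟩ := Finset.mem_image.1 hb
    simp only [Finset.mem_filter] at ha hy
    omega
  conv_lhs => rw [signed_decomp h]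
  rw [Finset.card_union_of_disjoint hd,
    Finset.card_image_of_injective _ neg_injective]
  ring

/-- Extend a bijection between positive parts to a sign-equivariant map. -/
def sgnExt {P1 P2 : Finset ℤ} (e : ↥P1 ≃ ↥P2) : ℤ → ℤ :=
  fun x => if h : x ∈ P1 then (e ⟨x, h⟩ : ℤ) else
    if h : -x ∈ P1 then -((e ⟨-x, h⟩ : ℤ)) else x

lemma sgnExt_apply_mem {P1 P2 : Finset ℤ} (e : ↥P1 ≃ ↥P2) {x : ℤ} (hx : x ∈ P1) :
    sgnExt e x = (e ⟨x, hx⟩ : ℤ) := dif_pos hx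

lemma sgnExt_apply_neg {P1 P2 : Finset ℤ} (hp1 : ∀ x ∈ P1, 0 < x)
    (e : ↥P1 ≃ ↥P2) {z : ℤ} (hz : z ∈ P1) :
    sgnExt e (-z) = -((e ⟨z, hz⟩ : ℤ)) := by
  unfold sgnExt
  have h1 : (-z : ℤ) ∉ P1 := fun h => by have := hp1 _ h; have := hp1 z hz; omega
  have h2 : -(-z) ∈ P1 := by rwa [neg_neg]
  rw [dif_neg h1, dif_pos h2]
  simp only [neg_neg]

lemma sgnExt_props {P1 P2 : Finset ℤ} (hp1 : ∀ x ∈ P1, 0 < x) (hp2 : ∀ y ∈ P2, 0 < y)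
    (e : ↥P1 ≃ ↥P2) :
    (∀ x ∈ P1 ∪ P1.image Neg.neg, sgnExt e x ∈ P2 ∪ P2.image Neg.neg) ∧
    (∀ x ∈ P1 ∪ P1.image Neg.neg, sgnExt e.symm (sgnExt e x) = x) ∧
    (∀ x ∈ P1 ∪ P1.image Neg.neg, sgnExt e (-x) = -(sgnExt e x)) := by
  have key : ∀ x ∈ P1 ∪ P1.image Neg.neg,
      sgnExt e x ∈ P2 ∪ P2.image Neg.neg ∧ sgnExt e.symm (sgnExt e x) = x ∧
        sgnExt e (-x) = -(sgnExt e x) := by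
    intro x hx
    rcases Finset.mem_union.1 hx with hx1 | hx1
    · rw [sgnExt_apply_mem e hx1]
      have hm : ((e ⟨x, hx1⟩ : ℤ)) ∈ P2 := (e ⟨x, hx1⟩).2
      refine ⟨Finset.mem_union_left _ hm, ?_, ?_⟩
      · rw [sgnExt_apply_mem e.symm hm]
        have : (⟨(e ⟨x, hx1⟩ : ℤ), hm⟩ : ↥P2) = e ⟨x, hx1⟩ := rfl
        rw [this, Equiv.symm_apply_apply]
      · rw [sgnExt_apply_neg hp1 e hx1]
    · obtain ⟨z, hz, rfl⟩ := Finset.mem_image.1 hx1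
      show sgnExt e (-z) ∈ _ ∧ _ ∧ sgnExt e (- -z) = _
      rw [sgnExt_apply_neg hp1 e hz, neg_neg, sgnExt_apply_mem e hz]
      have hm : ((e ⟨z, hz⟩ : ℤ)) ∈ P2 := (e ⟨z, hz⟩).2
      refine ⟨Finset.mem_union_right _ (Finset.mem_image_of_mem _ hm), ?_, by ring⟩
      rw [sgnExt_apply_neg hp2 e.symm hm]
      have : (⟨(e ⟨z, hz⟩ : ℤ), hm⟩ : ↥P2) = e ⟨z, hz⟩ := rfl
      rw [this, Equiv.symm_apply_apply]
  exact ⟨fun x hx => (key x hx).1, fun x hx => (key x hx).2.1, fun x hx => (key x hx).2.2⟩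

lemma bcount_congr {S1 S2 : Finset ℤ} (h1 : Signed S1) (h2 : Signed S2)
    (hcard : S1.card = S2.card) : bcount S1 = bcount S2 := by
  have hp1 : ∀ x ∈ S1.filter (0 < ·), 0 < x := fun x hx => (Finset.mem_filter.1 hx).2
  have hp2 : ∀ y ∈ S2.filter (0 < ·), 0 < y := fun y hy => (Finset.mem_filter.1 hy).2
  have hc : Fintype.card ↥(S1.filter (0 < ·)) = Fintype.card ↥(S2.filter (0 < ·)) := by
    rw [Fintype.card_coe, Fintype.card_coe]
    have e1 := signed_pos_card h1
    have e2 := signed_pos_card h2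
    omega
  have e := Fintype.equivOfCardEq hc
  obtain ⟨hf, hgf, hneg⟩ := sgnExt_props hp1 hp2 e
  obtain ⟨hg, hfg, _⟩ := sgnExt_props hp2 hp1 e.symm
  rw [Equiv.symm_symm] at hfg
  simp only [← signed_decomp h1, ← signed_decomp h2] at hf hg hgf hfg hneg
  exact bcount_transport hf hg hgf hfg hneg h1.2 h2.2

lemma negBlock_singleton (i : ℤ) : negBlock {i} = {-i} := by
  ext x; simp only [mem_negBlock, Finset.mem_singleton]; omega

lemma signed_sdiff {S U : Finset ℤ} (hS : Signed S) (hU : ∀ x ∈ U, -x ∈ U) :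
    Signed (S \ U) := by
  constructor
  · rw [Finset.mem_sdiff]
    exact fun h => hS.1 h.1
  · intro x hx
    rw [Finset.mem_sdiff] at hx ⊢
    refine ⟨hS.2 x hx.1, fun h => hx.2 ?_⟩
    have := hU _ h
    rwa [neg_neg] at this

lemma sing_force (n : ℕ) (T : Finset ℤ) (hT : T ⊆ Finset.Icc (1:ℤ) n) :
    ((bset (BGround n)).filter (fun P => ∀ i ∈ T, ({i} : Finset ℤ) ∈ P)).card
      = bcount (BGround n \ (T ∪ T.image Neg.neg)) := by
  set TT : Finset ℤ := T ∪ T.image Neg.neg with hTT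
  set S' : Finset ℤ := BGround n \ TT with hS'
  have hmemTT : ∀ x : ℤ, x ∈ TT ↔ (x ∈ T ∨ -x ∈ T) := by
    intro x
    rw [hTT]
    simp only [Finset.mem_union, Finset.mem_image]
    constructor
    · rintro (h | ⟨y, hy, rfl⟩)
      · exact Or.inl h
      · exact Or.inr (by simpa using hy)
    · rintro (h | h)
      · exact Or.inl h
      · exact Or.inr ⟨-x, h, by ring⟩
  have hTTsym : ∀ x ∈ TT, -x ∈ TT := by
    intro x hx
    rw [hmemTT] at hx ⊢
    rcases hx with h | h
    · exact Or.inr (by simpa using h)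
    · exact Or.inl h
  have hTTG : TT ⊆ BGround n := by
    intro x hx
    rw [hmemTT] at hx
    rcases hx with h | h
    · have := hT h; rw [Finset.mem_Icc] at this; rw [mem_BGround]; omega
    · have := hT h; rw [Finset.mem_Icc] at this; rw [mem_BGround]; omega
  have hsS' : Signed S' := signed_sdiff (signed_BGround n) hTTsym
  have struct : ∀ P, BPart (BGround n) P → (∀ i ∈ T, ({i}:Finset ℤ) ∈ P) →
      (∀ i ∈ TT, ({i}:Finset ℤ) ∈ P) ∧ (∀ B ∈ P, B ⊆ S' ∨ ∃ i ∈ TT, B = {i}) := by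
    intro P hP hforce
    have forced' : ∀ i ∈ TT, ({i}:Finset ℤ) ∈ P := by
      intro i hi
      rw [hmemTT] at hi
      rcases hi with h | h
      · exact hforce i h
      · have := hP.2.1 _ (hforce _ h)
        rwa [negBlock_singleton, neg_neg] at this
    refine ⟨forced', fun B hB => ?_⟩
    by_cases hsub : B ⊆ S'
    · exact Or.inl hsub
    · obtain ⟨x, hxB, hxS⟩ := Finset.not_subset.1 hsub
      have hxG : x ∈ BGround n := hP.1.2.1 B hB hxB
      have hxTT : x ∈ TT := by
        by_contra hc
        exact hxS (by rw [hS', Finset.mem_sdiff]; exact ⟨hxG, hc⟩)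
      exact Or.inr ⟨x, hxTT,
        blk_eq hP.1 hB (forced' x hxTT) hxB (Finset.mem_singleton_self x)⟩
  unfold bcount
  refine Finset.card_nbij' (i := fun P => P.filter (fun B => B ⊆ S'))
      (j := fun Q => Q ∪ TT.image (fun i => ({i} : Finset ℤ))) ?_ ?_ ?_ ?_
  · -- forward membership
    intro P hP
    obtain ⟨hPb, hforce⟩ := Finset.mem_filter.1 hP
    have hPP := mem_bset.1 hPb
    obtain ⟨forced', hblocks⟩ := struct P hPP hforce
    apply mem_bset.2
    refine ⟨⟨?_, ?_, ?_⟩, ?_, ?_⟩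
    · intro B hB
      exact hPP.1.1 B (Finset.mem_filter.1 hB).1
    · intro B hB
      exact (Finset.mem_filter.1 hB).2
    · intro x hx
      have hxS := Finset.mem_sdiff.1 (by rwa [hS'] at hx)
      obtain ⟨B, ⟨hB, hxB⟩, _⟩ := hPP.1.2.2 x hxS.1
      have hBS : B ⊆ S' := by
        rcases hblocks B hB with h | ⟨i, hi, rfl⟩
        · exact h
        · rw [Finset.mem_singleton] at hxB
          exact absurd (hxB ▸ hi) hxS.2
      refine ⟨B, ⟨Finset.mem_filter.2 ⟨hB, hBS⟩, hxB⟩, ?_⟩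
      rintro C ⟨hC, hxC⟩
      exact blk_eq hPP.1 (Finset.mem_filter.1 hC).1 hB hxC hxB
    · intro B hB
      obtain ⟨hBP, hBS⟩ := Finset.mem_filter.1 hB
      refine Finset.mem_filter.2 ⟨hPP.2.1 B hBP, ?_⟩
      intro x hxn
      rw [mem_negBlock] at hxn
      have h1 : -x ∈ S' := hBS hxn
      have := hsS'.2 _ h1
      rwa [neg_neg] at this
    · intro B hB
      exact hPP.2.2 B (Finset.mem_filter.1 hB).1
  · -- backward membership
    intro Q hQ
    have hQb := mem_bset.1 hQ
    have hQsub : ∀ B ∈ Q, B ⊆ S' := hQb.1.2.1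
    refine Finset.mem_filter.2 ⟨mem_bset.2 ⟨⟨?_, ?_, ?_⟩, ?_, ?_⟩, ?_⟩
    · intro B hB
      rcases Finset.mem_union.1 hB with h | h
      · exact hQb.1.1 B h
      · obtain ⟨i, hi, rfl⟩ := Finset.mem_image.1 h
        exact ⟨i, Finset.mem_singleton_self i⟩
    · intro B hB
      rcases Finset.mem_union.1 hB with h | h
      · intro x hx
        have := hQsub B h hx
        rw [hS', Finset.mem_sdiff] at this
        exact this.1
      · obtain ⟨i, hi, rfl⟩ := Finset.mem_image.1 h
        intro x hx
        rw [Finset.mem_singleton] at hx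
        exact hx ▸ hTTG hi
    · intro x hx
      by_cases hxTT : x ∈ TT
      · refine ⟨{x}, ⟨Finset.mem_union_right _ (Finset.mem_image_of_mem _ hxTT),
          Finset.mem_singleton_self x⟩, ?_⟩
        rintro C ⟨hC, hxC⟩
        rcases Finset.mem_union.1 hC with h | h
        · have := hQsub C h hxC
          rw [hS', Finset.mem_sdiff] at this
          exact absurd hxTT this.2
        · obtain ⟨i, hi, rfl⟩ := Finset.mem_image.1 h
          rw [Finset.mem_singleton] at hxC
          rw [hxC]
      · have hxS' : x ∈ S' := by rw [hS', Finset.mem_sdiff]; exact ⟨hx, hxTT⟩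
        obtain ⟨B, ⟨hB, hxB⟩, hu⟩ := hQb.1.2.2 x hxS'
        refine ⟨B, ⟨Finset.mem_union_left _ hB, hxB⟩, ?_⟩
        rintro C ⟨hC, hxC⟩
        rcases Finset.mem_union.1 hC with h | h
        · exact hu C ⟨h, hxC⟩
        · obtain ⟨i, hi, rfl⟩ := Finset.mem_image.1 h
          rw [Finset.mem_singleton] at hxC
          exact absurd (hxC ▸ hi) hxTT
    · intro B hB
      rcases Finset.mem_union.1 hB with h | h
      · exact Finset.mem_union_left _ (hQb.2.1 B h)
      · obtain ⟨i, hi, rfl⟩ := Finset.mem_image.1 h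
        rw [negBlock_singleton]
        exact Finset.mem_union_right _ (Finset.mem_image_of_mem _ (hTTsym i hi))
    · intro B hB
      rcases Finset.mem_union.1 hB with h | h
      · exact hQb.2.2 B h
      · obtain ⟨i, hi, rfl⟩ := Finset.mem_image.1 h
        rw [negBlock_singleton]
        intro hcon
        rw [Finset.singleton_inj] at hcon
        have hiG := hTTG hi
        rw [mem_BGround] at hiG
        omega
    · intro i hi
      exact Finset.mem_union_right _
        (Finset.mem_image_of_mem _ (by rw [hmemTT]; exact Or.inl hi))

  · -- left inverse
    intro P hP
    obtain ⟨hPb, hforce⟩ := Finset.mem_filter.1 hP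
    have hPP := mem_bset.1 hPb
    obtain ⟨forced', hblocks⟩ := struct P hPP hforce
    apply Finset.Subset.antisymm
    · intro B hB
      rcases Finset.mem_union.1 hB with h | h
      · exact (Finset.mem_filter.1 h).1
      · obtain ⟨i, hi, rfl⟩ := Finset.mem_image.1 h
        exact forced' i hi
    · intro B hB
      rcases hblocks B hB with h | ⟨i, hi, rfl⟩
      · exact Finset.mem_union_left _ (Finset.mem_filter.2 ⟨hB, h⟩)
      · exact Finset.mem_union_right _ (Finset.mem_image_of_mem _ hi)
  · -- right inverse
    intro Q hQ
    have hQb := mem_bset.1 hQ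
    ext B
    rw [Finset.mem_filter, Finset.mem_union]
    constructor
    · rintro ⟨h | h, hsub⟩
      · exact h
      · obtain ⟨i, hi, rfl⟩ := Finset.mem_image.1 h
        have : i ∈ S' := hsub (Finset.mem_singleton_self i)
        rw [hS', Finset.mem_sdiff] at this
        exact absurd hi this.2
    · intro hB
      exact ⟨Or.inl hB, hQb.1.2.1 B hB⟩
/-! ### Adjacency contraction machinery -/

def prv (n : ℕ) (i : ℤ) : ℤ := if i = 1 then (n : ℤ) else i - 1

lemma prv_mem {n : ℕ} (hn : 1 ≤ n) {i : ℤ} (hi : i ∈ Finset.Icc (1:ℤ) n) :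
    prv n i ∈ Finset.Icc (1:ℤ) n := by
  unfold prv
  rw [Finset.mem_Icc] at *
  split_ifs <;> omega

lemma bnext_mem {n : ℕ} (hn : 1 ≤ n) {j : ℤ} (hj : j ∈ Finset.Icc (1:ℤ) n) :
    bnext n j ∈ Finset.Icc (1:ℤ) n := by
  unfold bnext
  rw [Finset.mem_Icc] at *
  split_ifs <;> omega

lemma bnext_prv {n : ℕ} {i : ℤ} (hi : i ∈ Finset.Icc (1:ℤ) n) :
    bnext n (prv n i) = i := by
  unfold bnext prv
  rw [Finset.mem_Icc] at hi
  split_ifs <;> omega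

lemma prv_bnext {n : ℕ} {j : ℤ} (hj : j ∈ Finset.Icc (1:ℤ) n) :
    prv n (bnext n j) = j := by
  unfold bnext prv
  rw [Finset.mem_Icc] at hj
  split_ifs <;> omega

/-- Representatives: elements whose cyclic predecessor is not forced. -/
def reps (n : ℕ) (T : Finset ℤ) : Finset ℤ :=
  (Finset.Icc (1:ℤ) n).filter (fun i => prv n i ∉ T)

lemma mem_reps {n : ℕ} {T : Finset ℤ} {i : ℤ} :
    i ∈ reps n T ↔ i ∈ Finset.Icc (1:ℤ) n ∧ prv n i ∉ T := Finset.mem_filter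

/-- Walk backwards along forced adjacencies, with fuel. -/
def rfuel (n : ℕ) (T : Finset ℤ) (m : ℕ) : ℤ → ℤ :=
  Nat.rec (motive := fun _ => ℤ → ℤ) (fun i => i)
    (fun _ f i => if prv n i ∈ T then f (prv n i) else i) m

lemma rfuel_zero {n : ℕ} {T : Finset ℤ} {i : ℤ} : rfuel n T 0 i = i := rfl

lemma rfuel_succ {n : ℕ} {T : Finset ℤ} {m : ℕ} {i : ℤ} :
    rfuel n T (m+1) i = if prv n i ∈ T then rfuel n T m (prv n i) else i := rfl

lemma rfuel_mem {n : ℕ} (hn : 1 ≤ n) (T : Finset ℤ) :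
    ∀ m (i : ℤ), i ∈ Finset.Icc (1:ℤ) n → rfuel n T m i ∈ Finset.Icc (1:ℤ) n := by
  intro m
  induction m with
  | zero => intro i hi; exact hi
  | succ m ih =>
    intro i hi
    rw [rfuel_succ]
    split_ifs with h
    · exact ih _ (prv_mem hn hi)
    · exact hi

lemma rfuel_fix {n : ℕ} {T : Finset ℤ} {r : ℤ} (hr : r ∈ reps n T) (m : ℕ) :
    rfuel n T m r = r := by
  cases m with
  | zero => rfl
  | succ m => rw [rfuel_succ, if_neg (mem_reps.1 hr).2]

lemma rfuel_stable {n : ℕ} {T : Finset ℤ} :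
    ∀ m (i : ℤ), rfuel n T m i ∈ reps n T → rfuel n T (m+1) i = rfuel n T m i := by
  intro m
  induction m with
  | zero =>
    intro i hi
    rw [rfuel_zero] at hi
    rw [rfuel_succ, if_neg (mem_reps.1 hi).2, rfuel_zero]
  | succ m ih =>
    intro i hi
    by_cases h : prv n i ∈ T
    · have e1 : rfuel n T (m+1) i = rfuel n T m (prv n i) := by rw [rfuel_succ, if_pos h]
      have e2 : rfuel n T (m+1+1) i = rfuel n T (m+1) (prv n i) := by rw [rfuel_succ, if_pos h]
      rw [e2, e1, ih _ (by rwa [e1] at hi)]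
    · have e1 : rfuel n T (m+1) i = i := by rw [rfuel_succ, if_neg h]
      have e2 : rfuel n T (m+1+1) i = i := by rw [rfuel_succ, if_neg h]
      rw [e1, e2]

lemma chainT {n : ℕ} {T : Finset ℤ} (hn : 1 ≤ n) :
    ∀ m (x : ℤ), x ∈ Finset.Icc (1:ℤ) n → rfuel n T m x ∉ reps n T →
      ∀ k : ℕ, 1 ≤ k → k ≤ m + 1 → (prv n)^[k] x ∈ T := by
  intro m
  induction m with
  | zero =>
    intro x hx hnr k hk1 hk2
    have hk : k = 1 := by omega
    subst hk
    rw [Function.iterate_one]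
    by_contra h
    exact hnr (mem_reps.2 ⟨hx, h⟩)
  | succ m ih =>
    intro x hx hnr k hk1 hk2
    have hpT : prv n x ∈ T := by
      by_contra h
      rw [rfuel_succ, if_neg h] at hnr
      exact hnr (mem_reps.2 ⟨hx, h⟩)
    by_cases hk : k = 1
    · subst hk
      rwa [Function.iterate_one]
    · have hke : (prv n)^[k] x = (prv n)^[k-1] (prv n x) := by
        conv_lhs => rw [show k = (k-1)+1 by omega]
        rw [Function.iterate_succ_apply]
      rw [hke]
      refine ih (prv n x) (prv_mem hn hx) ?_ (k-1) (by omega) (by omega)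
      rwa [rfuel_succ, if_pos hpT] at hnr

lemma prv_iter {n : ℕ} (hn : 1 ≤ n) : ∀ (k : ℕ) (i : ℤ), 1 ≤ i → i ≤ n →
    (prv n)^[k] i = (i - 1 - k) % n + 1 := by
  intro k
  induction k with
  | zero =>
    intro i h1 h2
    simp only [Function.iterate_zero, id_eq, Nat.cast_zero, sub_zero]
    rw [Int.emod_eq_of_lt (by omega) (by omega)]
    omega
  | succ k ih =>
    intro i h1 h2
    rw [Function.iterate_succ_apply]
    by_cases h : i = 1
    · subst h
      rw [show prv n 1 = (n:ℤ) from if_pos rfl, ih n (by omega) (by omega)]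
      have e1 : (n:ℤ) - 1 - k = (1 - 1 - ((k:ℤ)+1)) + (n:ℤ) * 1 := by ring
      rw [e1, Int.add_mul_emod_self_left]
      push_cast
      try ring_nf
    · rw [show prv n i = i - 1 from if_neg h, ih (i-1) (by omega) (by omega)]
      have e1 : i - 1 - 1 - (k:ℤ) = i - 1 - ((k:ℤ)+1) := by ring
      rw [e1]
      push_cast
      try ring_nf

lemma prv_cover {n : ℕ} (hn : 1 ≤ n) {i u : ℤ} (hi1 : 1 ≤ i) (hi2 : i ≤ n)
    (hu1 : 1 ≤ u) (hu2 : u ≤ n) : ∃ k : ℕ, 1 ≤ k ∧ (k:ℤ) ≤ n ∧ (prv n)^[k] i = u := by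
  have hn0 : (0:ℤ) < n := by omega
  set r : ℤ := (i - u) % n with hr
  have hr0 : 0 ≤ r := Int.emod_nonneg _ (by omega)
  have hrn : r < n := Int.emod_lt_of_pos _ hn0
  by_cases h : r = 0
  · refine ⟨n, hn, le_refl _, ?_⟩
    have hd : (n:ℤ) ∣ (i - u) := Int.dvd_of_emod_eq_zero (by rw [← hr]; exact h)
    have hiu : i - u = 0 := Int.eq_zero_of_abs_lt_dvd hd (by rw [abs_lt]; omega)
    rw [prv_iter hn n i hi1 hi2]
    have e1 : i - 1 - (n:ℤ) = (i-1) + (n:ℤ) * (-1) := by ring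
    rw [e1, Int.add_mul_emod_self_left, Int.emod_eq_of_lt (by omega) (by omega)]
    omega
  · refine ⟨r.toNat, by omega, by omega, ?_⟩
    rw [prv_iter hn r.toNat i hi1 hi2, Int.toNat_of_nonneg hr0]
    have hme : i - u ≡ r [ZMOD (n:ℤ)] := by
      show (i - u) % (n:ℤ) = r % (n:ℤ)
      rw [Int.emod_eq_of_lt hr0 hrn]
    have h2 : i - 1 - r ≡ i - 1 - (i - u) [ZMOD (n:ℤ)] := (Int.ModEq.refl _).sub hme.symm
    have h3 : i - 1 - (i - u) = u - 1 := by ring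
    rw [h3] at h2
    have h4 : (i - 1 - r) % (n:ℤ) = (u - 1) % (n:ℤ) := h2
    rw [h4, Int.emod_eq_of_lt (by omega) (by omega)]
    omega

lemma hn_of_T {n : ℕ} {T : Finset ℤ} (hT : T ⊆ Finset.Icc (1:ℤ) n)
    (hTne : T ≠ Finset.Icc (1:ℤ) n) : 1 ≤ n := by
  by_contra h
  have hn0 : n = 0 := by omega
  subst hn0
  apply hTne
  have he : Finset.Icc (1:ℤ) (0:ℕ) = ∅ := by
    apply Finset.Icc_eq_empty
    norm_num
  rw [he] at hT ⊢
  exact Finset.subset_empty.1 hT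

lemma rfuel_reps {n : ℕ} {T : Finset ℤ} (hT : T ⊆ Finset.Icc (1:ℤ) n)
    (hTne : T ≠ Finset.Icc (1:ℤ) n) {i : ℤ} (hi : i ∈ Finset.Icc (1:ℤ) n) :
    rfuel n T (n-1) i ∈ reps n T := by
  have hn : 1 ≤ n := hn_of_T hT hTne
  by_contra hnr
  obtain ⟨u, huI, huT⟩ := Finset.exists_of_ssubset (lt_of_le_of_ne hT hTne)
  rw [Finset.mem_Icc] at huI
  have hi' := Finset.mem_Icc.1 hi
  obtain ⟨k, hk1, hk2, hke⟩ := prv_cover hn hi'.1 hi'.2 huI.1 huI.2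
  have := chainT hn (n-1) i hi hnr k hk1 (by omega)
  rw [hke] at this
  exact huT this

/-- The representative of an element. -/
def rho (n : ℕ) (T : Finset ℤ) (i : ℤ) : ℤ := rfuel n T n i

lemma rho_eq {n : ℕ} {T : Finset ℤ} (hT : T ⊆ Finset.Icc (1:ℤ) n)
    (hTne : T ≠ Finset.Icc (1:ℤ) n) {i : ℤ} (hi : i ∈ Finset.Icc (1:ℤ) n) :
    rho n T i = rfuel n T (n-1) i := by
  have hn : 1 ≤ n := hn_of_T hT hTne
  have := rfuel_stable (n-1) i (rfuel_reps hT hTne hi)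
  rw [show n - 1 + 1 = n from by omega] at this
  exact this

lemma rho_reps {n : ℕ} {T : Finset ℤ} (hT : T ⊆ Finset.Icc (1:ℤ) n)
    (hTne : T ≠ Finset.Icc (1:ℤ) n) {i : ℤ} (hi : i ∈ Finset.Icc (1:ℤ) n) :
    rho n T i ∈ reps n T := by
  rw [rho_eq hT hTne hi]
  exact rfuel_reps hT hTne hi

lemma rho_fix {n : ℕ} {T : Finset ℤ} {r : ℤ} (hr : r ∈ reps n T) : rho n T r = r :=
  rfuel_fix hr n

lemma rho_bnext {n : ℕ} {T : Finset ℤ} (hT : T ⊆ Finset.Icc (1:ℤ) n)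
    (hTne : T ≠ Finset.Icc (1:ℤ) n) {j : ℤ} (hj : j ∈ T) :
    rho n T (bnext n j) = rho n T j := by
  have hn : 1 ≤ n := hn_of_T hT hTne
  obtain ⟨m, rfl⟩ : ∃ m, n = m + 1 := ⟨n - 1, by omega⟩
  have hjI : j ∈ Finset.Icc (1:ℤ) (m+1:ℕ) := hT hj
  have e1 : rho (m+1) T (bnext (m+1) j) = rfuel (m+1) T m j := by
    show rfuel (m+1) T (m+1) (bnext (m+1) j) = _
    rw [rfuel_succ, prv_bnext hjI, if_pos hj]
  have e2 := rho_eq hT hTne hjI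
  rw [show (m+1)-1 = m from rfl] at e2
  rw [e1, ← e2]

lemma rfuel_block {n : ℕ} {T : Finset ℤ} {P : Finset (Finset ℤ)} (hn : 1 ≤ n)
    (hP : BPart (BGround n) P)
    (hfor : ∀ j ∈ T, ∃ B ∈ P, j ∈ B ∧ bnext n j ∈ B) :
    ∀ m (x : ℤ), x ∈ Finset.Icc (1:ℤ) n → ∀ B ∈ P, x ∈ B → rfuel n T m x ∈ B := by
  intro m
  induction m with
  | zero => intro x _ B _ hxB; exact hxB
  | succ m ih =>
    intro x hx B hB hxB
    rw [rfuel_succ]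
    split_ifs with h
    · obtain ⟨B', hB', hjB', hnB'⟩ := hfor _ h
      rw [bnext_prv hx] at hnB'
      have hBB : B' = B := blk_eq hP.1 hB' hB hnB' hxB
      exact ih (prv n x) (prv_mem hn hx) B hB (hBB ▸ hjB')
    · exact hxB

def sigma (n : ℕ) (T : Finset ℤ) (x : ℤ) : ℤ :=
  if 0 < x then rho n T x else -(rho n T (-x))

lemma mem_posunion {R : Finset ℤ} {x : ℤ} :
    x ∈ R ∪ R.image Neg.neg ↔ x ∈ R ∨ -x ∈ R := by
  simp only [Finset.mem_union, Finset.mem_image]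
  constructor
  · rintro (h | ⟨y, hy, rfl⟩)
    · exact Or.inl h
    · exact Or.inr (by simpa using hy)
  · rintro (h | h)
    · exact Or.inl h
    · exact Or.inr ⟨-x, h, by ring⟩

lemma signed_posunion {R : Finset ℤ} (hpos : ∀ x ∈ R, 0 < x) :
    Signed (R ∪ R.image Neg.neg) := by
  constructor
  · rw [mem_posunion]
    rintro (h | h)
    · exact absurd (hpos _ h) (by omega)
    · exact absurd (hpos _ h) (by norm_num)
  · intro x hx
    rw [mem_posunion] at hx ⊢
    rw [neg_neg]
    tauto

lemma card_posunion {R : Finset ℤ} (hpos : ∀ x ∈ R, 0 < x) :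
    (R ∪ R.image Neg.neg).card = 2 * R.card := by
  have hd : Disjoint R (R.image Neg.neg) := by
    rw [Finset.disjoint_left]
    rintro a ha hb
    obtain ⟨y, hy, rfl⟩ := Finset.mem_image.1 hb
    have := hpos _ ha
    have := hpos _ hy
    omega
  rw [Finset.card_union_of_disjoint hd, Finset.card_image_of_injective _ neg_injective]
  ring

lemma reps_pos {n : ℕ} {T : Finset ℤ} {r : ℤ} (hr : r ∈ reps n T) : 0 < r := by
  have := (mem_reps.1 hr).1
  rw [Finset.mem_Icc] at this
  omega

lemma ground_pos {n : ℕ} {x : ℤ} (hx : x ∈ BGround n) (h : 0 < x) :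
    x ∈ Finset.Icc (1:ℤ) n := by
  rw [mem_BGround] at hx
  rw [Finset.mem_Icc]
  omega

lemma ground_neg {n : ℕ} {x : ℤ} (hx : x ∈ BGround n) (h : ¬ 0 < x) :
    -x ∈ Finset.Icc (1:ℤ) n := by
  rw [mem_BGround] at hx
  rw [Finset.mem_Icc]
  omega

variable {n : ℕ} {T : Finset ℤ}

lemma sigma_mem (hT : T ⊆ Finset.Icc (1:ℤ) n) (hTne : T ≠ Finset.Icc (1:ℤ) n) {x : ℤ} (hx : x ∈ BGround n) :
    sigma n T x ∈ reps n T ∪ (reps n T).image Neg.neg := by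
  rw [mem_posunion]
  unfold sigma
  split_ifs with h
  · exact Or.inl (rho_reps hT hTne (ground_pos hx h))
  · rw [neg_neg]
    exact Or.inr (rho_reps hT hTne (ground_neg hx h))

lemma sigma_id {y : ℤ} (hy : y ∈ reps n T ∪ (reps n T).image Neg.neg) :
    sigma n T y = y := by
  rw [mem_posunion] at hy
  unfold sigma
  rcases hy with h | h
  · rw [if_pos (reps_pos h), rho_fix h]
  · have := reps_pos h
    rw [if_neg (by omega), rho_fix h]
    ring

lemma sigma_neg (hT : T ⊆ Finset.Icc (1:ℤ) n) (hTne : T ≠ Finset.Icc (1:ℤ) n) {x : ℤ} (hx : x ∈ BGround n) : sigma n T (-x) = -(sigma n T x) := by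
  have hx0 : x ≠ 0 := (mem_BGround.1 hx).1
  unfold sigma
  by_cases h : 0 < x
  · rw [if_pos h, if_neg (by omega), neg_neg]
  · rw [if_neg h, if_pos (by omega), neg_neg]

lemma reps_subset_ground : (reps n T ∪ (reps n T).image Neg.neg) ⊆ BGround n := by
  intro x hx
  rw [mem_posunion] at hx
  rw [mem_BGround]
  rcases hx with h | h <;>
    · have h1 := reps_pos h
      have h2 := (mem_reps.1 h).1
      rw [Finset.mem_Icc] at h2
      omega

lemma sigma_block (hT : T ⊆ Finset.Icc (1:ℤ) n) (hTne : T ≠ Finset.Icc (1:ℤ) n)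
    {P : Finset (Finset ℤ)} (hP : BPart (BGround n) P)
    (hfor : ∀ j ∈ T, ∃ B ∈ P, j ∈ B ∧ bnext n j ∈ B) {x : ℤ} (hx : x ∈ BGround n) {B : Finset ℤ} (hB : B ∈ P) (hxB : x ∈ B) :
    sigma n T x ∈ B := by
  have hn : 1 ≤ n := hn_of_T hT hTne
  unfold sigma
  split_ifs with h
  · exact rfuel_block hn hP hfor n x (ground_pos hx h) B hB hxB
  · have hnB : negBlock B ∈ P := hP.2.1 B hB
    have hmx : -x ∈ negBlock B := mem_negBlock.2 (by rwa [neg_neg])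
    have := rfuel_block hn hP hfor n (-x) (ground_neg hx h) _ hnB hmx
    exact mem_negBlock.1 this

lemma block_det (hT : T ⊆ Finset.Icc (1:ℤ) n) (hTne : T ≠ Finset.Icc (1:ℤ) n)
    {P : Finset (Finset ℤ)} (hP : BPart (BGround n) P)
    (hfor : ∀ j ∈ T, ∃ B ∈ P, j ∈ B ∧ bnext n j ∈ B) {B : Finset ℤ} (hB : B ∈ P) :
    B = (BGround n).filter (fun x => sigma n T x ∈ B) := by
  ext x
  rw [Finset.mem_filter]
  constructor
  · intro hxB
    exact ⟨hP.1.2.1 B hB hxB, sigma_block hT hTne hP hfor (hP.1.2.1 B hB hxB) hB hxB⟩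
  · rintro ⟨hxG, hsB⟩
    obtain ⟨C, ⟨hC, hxC⟩, _⟩ := hP.1.2.2 x hxG
    have hsC : sigma n T x ∈ C := sigma_block hT hTne hP hfor hxG hC hxC
    have hCB : C = B := blk_eq hP.1 hC hB hsC hsB
    exact hCB ▸ hxC

lemma adj_force (n : ℕ) (T : Finset ℤ) (hT : T ⊆ Finset.Icc (1:ℤ) n)
    (hTne : T ≠ Finset.Icc (1:ℤ) n) :
    ((bset (BGround n)).filter
        (fun P => ∀ j ∈ T, ∃ B ∈ P, j ∈ B ∧ bnext n j ∈ B)).card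
      = bcount (reps n T ∪ (reps n T).image Neg.neg) := by
  have hn : 1 ≤ n := hn_of_T hT hTne
  set S' : Finset ℤ := reps n T ∪ (reps n T).image Neg.neg with hS'
  have hS'G : S' ⊆ BGround n := reps_subset_ground
  have hS'sgn : Signed S' := signed_posunion (fun x hx => reps_pos hx)
  have hS'sym : ∀ y, y ∈ S' ↔ -y ∈ S' := by
    intro y
    constructor
    · exact hS'sgn.2 y
    · intro h
      have := hS'sgn.2 _ h
      rwa [neg_neg] at this
  have hnegi : ∀ B : Finset ℤ, negBlock (B ∩ S') = negBlock B ∩ S' := by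
    intro B
    ext x
    simp only [mem_negBlock, Finset.mem_inter]
    constructor
    · rintro ⟨h1, h2⟩
      exact ⟨h1, (hS'sym x).2 h2⟩
    · rintro ⟨h1, h2⟩
      exact ⟨h1, (hS'sym x).1 h2⟩
  have crc : ∀ Q, BPart S' Q → ∀ C ∈ Q,
      ((BGround n).filter (fun x => sigma n T x ∈ C)) ∩ S' = C := by
    intro Q hQ C hC
    ext y
    simp only [Finset.mem_inter, Finset.mem_filter]
    constructor
    · rintro ⟨⟨hyG, hyC⟩, hyS⟩
      rwa [sigma_id hyS] at hyC
    · intro hyC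
      have hyS : y ∈ S' := hQ.1.2.1 C hC hyC
      exact ⟨⟨hS'G hyS, by rwa [sigma_id hyS]⟩, hyS⟩
  unfold bcount
  refine Finset.card_nbij' (i := fun P => P.image (fun B => B ∩ S'))
      (j := fun Q => Q.image (fun C => (BGround n).filter (fun x => sigma n T x ∈ C)))
      ?_ ?_ ?_ ?_
  · -- forward membership
    intro P hP
    obtain ⟨hPb, hfor⟩ := Finset.mem_filter.1 hP
    have hPP := mem_bset.1 hPb
    apply mem_bset.2
    refine ⟨⟨?_, ?_, ?_⟩, ?_, ?_⟩
    · intro C hC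
      obtain ⟨B, hB, rfl⟩ := Finset.mem_image.1 hC
      obtain ⟨x, hxB⟩ := hPP.1.1 B hB
      have hxG := hPP.1.2.1 B hB hxB
      exact ⟨sigma n T x, Finset.mem_inter.2
        ⟨sigma_block hT hTne hPP hfor hxG hB hxB, sigma_mem hT hTne hxG⟩⟩
    · intro C hC
      obtain ⟨B, hB, rfl⟩ := Finset.mem_image.1 hC
      exact Finset.inter_subset_right
    · intro y hy
      have hyG : y ∈ BGround n := hS'G hy
      obtain ⟨B, ⟨hB, hyB⟩, _⟩ := hPP.1.2.2 y hyG
      refine ⟨B ∩ S', ⟨Finset.mem_image_of_mem _ hB, Finset.mem_inter.2 ⟨hyB, hy⟩⟩, ?_⟩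
      rintro C ⟨hC, hyC⟩
      obtain ⟨B', hB', rfl⟩ := Finset.mem_image.1 hC
      have hyB' : y ∈ B' := (Finset.mem_inter.1 hyC).1
      rw [blk_eq hPP.1 hB' hB hyB' hyB]
    · intro C hC
      obtain ⟨B, hB, rfl⟩ := Finset.mem_image.1 hC
      rw [hnegi]
      exact Finset.mem_image_of_mem _ (hPP.2.1 B hB)
    · intro C hC hcon
      obtain ⟨B, hB, rfl⟩ := Finset.mem_image.1 hC
      rw [hnegi] at hcon
      apply hPP.2.2 B hB
      calc negBlock B
          = (BGround n).filter (fun x => sigma n T x ∈ negBlock B) :=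
            block_det hT hTne hPP hfor (hPP.2.1 B hB)
        _ = (BGround n).filter (fun x => sigma n T x ∈ B) := by
            apply Finset.filter_congr
            intro x hxG
            have hsS : sigma n T x ∈ S' := sigma_mem hT hTne hxG
            constructor
            · intro h
              have : sigma n T x ∈ B ∩ S' := hcon ▸ Finset.mem_inter.2 ⟨h, hsS⟩
              exact (Finset.mem_inter.1 this).1
            · intro h
              have : sigma n T x ∈ negBlock B ∩ S' := by
                rw [hcon]
                exact Finset.mem_inter.2 ⟨h, hsS⟩
              exact (Finset.mem_inter.1 this).1
        _ = B := (block_det hT hTne hPP hfor hB).symm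
  · -- backward membership
    intro Q hQ
    have hQb := mem_bset.1 hQ
    refine Finset.mem_filter.2 ⟨mem_bset.2 ⟨⟨?_, ?_, ?_⟩, ?_, ?_⟩, ?_⟩
    · intro D hD
      obtain ⟨C, hC, rfl⟩ := Finset.mem_image.1 hD
      obtain ⟨y, hyC⟩ := hQb.1.1 C hC
      have hyS : y ∈ S' := hQb.1.2.1 C hC hyC
      exact ⟨y, Finset.mem_filter.2 ⟨hS'G hyS, by rwa [sigma_id hyS]⟩⟩
    · intro D hD
      obtain ⟨C, hC, rfl⟩ := Finset.mem_image.1 hD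
      exact Finset.filter_subset _ _
    · intro x hx
      have hsS : sigma n T x ∈ S' := sigma_mem hT hTne hx
      obtain ⟨C, ⟨hC, hsC⟩, hu⟩ := hQb.1.2.2 _ hsS
      refine ⟨(BGround n).filter (fun y => sigma n T y ∈ C),
        ⟨Finset.mem_image_of_mem _ hC, Finset.mem_filter.2 ⟨hx, hsC⟩⟩, ?_⟩
      rintro D ⟨hD, hxD⟩
      obtain ⟨C', hC', rfl⟩ := Finset.mem_image.1 hD
      have : sigma n T x ∈ C' := (Finset.mem_filter.1 hxD).2
      rw [hu C' ⟨hC', this⟩]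
    · intro D hD
      obtain ⟨C, hC, rfl⟩ := Finset.mem_image.1 hD
      have key : negBlock ((BGround n).filter (fun x => sigma n T x ∈ C))
          = (BGround n).filter (fun x => sigma n T x ∈ negBlock C) := by
        ext x
        simp only [mem_negBlock, Finset.mem_filter]
        constructor
        · rintro ⟨h1, h2⟩
          have hxG : x ∈ BGround n := by
            have := (signed_BGround n).2 _ h1
            rwa [neg_neg] at this
          rw [sigma_neg hT hTne hxG] at h2
          exact ⟨hxG, h2⟩
        · rintro ⟨h1, h2⟩
          refine ⟨(signed_BGround n).2 _ h1, ?_⟩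
          rwa [sigma_neg hT hTne h1]
      rw [key]
      exact Finset.mem_image_of_mem _ (hQb.2.1 C hC)
    · intro D hD hcon
      obtain ⟨C, hC, rfl⟩ := Finset.mem_image.1 hD
      have key : negBlock ((BGround n).filter (fun x => sigma n T x ∈ C))
          = (BGround n).filter (fun x => sigma n T x ∈ negBlock C) := by
        ext x
        simp only [mem_negBlock, Finset.mem_filter]
        constructor
        · rintro ⟨h1, h2⟩
          have hxG : x ∈ BGround n := by
            have := (signed_BGround n).2 _ h1
            rwa [neg_neg] at this
          rw [sigma_neg hT hTne hxG] at h2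
          exact ⟨hxG, h2⟩
        · rintro ⟨h1, h2⟩
          refine ⟨(signed_BGround n).2 _ h1, ?_⟩
          rwa [sigma_neg hT hTne h1]
      rw [key] at hcon
      apply hQb.2.2 C hC
      calc negBlock C
          = ((BGround n).filter (fun x => sigma n T x ∈ negBlock C)) ∩ S' :=
            (crc Q hQb _ (hQb.2.1 C hC)).symm
        _ = ((BGround n).filter (fun x => sigma n T x ∈ C)) ∩ S' := by rw [hcon]
        _ = C := crc Q hQb C hC
    · intro j hj
      have hjI : j ∈ Finset.Icc (1:ℤ) n := hT hj
      have hjG : j ∈ BGround n := Icc_subset_BGround hjI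
      have hbG : bnext n j ∈ BGround n := Icc_subset_BGround (bnext_mem hn hjI)
      have hsS : sigma n T j ∈ S' := sigma_mem hT hTne hjG
      obtain ⟨C, ⟨hC, hsC⟩, _⟩ := hQb.1.2.2 _ hsS
      refine ⟨(BGround n).filter (fun x => sigma n T x ∈ C),
        Finset.mem_image_of_mem _ hC,
        Finset.mem_filter.2 ⟨hjG, hsC⟩, Finset.mem_filter.2 ⟨hbG, ?_⟩⟩
      have hj1 : (1:ℤ) ≤ j := (Finset.mem_Icc.1 hjI).1
      have e1 : sigma n T (bnext n j) = rho n T (bnext n j) := by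
        unfold sigma
        rw [if_pos]
        have := Finset.mem_Icc.1 (bnext_mem hn hjI)
        omega
      have e2 : sigma n T j = rho n T j := by
        unfold sigma
        rw [if_pos (by omega)]
      rw [e1, rho_bnext hT hTne hj, ← e2]
      exact hsC
  · -- left inverse
    intro P hP
    obtain ⟨hPb, hfor⟩ := Finset.mem_filter.1 hP
    have hPP := mem_bset.1 hPb
    dsimp only
    rw [Finset.image_image]
    have hcong : ∀ B ∈ P, ((BGround n).filter (fun x => sigma n T x ∈ B ∩ S')) = B := by
      intro B hB
      have h1 : ((BGround n).filter (fun x => sigma n T x ∈ B ∩ S'))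
          = (BGround n).filter (fun x => sigma n T x ∈ B) := by
        apply Finset.filter_congr
        intro x hxG
        have hsS : sigma n T x ∈ S' := sigma_mem hT hTne hxG
        simp only [Finset.mem_inter]
        constructor
        · exact fun h => h.1
        · exact fun h => ⟨h, hsS⟩
      rw [h1, ← block_det hT hTne hPP hfor hB]
    calc P.image ((fun C => (BGround n).filter (fun x => sigma n T x ∈ C)) ∘ (fun B => B ∩ S'))
        = P.image id := Finset.image_congr (fun B hB => hcong B hB)
      _ = P := Finset.image_id
  · -- right inverse
    intro Q hQ
    have hQb := mem_bset.1 hQ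
    dsimp only
    rw [Finset.image_image]
    calc Q.image ((fun B => B ∩ S') ∘ (fun C => (BGround n).filter (fun x => sigma n T x ∈ C)))
        = Q.image id := Finset.image_congr (fun C hC => crc Q hQb C hC)
      _ = Q := Finset.image_id

lemma reps_card {n : ℕ} {T : Finset ℤ} (hT : T ⊆ Finset.Icc (1:ℤ) n) (hn : 1 ≤ n) :
    (reps n T).card = n - T.card := by
  have h1 : ((Finset.Icc (1:ℤ) n).filter (fun i => prv n i ∈ T)).card = T.card := by
    apply Finset.card_bij (fun i _ => prv n i)
    · intro a ha
      exact (Finset.mem_filter.1 ha).2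
    · intro a ha b hb hab
      have haI := (Finset.mem_filter.1 ha).1
      have hbI := (Finset.mem_filter.1 hb).1
      rw [← bnext_prv haI, ← bnext_prv hbI, hab]
    · intro t ht
      have htI : t ∈ Finset.Icc (1:ℤ) n := hT ht
      refine ⟨bnext n t, Finset.mem_filter.2 ⟨bnext_mem hn htI, ?_⟩, prv_bnext htI⟩
      rwa [prv_bnext htI]
  have h2 := Finset.card_filter_add_card_filter_not
    (s := Finset.Icc (1:ℤ) n) (p := fun i => prv n i ∈ T)
  have h3 : (Finset.Icc (1:ℤ) n).card = n := by
    rw [Int.card_Icc]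
    omega
  have h4 : (reps n T).card = ((Finset.Icc (1:ℤ) n).filter (fun i => ¬ prv n i ∈ T)).card := rfl
  omega

lemma bcount_empty : bcount (∅ : Finset ℤ) = 1 := by
  unfold bcount
  have h : bset (∅ : Finset ℤ) = {∅} := by
    ext P
    rw [mem_bset, Finset.mem_singleton]
    constructor
    · intro hP
      apply Finset.eq_empty_of_forall_notMem
      intro B hB
      obtain ⟨x, hx⟩ := hP.1.1 B hB
      exact absurd (hP.1.2.1 B hB hx) (Finset.notMem_empty x)
    · rintro rfl
      exact ⟨⟨fun B h => absurd h (Finset.notMem_empty _),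
        fun B h => absurd h (Finset.notMem_empty _),
        fun x hx => absurd hx (Finset.notMem_empty _)⟩,
        fun B h => absurd h (Finset.notMem_empty _),
        fun B h => absurd h (Finset.notMem_empty _)⟩
  rw [h, Finset.card_singleton]

lemma ground_sdiff_full (n : ℕ) :
    BGround n \ (Finset.Icc (1:ℤ) n ∪ (Finset.Icc (1:ℤ) n).image Neg.neg) = ∅ := by
  apply Finset.eq_empty_of_forall_notMem
  intro x hx
  simp only [Finset.mem_sdiff, mem_posunion, mem_BGround, Finset.mem_Icc] at hx
  push_neg at hx
  omega

lemma adj_full (n : ℕ) (hn : 1 ≤ n) :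
    ((bset (BGround n)).filter
      (fun P => ∀ j ∈ Finset.Icc (1:ℤ) n, ∃ B ∈ P, j ∈ B ∧ bnext n j ∈ B)).card = 1 := by
  set I : Finset ℤ := Finset.Icc (1:ℤ) n with hI
  have hIneg : negBlock I = I.image Neg.neg := rfl
  have h1I : (1:ℤ) ∈ I := by rw [hI, Finset.mem_Icc]; omega
  have hInotneg : I ≠ I.image Neg.neg := by
    intro hc
    have h2 : (1:ℤ) ∈ I.image Neg.neg := hc ▸ h1I
    obtain ⟨y, hy, hy1⟩ := Finset.mem_image.1 h2
    rw [hI, Finset.mem_Icc] at hy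
    omega
  have hmemP0 : ∀ P, (P ∈ (bset (BGround n)).filter
      (fun P => ∀ j ∈ Finset.Icc (1:ℤ) n, ∃ B ∈ P, j ∈ B ∧ bnext n j ∈ B))
        ↔ P = ({I, I.image Neg.neg} : Finset (Finset ℤ)) := by
    intro P
    rw [Finset.mem_filter, mem_bset]
    constructor
    · rintro ⟨hPP, hfor⟩
      have h1G : (1:ℤ) ∈ BGround n := by rw [mem_BGround]; omega
      obtain ⟨B₁, ⟨hB₁, h1B⟩, _⟩ := hPP.1.2.2 1 h1G
      have hIcc : ∀ j : ℤ, 1 ≤ j → (j ≤ (n:ℤ) → j ∈ B₁) := by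
        intro j hj
        refine Int.le_induction (motive := fun j _ => j ≤ (n:ℤ) → j ∈ B₁) (fun _ => h1B) ?_ j hj
        intro k hk ih hkn
        obtain ⟨B', hB', hjB', hnB'⟩ := hfor k (by rw [Finset.mem_Icc]; omega)
        rw [show bnext n k = k + 1 from if_neg (by omega)] at hnB'
        have hkB₁ : k ∈ B₁ := ih (by omega)
        have hBB : B' = B₁ := blk_eq hPP.1 hB' hB₁ hjB' hkB₁
        exact hBB ▸ hnB'
      have hpos : ∀ x ∈ B₁, 0 < x := by
        intro x hxB
        by_contra h
        have hxG := hPP.1.2.1 _ hB₁ hxB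
        have hmx := ground_neg hxG h
        rw [Finset.mem_Icc] at hmx
        have hmxB : -x ∈ B₁ := hIcc (-x) (by omega) (by omega)
        have hself : negBlock B₁ = B₁ :=
          blk_eq hPP.1 (hPP.2.1 _ hB₁) hB₁ (mem_negBlock.2 (by rwa [neg_neg])) hmxB
        exact hPP.2.2 _ hB₁ hself
      have hB₁I : B₁ = I := by
        apply Finset.Subset.antisymm
        · intro x hx
          rw [hI]
          exact ground_pos (hPP.1.2.1 _ hB₁ hx) (hpos x hx)
        · intro j hj
          rw [hI, Finset.mem_Icc] at hj
          exact hIcc j hj.1 hj.2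
      ext B
      rw [Finset.mem_insert, Finset.mem_singleton]
      constructor
      · intro hB
        obtain ⟨x, hxB⟩ := hPP.1.1 B hB
        have hxG := hPP.1.2.1 B hB hxB
        by_cases h : 0 < x
        · left
          have hx : x ∈ B₁ := by rw [hB₁I, hI]; exact ground_pos hxG h
          rw [blk_eq hPP.1 hB hB₁ hxB hx, hB₁I]
        · right
          have hmxB₁ : -x ∈ B₁ := by rw [hB₁I, hI]; exact ground_neg hxG h
          have hmxNB : -x ∈ negBlock B := mem_negBlock.2 (by rwa [neg_neg])
          have he : negBlock B = B₁ := blk_eq hPP.1 (hPP.2.1 B hB) hB₁ hmxNB hmxB₁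
          have he2 : negBlock (negBlock B) = negBlock B₁ := by rw [he]
          rw [negBlock_negBlock] at he2
          rw [he2, hB₁I]
          exact hIneg
      · intro hB
        rcases hB with rfl | rfl
        · rw [← hB₁I]; exact hB₁
        · have hnb := hPP.2.1 _ hB₁
          rw [hB₁I, hIneg] at hnb
          exact hnb
    · rintro rfl
      have hmem : ∀ B : Finset ℤ, B ∈ ({I, I.image Neg.neg} : Finset (Finset ℤ))
          ↔ B = I ∨ B = I.image Neg.neg := by
        intro B
        rw [Finset.mem_insert, Finset.mem_singleton]
      have hIsub : I ⊆ BGround n := by rw [hI]; exact Icc_subset_BGround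
      refine ⟨⟨⟨?_, ?_, ?_⟩, ?_, ?_⟩, ?_⟩
      · intro B hB
        rcases (hmem B).1 hB with rfl | rfl
        · exact ⟨1, h1I⟩
        · exact ⟨-1, Finset.mem_image.2 ⟨1, h1I, rfl⟩⟩
      · intro B hB
        rcases (hmem B).1 hB with rfl | rfl
        · exact hIsub
        · intro x hx
          obtain ⟨y, hy, rfl⟩ := Finset.mem_image.1 hx
          rw [hI, Finset.mem_Icc] at hy
          rw [mem_BGround]
          omega
      · intro x hx
        by_cases h : 0 < x
        · refine ⟨I, ⟨(hmem I).2 (Or.inl rfl), by rw [hI]; exact ground_pos hx h⟩, ?_⟩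
          rintro C ⟨hC, hxC⟩
          rcases (hmem C).1 hC with rfl | rfl
          · rfl
          · obtain ⟨y, hy, rfl⟩ := Finset.mem_image.1 hxC
            rw [hI, Finset.mem_Icc] at hy
            omega
        · refine ⟨I.image Neg.neg, ⟨(hmem _).2 (Or.inr rfl), ?_⟩, ?_⟩
          · refine Finset.mem_image.2 ⟨-x, by rw [hI]; exact ground_neg hx h, by ring⟩
          · rintro C ⟨hC, hxC⟩
            rcases (hmem C).1 hC with rfl | rfl
            · rw [hI, Finset.mem_Icc] at hxC
              omega
            · rfl
      · intro B hB
        rcases (hmem B).1 hB with rfl | rfl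
        · rw [hIneg]
          exact (hmem _).2 (Or.inr rfl)
        · rw [← hIneg, negBlock_negBlock]
          exact (hmem _).2 (Or.inl rfl)
      · intro B hB
        rcases (hmem B).1 hB with rfl | rfl
        · rw [hIneg]
          exact fun h => hInotneg h.symm
        · rw [← hIneg, negBlock_negBlock]
          exact fun h => hInotneg h
      · intro j hj
        exact ⟨I, (hmem I).2 (Or.inl rfl), hj, bnext_mem hn hj⟩
  have hset : (bset (BGround n)).filter
      (fun P => ∀ j ∈ Finset.Icc (1:ℤ) n, ∃ B ∈ P, j ∈ B ∧ bnext n j ∈ B)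
        = {({I, I.image Neg.neg} : Finset (Finset ℤ))} := by
    ext P
    rw [hmemP0, Finset.mem_singleton]
  rw [hset, Finset.card_singleton]

lemma count_zero_eq_sum (n : ℕ) (F : Finset (Finset (Finset ℤ)))
    (g : Finset (Finset ℤ) → Finset ℤ)
    (hg : ∀ P ∈ F, g P ⊆ Finset.Icc (1:ℤ) n) :
    ((F.filter (fun P => g P = ∅)).card : ℤ)
      = ∑ T ∈ (Finset.Icc (1:ℤ) n).powerset,
          (-1:ℤ)^T.card * ((F.filter (fun P => T ⊆ g P)).card : ℤ) := by
  have inner : ∀ P ∈ F, (if g P = ∅ then (1:ℤ) else 0)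
      = ∑ T ∈ (Finset.Icc (1:ℤ) n).powerset,
          (if T ⊆ g P then (-1:ℤ)^T.card else 0) := by
    intro P hP
    rw [← Finset.sum_powerset_neg_one_pow_card]
    have h2 : ∑ T ∈ (g P).powerset, (-1:ℤ)^T.card
        = ∑ T ∈ (g P).powerset, (if T ⊆ g P then (-1:ℤ)^T.card else 0) :=
      Finset.sum_congr rfl (fun T hT => (if_pos (Finset.mem_powerset.1 hT)).symm)
    rw [h2]
    apply Finset.sum_subset (Finset.powerset_mono.2 (hg P hP))
    intro T hT1 hT2
    rw [if_neg (fun hc => hT2 (Finset.mem_powerset.2 hc))]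
  rw [Finset.card_filter]
  push_cast
  rw [Finset.sum_congr rfl inner, Finset.sum_comm]
  refine Finset.sum_congr rfl fun T hT => ?_
  rw [← Finset.sum_filter, Finset.sum_const, nsmul_eq_mul, mul_comm]

lemma natcard_bridge (n : ℕ) (q : Finset (Finset ℤ) → Prop) [DecidablePred q] :
    Nat.card {P : Finset (Finset ℤ) // IsBPartNZ n P ∧ q P}
      = ((bset (BGround n)).filter q).card := by
  have hset : {P : Finset (Finset ℤ) | IsBPartNZ n P ∧ q P}
      = ↑((bset (BGround n)).filter q) := by
    ext P
    simp only [Set.mem_setOf_eq, Finset.coe_filter, mem_bset]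
    exact and_congr_left (fun _ => isB_iff)
  have h1 : Nat.card {P : Finset (Finset ℤ) // IsBPartNZ n P ∧ q P}
      = ({P : Finset (Finset ℤ) | IsBPartNZ n P ∧ q P} : Set _).ncard :=
    Nat.card_coe_set_eq _
  rw [h1, hset, Set.ncard_coe_finset]

lemma ground_card (n : ℕ) : (BGround n).card = 2*n := by
  unfold BGround
  rw [Finset.card_erase_of_mem (by rw [Finset.mem_Icc]; omega), Int.card_Icc]
  omega

lemma perT (n : ℕ) (T : Finset ℤ) (hT : T ⊆ Finset.Icc (1:ℤ) n) :
    ((bset (BGround n)).filter (fun P => ∀ i ∈ T, ({i}:Finset ℤ) ∈ P)).card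
      = ((bset (BGround n)).filter
          (fun P => ∀ j ∈ T, ∃ B ∈ P, j ∈ B ∧ bnext n j ∈ B)).card := by
  have hTpos : ∀ x ∈ T, 0 < x := by
    intro x hx
    have := Finset.mem_Icc.1 (hT hx)
    omega
  by_cases hTe : T = ∅
  · subst hTe
    rw [Finset.filter_true_of_mem (fun P _ => fun i hi => absurd hi (Finset.notMem_empty _)),
        Finset.filter_true_of_mem (fun P _ => fun i hi => absurd hi (Finset.notMem_empty _))]
  · by_cases hTne : T = Finset.Icc (1:ℤ) n
    · subst hTne
      have hn : 1 ≤ n := by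
        obtain ⟨t, ht⟩ := Finset.nonempty_iff_ne_empty.2 hTe
        have := Finset.mem_Icc.1 ht
        omega
      rw [adj_full n hn, sing_force n _ (Finset.Subset.refl _), ground_sdiff_full,
        bcount_empty]
    · rw [sing_force n T hT, adj_force n T hT hTne]
      have hn : 1 ≤ n := hn_of_T hT hTne
      apply bcount_congr
      · exact signed_sdiff (signed_BGround n) (signed_posunion hTpos).2
      · exact signed_posunion (fun x hx => reps_pos hx)
      · have hTTG : (T ∪ T.image Neg.neg) ⊆ BGround n := by
          intro x hx
          rw [mem_posunion] at hx
          rw [mem_BGround]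
          rcases hx with h | h
          · have := Finset.mem_Icc.1 (hT h)
            omega
          · have := Finset.mem_Icc.1 (hT h)
            omega
        rw [Finset.card_sdiff_of_subset hTTG, ground_card, card_posunion hTpos,
          card_posunion (fun x hx => reps_pos hx), reps_card hT hn]
        have hTle : T.card ≤ n := by
          have h1 := Finset.card_le_card hT
          have h2 : (Finset.Icc (1:ℤ) n).card = n := by
            rw [Int.card_Icc]
            omega
          omega
        omega

end BP

theorem typeB_singletonFree_eq_adjacencyFree (n : ℕ) :
    Nat.card {P : Finset (Finset ℤ) // IsBPartNZ n P ∧ spairs n P = 0}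
      = Nat.card {P : Finset (Finset ℤ) // IsBPartNZ n P ∧ apairs n P = 0} := by
  rw [BP.natcard_bridge n (fun P => spairs n P = 0),
    BP.natcard_bridge n (fun P => apairs n P = 0)]
  have e1 : (BP.bset (BGround n)).filter (fun P => spairs n P = 0)
      = (BP.bset (BGround n)).filter
          (fun P => ((Finset.Icc (1:ℤ) n).filter (fun i => ({i}:Finset ℤ) ∈ P)) = ∅) := by
    apply Finset.filter_congr
    intro P _
    simp only [spairs, Finset.card_eq_zero]
  have e2 : (BP.bset (BGround n)).filter (fun P => apairs n P = 0)
      = (BP.bset (BGround n)).filter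
          (fun P => ((Finset.Icc (1:ℤ) n).filter
            (fun j => ∃ B ∈ P, j ∈ B ∧ bnext n j ∈ B)) = ∅) := by
    apply Finset.filter_congr
    intro P _
    simp only [apairs, Finset.card_eq_zero]
  rw [e1, e2]
  have key : ((((BP.bset (BGround n)).filter
      (fun P => ((Finset.Icc (1:ℤ) n).filter (fun i => ({i}:Finset ℤ) ∈ P)) = ∅)).card : ℤ))
      = (((BP.bset (BGround n)).filter
          (fun P => ((Finset.Icc (1:ℤ) n).filter
            (fun j => ∃ B ∈ P, j ∈ B ∧ bnext n j ∈ B)) = ∅)).card : ℤ) := by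
    rw [BP.count_zero_eq_sum n _ _ (fun P _ => Finset.filter_subset _ _),
      BP.count_zero_eq_sum n _ _ (fun P _ => Finset.filter_subset _ _)]
    refine Finset.sum_congr rfl fun T hT => ?_
    have hTsub := Finset.mem_powerset.1 hT
    have c1 : (BP.bset (BGround n)).filter
        (fun P => T ⊆ (Finset.Icc (1:ℤ) n).filter (fun i => ({i}:Finset ℤ) ∈ P))
        = (BP.bset (BGround n)).filter (fun P => ∀ i ∈ T, ({i}:Finset ℤ) ∈ P) := by
      apply Finset.filter_congr
      intro P _
      constructor
      · intro h i hi
        exact (Finset.mem_filter.1 (h hi)).2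
      · intro h i hi
        exact Finset.mem_filter.2 ⟨hTsub hi, h i hi⟩
    have c2 : (BP.bset (BGround n)).filter
        (fun P => T ⊆ (Finset.Icc (1:ℤ) n).filter
          (fun j => ∃ B ∈ P, j ∈ B ∧ bnext n j ∈ B))
        = (BP.bset (BGround n)).filter
            (fun P => ∀ j ∈ T, ∃ B ∈ P, j ∈ B ∧ bnext n j ∈ B) := by
      apply Finset.filter_congr
      intro P _
      constructor
      · intro h j hj
        exact (Finset.mem_filter.1 (h hj)).2
      · intro h j hj
        exact Finset.mem_filter.2 ⟨hTsub hj, h j hj⟩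
    rw [c1, c2, BP.perT n T hTsub]
  exact_mod_cast key
end
end
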